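/- arXiv:2101.05676 — 7 statements merged into one kernel-verified Lean document; each statement's English description precedes it below -/
import Mathlib

section
/- If (a_1, ..., a_n) with n ≥ 4 is the quiddity sequence of a closed integral frieze pattern of order n (i.e., a sequence of positive integers generating, via the unimodular rule, a frieze of positive integers that closes with a row of 1s after n-3 nontrivial rows), then at least two of the entries a_i are equal to 1. -/
/-!
Along a row `j ↦ a i j` of the frieze, the diamond rule yields the recurrence
`a i (j + 1) + a i (j - 1) = q (j - 1) * a i j`. If the quiddity were `≥ 2` on `n - 1`
consecutive indices starting at `i`, this row would be convex and, starting from `0, 1`, strictly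
increasing up to `j = i + n`; yet it ends with `1, 0`. So every window of `n - 1` consecutive
indices contains a `1`, and two disjoint such windows give two distinct `1`s modulo `n`.
-/

/-- A closed integral frieze pattern of order `n`, encoded as a function on pairs of
integer indices, supported on the band `i ≤ j ≤ i + n`, with bounding rows of 0s and 1s,
positive integer entries in the interior, and the unimodular diamond rule. -/
def IsClosedFrieze (n : ℕ) (a : ℤ → ℤ → ℤ) : Prop :=
  (∀ i : ℤ, a i i = 0) ∧
  (∀ i : ℤ, a i (i + 1) = 1) ∧
  (∀ i : ℤ, a i (i + n - 1) = 1) ∧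
  (∀ i : ℤ, a i (i + n) = 0) ∧
  (∀ i j : ℤ, i + 2 ≤ j → j ≤ i + n - 2 → 0 < a i j) ∧
  (∀ i j : ℤ, i + 1 ≤ j → j ≤ i + n - 1 →
    a i j * a (i + 1) (j + 1) - a i (j + 1) * a (i + 1) j = 1) ∧
  (∀ i j : ℤ, j < i → a i j = 0) ∧
  (∀ i j : ℤ, i + n < j → a i j = 0)
/-- `q : ZMod n → ℤ` is the quiddity sequence of a closed integral frieze of order `n`. -/
def IsQuiddity (n : ℕ) (q : ZMod n → ℤ) : Prop :=
  ∃ a : ℤ → ℤ → ℤ, IsClosedFrieze n a ∧ ∀ i : ℤ, a i (i + 2) = q (i : ZMod n)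

theorem lt_succ_of_add_eq_mul_of_two_le {m c : ℕ → ℤ} {N : ℕ} (h₀ : 0 ≤ m 0)
    (h₀₁ : m 0 < m 1) (hrec : ∀ t, t + 2 ≤ N → m (t + 2) + m t = c t * m (t + 1))
    (hc : ∀ t, t + 2 ≤ N → 2 ≤ c t) : ∀ t, t + 1 ≤ N → m t < m (t + 1) := by
  suffices h : ∀ t, t + 1 ≤ N → 0 ≤ m t ∧ m t < m (t + 1) from fun t ht => (h t ht).2
  intro t
  induction t with
  | zero => exact fun _ => ⟨h₀, h₀₁⟩
  | succ t ih =>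
    intro ht
    obtain ⟨hnonneg, hlt⟩ := ih (by omega)
    -- `m (t + 2) - m (t + 1) = (c t - 2) * m (t + 1) + (m (t + 1) - m t)`
    have hconvex : 0 ≤ (c t - 2) * m (t + 1) := mul_nonneg (by linarith [hc t ht]) (by omega)
    exact ⟨by omega, by linarith [hrec t ht]⟩

namespace IsClosedFrieze

variable {n : ℕ} {a : ℤ → ℤ → ℤ}

theorem pos (h : IsClosedFrieze n a) {i j : ℤ} (hij : i + 1 ≤ j) (hjn : j ≤ i + n - 1) :
    0 < a i j := by
  obtain ⟨-, h₁, hn₁, -, hpos, -⟩ := h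
  rcases eq_or_ne j (i + 1) with rfl | hj₁
  · simp [h₁]
  rcases eq_or_ne j (i + n - 1) with rfl | hjn₁
  · simp [hn₁]
  exact hpos i j (by omega) (by omega)

/-- The row recurrence, written at `j = i + k + 1`. -/
theorem recurrence (h : IsClosedFrieze n a) (k : ℕ) (i : ℤ) (hk : k + 2 ≤ n) :
    a i (i + k + 2) + a i (i + k) = a (i + k) (i + k + 2) * a i (i + k + 1) := by
  obtain ⟨h₀, h₁, -, -, -, hdiamond, -⟩ := id h
  induction k generalizing i with
  | zero => simp [h₀ i, h₁ i]
  | succ k ih =>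
    push_cast
    have below := ih (i + 1) (by omega)
    have diamond₁ := hdiamond i (i + k + 2) (by omega) (by omega)
    have diamond₂ := hdiamond i (i + k + 1) (by omega) (by omega)
    have hpos : 0 < a (i + 1) (i + k + 2) := h.pos (by omega) (by omega)
    refine mul_right_cancel₀ hpos.ne' ?_
    ring_nf at below diamond₁ diamond₂ ⊢
    linear_combination diamond₂ - diamond₁ + a i (2 + i + k) * below

theorem exists_quiddity_eq_one (h : IsClosedFrieze n a) (hn : 3 ≤ n) (i : ℤ) :
    ∃ m : ℤ, i ≤ m ∧ m ≤ i + n - 2 ∧ a m (m + 2) = 1 := by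
  obtain ⟨h₀, h₁, hlast, hend, -⟩ := id h
  by_contra! hne
  have increasing := lt_succ_of_add_eq_mul_of_two_le (m := fun t => a i (i + t))
    (c := fun t => a (i + t) (i + t + 2)) (N := n) (by simp [h₀ i]) (by simp [h₀ i, h₁ i])
    (fun t ht => by simpa [add_assoc] using h.recurrence t i ht)
    (fun t ht => by
      have := h.pos (i := i + t) (j := i + t + 2) (by omega) (by omega)
      have := hne (i + t) (by omega) (by omega)
      omega)
    (n - 1) (by omega)
  rw [show i + ((n - 1 : ℕ) : ℤ) = i + n - 1 by omega, Nat.sub_add_cancel (by omega), hlast,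
    hend] at increasing
  omega

end IsClosedFrieze

/-- Any quiddity sequence of a closed integral frieze of order `n ≥ 4` contains at least
two entries equal to 1. -/
theorem quiddity_has_two_ones (n : ℕ) (hn : 4 ≤ n) (q : ZMod n → ℤ)
    (hq : IsQuiddity n q) :
    ∃ i j : ZMod n, i ≠ j ∧ q i = 1 ∧ q j = 1 := by
  obtain ⟨a, hf, hquid⟩ := hq
  obtain ⟨m₁, hm₁, hm₁', hone₁⟩ := hf.exists_quiddity_eq_one (by omega) 0
  obtain ⟨m₂, hm₂, hm₂', hone₂⟩ := hf.exists_quiddity_eq_one (by omega) (m₁ + 1)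
  refine ⟨m₁, m₂, fun heq => ?_, hquid m₁ ▸ hone₁, hquid m₂ ▸ hone₂⟩
  have hdvd : (n : ℤ) ∣ m₂ - m₁ := ((ZMod.intCast_eq_intCast_iff m₁ m₂ n).mp heq).dvd
  have := Int.le_of_dvd (by omega) hdvd
  omega
end

section
/- If (a_1, ..., a_n) with n ≥ 4 is the quiddity sequence of a closed integral frieze pattern of order n, then no two cyclically adjacent entries a_i, a_{i+1} (indices mod n) are both equal to 1. -/
/-! Two adjacent quiddity entries `1, 1` at positions `i, i + 1` make the diamond with top
`a i (i + 2)` read `1 * 1 - a i (i + 3) * 1 = 1`, forcing `a i (i + 3) = 0`. For `n ≥ 4` this entry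
lies in the interior of the frieze (or on its row of 1s when `n = 4`), so it is positive. -/

namespace IsClosedFrieze

variable {n : ℕ} {a : ℤ → ℤ → ℤ}

theorem entry_three_eq_zero (ha : IsClosedFrieze n a) (hn : 3 ≤ n) {i : ℤ}
    (h₁ : a i (i + 2) = 1) (h₂ : a (i + 1) (i + 3) = 1) : a i (i + 3) = 0 := by
  obtain ⟨-, hone, -, -, -, hdia, -, -⟩ := ha
  have hdiamond := hdia i (i + 2) (by omega) (by omega)
  rw [h₁, show i + 2 + 1 = i + 3 by ring, h₂, show i + 2 = i + 1 + 1 by ring, hone] at hdiamond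
  linarith

theorem entry_three_pos (ha : IsClosedFrieze n a) (hn : 4 ≤ n) (i : ℤ) : 0 < a i (i + 3) := by
  obtain ⟨-, -, hlast, -, hpos, -, -, -⟩ := ha
  rcases hn.eq_or_lt with rfl | hn
  · have h := hlast i
    rw [show i + ((4 : ℕ) : ℤ) - 1 = i + 3 by push_cast; ring] at h
    exact h ▸ one_pos
  · exact hpos i (i + 3) (by omega) (by omega)

end IsClosedFrieze

/-- In a quiddity sequence of a closed integral frieze of order `n ≥ 4`, no two cyclically
adjacent entries are both equal to 1. -/
theorem quiddity_no_adjacent_ones (n : ℕ) (hn : 4 ≤ n) (q : ZMod n → ℤ)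
    (hq : IsQuiddity n q) :
    ∀ i : ZMod n, ¬(q i = 1 ∧ q (i + 1) = 1) := by
  obtain ⟨a, ha, hqa⟩ := hq
  rintro i ⟨hi, hi₁⟩
  obtain ⟨k, rfl⟩ := ZMod.intCast_surjective i
  have h₁ : a k (k + 2) = 1 := (hqa k).trans hi
  have h₂ : a (k + 1) (k + 3) = 1 := by
    rw [show k + 3 = k + 1 + 2 by ring, hqa, Int.cast_add, Int.cast_one, hi₁]
  exact (ha.entry_three_pos hn k).ne' (ha.entry_three_eq_zero (by omega) h₁ h₂)
end

section
/- Let T be a triangulation of a convex n-gon (n ≥ 3) with vertices labeled 1,...,n, and let a_i be the number of triangles of T incident with vertex i. Then (a_1, ..., a_n) is the quiddity sequence of a closed integral frieze pattern of order n. -/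
attribute [local instance] Classical.propDecidable

/-- A triangulation of a convex `n`-gon with vertices labelled by `ZMod n` (in cyclic order):
a maximal collection of pairwise non-crossing diagonals, i.e. `n - 3` of them. -/
structure PolygonTriangulation (n : ℕ) [NeZero n] where
  diags : Finset (ZMod n × ZMod n)
  lt_of_mem : ∀ d ∈ diags, d.1.val < d.2.val
  not_boundary : ∀ d ∈ diags, d.1.val + 1 < d.2.val ∧ ¬(d.1.val = 0 ∧ d.2.val = n - 1)
  noncrossing : ∀ d ∈ diags, ∀ e ∈ diags,
    ¬(d.1.val < e.1.val ∧ e.1.val < d.2.val ∧ d.2.val < e.2.val)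
  card_diags : diags.card = n - 3

/-- `i` and `j` are joined by an edge of the triangulation: a diagonal or a boundary edge. -/
def IsTriEdge {n : ℕ} [NeZero n] (T : PolygonTriangulation n) (i j : ZMod n) : Prop :=
  (i, j) ∈ T.diags ∨ (j, i) ∈ T.diags ∨ j = i + 1 ∨ i = j + 1

/-- The triangles of a triangulation, as 3-element vertex sets all of whose sides are edges. -/
noncomputable def triangles {n : ℕ} [NeZero n] (T : PolygonTriangulation n) :
    Finset (Finset (ZMod n)) :=
  Finset.univ.filter (fun s => s.card = 3 ∧ ∀ i ∈ s, ∀ j ∈ s, i ≠ j → IsTriEdge T i j)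

/-- The number of triangles of the triangulation incident with vertex `v`. -/
noncomputable def triCount {n : ℕ} [NeZero n] (T : PolygonTriangulation n) (v : ZMod n) : ℕ :=
  ((triangles T).filter (fun s => v ∈ s)).card

open Matrix Function

def conwayMat (x : ℤ) : Matrix (Fin 2) (Fin 2) ℤ := !![x, -1; 1, 0]

def matProd (l : List ℤ) : Matrix (Fin 2) (Fin 2) ℤ := (l.map conwayMat).prod

def continuant (l : List ℤ) : ℤ := matProd l 0 0

@[simp] lemma matProd_nil : matProd [] = 1 := rfl

@[simp] lemma matProd_cons (x : ℤ) (l : List ℤ) :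
    matProd (x :: l) = conwayMat x * matProd l := rfl

@[simp] lemma matProd_append (l l' : List ℤ) : matProd (l ++ l') = matProd l * matProd l' := by
  simp [matProd]

lemma det_matProd (l : List ℤ) : (matProd l).det = 1 := by
  induction l with
  | nil => simp
  | cons x l ih => rw [matProd_cons, det_mul, ih]; simp [conwayMat, det_fin_two_of]

lemma matProd_cons_one_zero (x : ℤ) (l : List ℤ) : matProd (x :: l) 1 0 = continuant l := by
  rw [matProd_cons, mul_apply]; simp [continuant, conwayMat, Fin.sum_univ_two]

lemma matProd_concat_zero_one (l : List ℤ) (y : ℤ) :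
    matProd (l ++ [y]) 0 1 = -continuant l := by
  rw [matProd_append, mul_apply]; simp [continuant, conwayMat, Fin.sum_univ_two]

lemma matProd_cons_concat_one_one (x : ℤ) (l : List ℤ) (y : ℤ) :
    matProd (x :: (l ++ [y])) 1 1 = -continuant l := by
  rw [matProd_cons, mul_apply, ← matProd_concat_zero_one l y]
  simp [conwayMat, Fin.sum_univ_two]

lemma continuant_cons_mul_sub_eq_one (x y : ℤ) (l : List ℤ) :
    continuant (x :: l) * continuant (l ++ [y]) - continuant (x :: (l ++ [y])) * continuant l
      = 1 := by
  have h := det_matProd (x :: (l ++ [y]))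
  have h01 := matProd_concat_zero_one (x :: l) y
  rw [List.cons_append] at h01
  rw [det_fin_two, matProd_cons_concat_one_one, matProd_cons_one_zero, h01] at h
  simp only [continuant] at h ⊢
  linarith

@[simp] lemma continuant_nil : continuant [] = 1 := rfl

@[simp] lemma continuant_singleton (x : ℤ) : continuant [x] = x := by
  simp [continuant, conwayMat]

lemma continuant_succ_cons (x : ℤ) (l : List ℤ) :
    continuant ((x + 1) :: l) = continuant (x :: l) + continuant l := by
  simp only [continuant, matProd_cons, mul_apply]; simp [conwayMat, Fin.sum_univ_two]; ring

lemma continuant_concat_succ (l : List ℤ) (x : ℤ) :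
    continuant (l ++ [x + 1]) = continuant (l ++ [x]) + continuant l := by
  simp only [continuant, matProd_append, mul_apply]; simp [conwayMat, Fin.sum_univ_two]; ring

lemma continuant_one_cons_succ (y : ℤ) (l : List ℤ) :
    continuant (1 :: (y + 1) :: l) = continuant (y :: l) := by
  simp only [continuant, matProd_cons, mul_apply]
  simp [conwayMat, Fin.sum_univ_two]; ring

lemma continuant_concat_succ_one (l : List ℤ) (x : ℤ) :
    continuant (l ++ [x + 1, 1]) = continuant (l ++ [x]) := by
  simp only [continuant, matProd_append, matProd_cons, matProd_nil, mul_one, mul_apply]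
  simp [conwayMat, Fin.sum_univ_two]

lemma conwayMat_succ_one_succ (x y : ℤ) :
    conwayMat (x + 1) * conwayMat 1 * conwayMat (y + 1) = conwayMat x * conwayMat y := by
  ext i j; fin_cases i <;> fin_cases j <;> simp [conwayMat, mul_apply, Fin.sum_univ_two]; ring

lemma matProd_succ_one_succ (l l' : List ℤ) (x y : ℤ) :
    matProd (l ++ (x + 1) :: 1 :: (y + 1) :: l') = matProd (l ++ x :: y :: l') := by
  simp only [matProd_append, matProd_cons, ← mul_assoc, conwayMat_succ_one_succ]

lemma continuant_succ_one_succ (l l' : List ℤ) (x y : ℤ) :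
    continuant (l ++ (x + 1) :: 1 :: (y + 1) :: l') = continuant (l ++ x :: y :: l') := by
  rw [continuant, matProd_succ_one_succ]; rfl

lemma matProd_one_one_one : matProd [1, 1, 1] = -1 := by
  ext i j; fin_cases i <;> fin_cases j <;> simp [conwayMat, mul_apply, Fin.sum_univ_two]

def window (q : ℤ → ℤ) : ℤ → ℕ → List ℤ
  | _, 0 => []
  | i, ℓ + 1 => q i :: window q (i + 1) ℓ

@[simp] lemma window_zero (q : ℤ → ℤ) (i : ℤ) : window q i 0 = [] := rfl

lemma window_succ (q : ℤ → ℤ) (i : ℤ) (ℓ : ℕ) :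
    window q i (ℓ + 1) = q i :: window q (i + 1) ℓ := rfl

lemma window_add (q : ℤ → ℤ) (i : ℤ) (a b : ℕ) :
    window q i (a + b) = window q i a ++ window q (i + a) b := by
  induction a generalizing i with
  | zero => simp
  | succ a ih =>
    rw [Nat.add_right_comm, window_succ, window_succ, ih, List.cons_append]
    push_cast; ring_nf

lemma window_concat (q : ℤ → ℤ) (i : ℤ) (ℓ : ℕ) :
    window q i (ℓ + 1) = window q i ℓ ++ [q (i + ℓ)] := by
  rw [window_add]; rfl

lemma window_congr {q q' : ℤ → ℤ} {i : ℤ} {ℓ : ℕ}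
    (h : ∀ k : ℤ, i ≤ k → k < i + ℓ → q k = q' k) : window q i ℓ = window q' i ℓ := by
  induction ℓ generalizing i with
  | zero => rfl
  | succ ℓ ih =>
    rw [window_succ, window_succ, h i le_rfl (by omega), ih fun k hk hk' => h k (by omega) (by omega)]

lemma Function.Periodic.window {q : ℤ → ℤ} {c : ℤ} (h : Periodic q c) (ℓ : ℕ) :
    Periodic (fun i => window q i ℓ) c := by
  induction ℓ with
  | zero => exact fun _ => rfl
  | succ ℓ ih => intro i; simp only [window_succ, h i, add_right_comm i c 1, ih (i + 1)]

lemma window_comp_add_const (q : ℤ → ℤ) (c i : ℤ) (ℓ : ℕ) :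
    window (fun k => q (k + c)) i ℓ = window q (i + c) ℓ := by
  induction ℓ generalizing i with
  | zero => rfl
  | succ ℓ ih => rw [window_succ, window_succ, ih, add_right_comm]

lemma isUnit_conwayMat (x : ℤ) : IsUnit (conwayMat x) := by
  rw [isUnit_iff_isUnit_det]; simp [conwayMat, det_fin_two_of]

/-- By periodicity, shifting the window by one conjugates its product by `conwayMat (q i)`, and
`-1` is central. -/
lemma matProd_window_succ_eq_neg_one_iff {q : ℤ → ℤ} {n : ℕ} (hq : Periodic q n) (i : ℤ) :
    matProd (window q (i + 1) n) = -1 ↔ matProd (window q i n) = -1 := by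
  have hconj : conwayMat (q i) * matProd (window q (i + 1) n) =
      matProd (window q i n) * conwayMat (q i) := by
    rw [← matProd_cons, ← window_succ, window_concat, matProd_append, hq i]; simp
  constructor <;> intro h <;> rw [h] at hconj
  · exact (isUnit_conwayMat (q i)).mul_right_cancel (by simpa using hconj.symm)
  · exact (isUnit_conwayMat (q i)).mul_left_cancel (by simpa using hconj)

lemma matProd_window_eq_neg_one {q : ℤ → ℤ} {n : ℕ} (hq : Periodic q n) {i₀ : ℤ}
    (h₀ : matProd (window q i₀ n) = -1) (i : ℤ) : matProd (window q i n) = -1 := by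
  induction i using Int.inductionOn' (b := i₀) with
  | zero => exact h₀
  | succ k _ ih => exact (matProd_window_succ_eq_neg_one_iff hq k).2 ih
  | pred k _ ih => exact (matProd_window_succ_eq_neg_one_iff hq (k - 1)).1 (by simpa using ih)

structure IsConwayCoxeter (n : ℕ) (q : ℤ → ℤ) : Prop where
  periodic : Periodic q n
  matProd_window : ∀ i, matProd (window q i n) = -1
  continuant_pos : ∀ i (ℓ : ℕ), 1 ≤ ℓ → ℓ + 3 ≤ n → 0 < continuant (window q i ℓ)

namespace IsConwayCoxeter

variable {n : ℕ} {q : ℤ → ℤ}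

lemma comp_add_const (h : IsConwayCoxeter n q) (c : ℤ) :
    IsConwayCoxeter n (fun i => q (i + c)) where
  periodic := h.periodic.add_const c
  matProd_window i := by rw [window_comp_add_const]; exact h.matProd_window _
  continuant_pos i ℓ h₁ h₂ := by rw [window_comp_add_const]; exact h.continuant_pos _ ℓ h₁ h₂

lemma continuant_window_sub_one (h : IsConwayCoxeter n q) (hn : 1 ≤ n) (i : ℤ) :
    continuant (window q i (n - 1)) = 0 := by
  have h10 := congrFun₂ (h.matProd_window (i - 1)) 1 0
  obtain ⟨m, rfl⟩ : ∃ m, n = m + 1 := ⟨n - 1, by omega⟩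
  rw [window_succ, matProd_cons_one_zero, sub_add_cancel] at h10
  simpa using h10

lemma continuant_window_sub_two (h : IsConwayCoxeter n q) (hn : 2 ≤ n) (i : ℤ) :
    continuant (window q i (n - 2)) = 1 := by
  have h11 := congrFun₂ (h.matProd_window (i - 1)) 1 1
  obtain ⟨m, rfl⟩ : ∃ m, n = m + 2 := ⟨n - 2, by omega⟩
  rw [window_succ, window_concat, matProd_cons_concat_one_one, sub_add_cancel] at h11
  simpa using h11

lemma continuant_pos_of_le (h : IsConwayCoxeter n q) (hn : 2 ≤ n) (i : ℤ) {ℓ : ℕ}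
    (hℓ : ℓ + 2 ≤ n) : 0 < continuant (window q i ℓ) := by
  rcases Nat.eq_zero_or_pos ℓ with rfl | hℓ₀
  · simp
  rcases hℓ.lt_or_eq with hlt | heq
  · exact h.continuant_pos i ℓ hℓ₀ (by omega)
  · rw [show ℓ = n - 2 by omega, h.continuant_window_sub_two hn]; exact one_pos

end IsConwayCoxeter

def conwayCoxeterFrieze (n : ℕ) (q : ℤ → ℤ) (i j : ℤ) : ℤ :=
  if i < j ∧ j ≤ i + n then continuant (window q i (j - i - 1).toNat) else 0

lemma conwayCoxeterFrieze_add_succ {n : ℕ} (q : ℤ → ℤ) (i : ℤ) {ℓ : ℕ} (hℓ : ℓ < n) :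
    conwayCoxeterFrieze n q i (i + ℓ + 1) = continuant (window q i ℓ) := by
  rw [conwayCoxeterFrieze, if_pos (by omega)]
  congr; omega

lemma IsConwayCoxeter.isClosedFrieze {n : ℕ} {q : ℤ → ℤ} (h : IsConwayCoxeter n q) (hn : 3 ≤ n) :
    IsClosedFrieze n (conwayCoxeterFrieze n q) := by
  have entry : ∀ i j : ℤ, ∀ ℓ : ℕ, ℓ < n → j = i + ℓ + 1 →
      conwayCoxeterFrieze n q i j = continuant (window q i ℓ) := by
    rintro i j ℓ hℓ rfl; exact conwayCoxeterFrieze_add_succ q i hℓ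
  refine ⟨fun i => ?_, fun i => ?_, fun i => ?_, fun i => ?_, fun i j h₁ h₂ => ?_,
    fun i j h₁ h₂ => ?_, fun i j h => ?_, fun i j h => ?_⟩
  · simp [conwayCoxeterFrieze]
  · simp [entry i (i + 1) 0 (by omega) (by simp)]
  · rw [entry i _ (n - 2) (by omega) (by omega), h.continuant_window_sub_two (by omega)]
  · rw [entry i _ (n - 1) (by omega) (by omega), h.continuant_window_sub_one (by omega)]
  · rw [entry i j (j - i - 1).toNat (by omega) (by omega)]
    exact h.continuant_pos_of_le (by omega) i (by omega)
  · obtain ⟨ℓ, rfl⟩ : ∃ ℓ : ℕ, j = i + ℓ + 1 := ⟨(j - i - 1).toNat, by omega⟩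
    rw [entry i _ ℓ (by omega) rfl, entry (i + 1) _ ℓ (by omega) (by ring),
      entry i _ (ℓ + 1) (by omega) (by push_cast; ring)]
    rcases ℓ with _ | k
    · simp [conwayCoxeterFrieze]
    · rw [entry (i + 1) _ k (by omega) (by push_cast; ring), window_succ, window_concat,
        window_succ q i (k + 1), window_concat]
      exact continuant_cons_mul_sub_eq_one _ _ _
  · simp [conwayCoxeterFrieze]; omega
  · simp [conwayCoxeterFrieze]; omega

lemma conwayCoxeterFrieze_add_two {n : ℕ} (hn : 2 ≤ n) (q : ℤ → ℤ) (i : ℤ) :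
    conwayCoxeterFrieze n q i (i + 2) = q i := by
  rw [show i + 2 = i + (1 : ℕ) + 1 by push_cast; ring, conwayCoxeterFrieze_add_succ q i (by omega)]
  simp [window_succ]

lemma Function.Periodic.emod_eq {α : Type*} {f : ℤ → α} {c : ℤ} (h : Periodic f c) (i : ℤ) :
    f (i % c) = f i := by
  conv_rhs => rw [← Int.emod_add_ediv_mul i c]
  exact (h.int_mul (i / c) (i % c)).symm

/-- `q` arises from `q'` by gluing a triangle onto the side joining the vertices `m ≡ 0` and `1` of
the `m`-gon: the new vertex `0` has weight `1`, and the weights of its neighbours go up by one. -/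
structure IsGlueTriangle (m : ℕ) (q' q : ℤ → ℤ) : Prop where
  periodic : Periodic q ((m + 1 : ℕ) : ℤ)
  apply_zero : q 0 = 1
  apply_one : q 1 = q' 1 + 1
  apply_self : q m = q' m + 1
  apply_of_mem_Icc : ∀ k : ℤ, 2 ≤ k → k ≤ m - 1 → q k = q' k

namespace IsGlueTriangle

variable {m : ℕ} {q q' : ℤ → ℤ}

lemma window_eq (hg : IsGlueTriangle m q' q) {a : ℤ} {ℓ : ℕ} (ha : 2 ≤ a) (hℓ : a + ℓ ≤ m) :
    window q a ℓ = window q' a ℓ :=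
  window_congr fun k hk hk' => hg.apply_of_mem_Icc k (by omega) (by omega)

lemma window_one (hg : IsGlueTriangle m q' q) {ℓ : ℕ} (hℓ : ℓ + 2 ≤ m) :
    window q 1 (ℓ + 1) = (q' 1 + 1) :: window q' 2 ℓ := by
  rw [window_succ, hg.apply_one, one_add_one_eq_two, hg.window_eq le_rfl (by omega)]

lemma window_concat_self (hg : IsGlueTriangle m q' q) {a : ℤ} {ℓ : ℕ} (ha : 2 ≤ a)
    (hℓ : a + ℓ = m) : window q a (ℓ + 1) = window q' a ℓ ++ [q' m + 1] := by
  rw [window_concat, hg.window_eq ha hℓ.le, hℓ, hg.apply_self]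

lemma window_self (hg : IsGlueTriangle m q' q) (ℓ : ℕ) :
    window q m (ℓ + 2) = (q' m + 1) :: 1 :: window q 1 ℓ := by
  have h₁ : q (m + 1) = 1 := by simpa [hg.apply_zero] using hg.periodic 0
  have h₂ : window q (m + 1 + 1) ℓ = window q 1 ℓ := by
    simpa [add_comm] using hg.periodic.window ℓ 1
  rw [window_succ, window_succ, hg.apply_self, h₁, h₂]

lemma continuant_window_zero_pos (hg : IsGlueTriangle m q' q) (h' : IsConwayCoxeter m q')
    {ℓ : ℕ} (hℓ : ℓ + 3 ≤ m + 1) : 0 < continuant (window q 0 (ℓ + 1)) := by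
  rw [window_succ, hg.apply_zero, zero_add]
  rcases ℓ with _ | k
  · simp
  · rw [hg.window_one (by omega), continuant_one_cons_succ]
    simpa [window_succ] using h'.continuant_pos_of_le (by omega) 1 (ℓ := k + 1) (by omega)

lemma continuant_window_pos_of_le (hg : IsGlueTriangle m q' q) (h' : IsConwayCoxeter m q')
    {a : ℕ} {ℓ : ℕ} (ha : 1 ≤ a) (hℓ : ℓ + 3 ≤ m + 1) (haℓ : a + ℓ ≤ m + 1) (hℓ₁ : 1 ≤ ℓ) :
    0 < continuant (window q a ℓ) := by
  have pos := fun (i : ℤ) (k : ℕ) (hk : k + 2 ≤ m) => h'.continuant_pos_of_le (by omega) i hk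
  obtain ⟨k, rfl⟩ : ∃ k, ℓ = k + 1 := ⟨ℓ - 1, by omega⟩
  rcases ha.eq_or_lt with rfl | ha
  · rw [Nat.cast_one, hg.window_one (by omega), continuant_succ_cons]
    refine add_pos ?_ (pos 2 k (by omega))
    simpa [window_succ] using pos 1 (k + 1) (by omega)
  rcases Nat.lt_or_ge (a + k) m with h | h
  · rw [hg.window_eq (by omega) (by omega)]
    exact pos a _ (by omega)
  · rw [hg.window_concat_self (by omega) (by omega), continuant_concat_succ,
      ← show (a : ℤ) + k = m by omega, ← window_concat]
    exact add_pos (pos a _ (by omega)) (pos a k (by omega))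

lemma continuant_window_pos_of_gt (hg : IsGlueTriangle m q' q) (h' : IsConwayCoxeter m q')
    {a : ℕ} {ℓ : ℕ} (ha : a ≤ m) (hℓ : ℓ + 3 ≤ m + 1) (haℓ : m + 2 ≤ a + ℓ) :
    0 < continuant (window q a ℓ) := by
  have pos := fun (i : ℤ) (k : ℕ) (hk : k + 2 ≤ m) => h'.continuant_pos_of_le (by omega) i hk
  obtain ⟨p, rfl⟩ : ∃ p, a + p = m := ⟨m - a, by omega⟩
  obtain ⟨s, rfl⟩ : ∃ s, ℓ = p + (s + 2) := ⟨ℓ - p - 2, by omega⟩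
  have hp : window q a p = window q' a p := hg.window_eq (by omega) (by push_cast; omega)
  rw [window_add, hp, show (a : ℤ) + p = (a + p : ℕ) by push_cast; ring, hg.window_self]
  rcases s with _ | t
  · rw [window_zero, continuant_concat_succ_one, Nat.cast_add, ← window_concat]
    exact pos a _ (by omega)
  · have hwrap : window q' (↑(a + p) + 1) (t + 1) = q' 1 :: window q' 2 t := by
      simpa [add_comm, window_succ] using h'.periodic.window (t + 1) 1
    rw [hg.window_one (by omega), continuant_succ_one_succ, ← hwrap, ← window_succ,
      Nat.cast_add, ← window_add]
    exact pos a _ (by omega)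

lemma matProd_window_self (hg : IsGlueTriangle m q' q) (h' : IsConwayCoxeter m q')
    (hm : 3 ≤ m) : matProd (window q m (m + 1)) = -1 := by
  obtain ⟨k, rfl⟩ : ∃ k, m = k + 2 := ⟨m - 2, by omega⟩
  have hwindow : window q' ↑(k + 2) (k + 2) = q' ↑(k + 2) :: q' 1 :: window q' 2 k := by
    have := h'.periodic.window (k + 1) 1
    simp only [window_succ] at this ⊢
    simpa [add_comm] using this
  rw [show k + 2 + 1 = k + 1 + 2 by ring, hg.window_self, hg.window_one (by omega),
    ← List.nil_append ((q' ↑(k + 2) + 1) :: _), matProd_succ_one_succ, List.nil_append,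
    ← hwindow]
  exact h'.matProd_window _

end IsGlueTriangle

theorem IsConwayCoxeter.of_isGlueTriangle {m : ℕ} {q q' : ℤ → ℤ} (h' : IsConwayCoxeter m q')
    (hg : IsGlueTriangle m q' q) (hm : 3 ≤ m) : IsConwayCoxeter (m + 1) q where
  periodic := hg.periodic
  matProd_window := matProd_window_eq_neg_one hg.periodic (hg.matProd_window_self h' hm)
  continuant_pos i ℓ h₁ h₂ := by
    rw [← (hg.periodic.window ℓ).emod_eq i]
    have hnonneg := Int.emod_nonneg i (show ((m + 1 : ℕ) : ℤ) ≠ 0 by omega)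
    have hlt := Int.emod_lt_of_pos i (show (0 : ℤ) < (m + 1 : ℕ) by omega)
    obtain ⟨a, ha⟩ : ∃ a : ℕ, i % ((m + 1 : ℕ) : ℤ) = a := ⟨_, (Int.toNat_of_nonneg hnonneg).symm⟩
    rw [ha] at hlt ⊢
    rcases a with _ | a
    · obtain ⟨k, rfl⟩ : ∃ k, ℓ = k + 1 := ⟨ℓ - 1, by omega⟩
      exact hg.continuant_window_zero_pos h' (by omega)
    rcases le_or_gt (a + 1 + ℓ) (m + 1) with h | h
    · exact hg.continuant_window_pos_of_le h' (by omega) h₂ h h₁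
    · exact hg.continuant_window_pos_of_gt h' (by omega) h₂ h

def Noncrossing (S : Finset (ℕ × ℕ)) : Prop :=
  ∀ e ∈ S, ∀ f ∈ S, ¬(e.1 < f.1 ∧ f.1 < e.2 ∧ e.2 < f.2)

lemma Noncrossing.mono {S S' : Finset (ℕ × ℕ)} (hS : Noncrossing S) (h : S' ⊆ S) :
    Noncrossing S' :=
  fun e he f hf => hS e (h he) f (h hf)

lemma Noncrossing.length_lt {S : Finset (ℕ × ℕ)} (hS : Noncrossing S) {e f : ℕ × ℕ} (he : e ∈ S)
    (hf : f ∈ S) (h : e.1 < f.1 ∧ f.1 < e.2 ∨ e.1 < f.2 ∧ f.2 < e.2) :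
    f.2 - f.1 < e.2 - e.1 := by
  have := hS e he f hf
  have := hS f hf e he
  omega

/-- Each pair of `S` is a diagonal of the convex polygon with vertex set `A`: it joins two vertices
and has vertices of `A` on both of its sides. -/
structure IsDiagonalFamily (A : Finset ℕ) (S : Finset (ℕ × ℕ)) : Prop where
  mem : ∀ e ∈ S, e.1 ∈ A ∧ e.2 ∈ A
  exists_between : ∀ e ∈ S, ∃ k ∈ A, e.1 < k ∧ k < e.2
  exists_outside : ∀ e ∈ S, ∃ k ∈ A, k < e.1 ∨ e.2 < k

/-- Cutting the polygon along a shortest diagonal `e` of a noncrossing family deletes the vertices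
strictly between its ends, and no other diagonal ends there. -/
lemma IsDiagonalFamily.erase_shortest {A : Finset ℕ} {S : Finset (ℕ × ℕ)}
    (hA : IsDiagonalFamily A S) (hS : Noncrossing S) {e : ℕ × ℕ} (he : e ∈ S)
    (hmin : ∀ f ∈ S, e.2 - e.1 ≤ f.2 - f.1) :
    IsDiagonalFamily (A.filter fun x => x ≤ e.1 ∨ e.2 ≤ x) (S.erase e) := by
  have hfar : ∀ f ∈ S, ¬(e.1 < f.1 ∧ f.1 < e.2) ∧ ¬(e.1 < f.2 ∧ f.2 < e.2) := fun f hf =>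
    ⟨fun h => (hS.length_lt he hf (.inl h)).not_ge (hmin f hf),
      fun h => (hS.length_lt he hf (.inr h)).not_ge (hmin f hf)⟩
  have hmem : ∀ x ∈ A, x ≤ e.1 ∨ e.2 ≤ x → x ∈ A.filter fun x => x ≤ e.1 ∨ e.2 ≤ x :=
    fun x hx h => Finset.mem_filter.2 ⟨hx, h⟩
  have he₁ := hmem _ (hA.mem e he).1 (.inl le_rfl)
  have he₂ := hmem _ (hA.mem e he).2 (.inr le_rfl)
  refine ⟨fun f hf => ?_, fun f hf => ?_, fun f hf => ?_⟩ <;>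
    obtain ⟨hfe, hfS⟩ := Finset.mem_erase.1 hf <;> have := hfar f hfS
  · exact ⟨hmem _ (hA.mem f hfS).1 (by omega), hmem _ (hA.mem f hfS).2 (by omega)⟩
  · obtain ⟨k, hk, hkf⟩ := hA.exists_between f hfS
    by_cases hke : k ≤ e.1 ∨ e.2 ≤ k
    · exact ⟨k, hmem k hk hke, hkf⟩
    by_cases h₁ : f.1 = e.1
    · have : f.2 ≠ e.2 := fun h₂ => hfe (Prod.ext h₁ h₂)
      exact ⟨e.2, he₂, by omega, by omega⟩
    · exact ⟨e.1, he₁, by omega, by omega⟩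
  · obtain ⟨k, hk, hkf⟩ := hA.exists_outside f hfS
    by_cases hke : k ≤ e.1 ∨ e.2 ≤ k
    · exact ⟨k, hmem k hk hke, hkf⟩
    rcases hkf with hkf | hkf
    · exact ⟨e.1, he₁, by omega⟩
    · exact ⟨e.2, he₂, by omega⟩

theorem IsDiagonalFamily.card_add_three_le {A : Finset ℕ} {S : Finset (ℕ × ℕ)}
    (hA : IsDiagonalFamily A S) (hS : Noncrossing S) (hA₃ : 3 ≤ A.card) :
    S.card + 3 ≤ A.card := by
  induction S using Finset.strongInduction generalizing A with
  | H S ih =>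
  obtain rfl | hne := S.eq_empty_or_nonempty
  · simpa using hA₃
  obtain ⟨e, he, hmin⟩ := S.exists_min_image (fun e => e.2 - e.1) hne
  have hA' := hA.erase_shortest hS he hmin
  set A' := A.filter fun x => x ≤ e.1 ∨ e.2 ≤ x
  obtain ⟨k₀, hk₀, hk₀e⟩ := hA.exists_between e he
  obtain ⟨k₁, hk₁, hk₁e⟩ := hA.exists_outside e he
  have hA'lt : A'.card < A.card :=
    Finset.card_lt_card (Finset.filter_ssubset.2 ⟨k₀, hk₀, by omega⟩)
  have hA'₃ : 3 ≤ A'.card := by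
    have hsub : ({e.1, e.2, k₁} : Finset ℕ) ⊆ A' := by
      simp only [Finset.insert_subset_iff, Finset.singleton_subset_iff, A', Finset.mem_filter]
      exact ⟨⟨(hA.mem e he).1, by omega⟩, ⟨(hA.mem e he).2, by omega⟩, ⟨hk₁, by omega⟩⟩
    refine le_trans ?_ (Finset.card_le_card hsub)
    rw [Finset.card_insert_of_notMem (by simp; omega), Finset.card_pair (by omega)]
  have := ih _ (Finset.erase_ssubset he) hA' (hS.mono (Finset.erase_subset e S)) hA'₃
  have := Finset.card_erase_add_one he
  omega

namespace ZMod

lemma eq_add_one_iff {m : ℕ} [NeZero m] {a b : ZMod m} :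
    b = a + 1 ↔ b.val = a.val + 1 ∨ (a.val + 1 = m ∧ b.val = 0) := by
  have ha := a.val_lt
  have hb := b.val_lt
  have hval : (a + 1).val = (a.val + 1) % m := by
    rw [← ZMod.val_natCast, Nat.cast_add, ZMod.natCast_zmod_val, Nat.cast_one]
  rw [← ZMod.val_injective m |>.eq_iff, hval]
  rcases (show a.val + 1 ≤ m by omega).lt_or_eq with h | h
  · rw [Nat.mod_eq_of_lt h]; omega
  · rw [h, Nat.mod_self]; omega

lemma add_natCast_eq_add_one_iff {n : ℕ} (w : ZMod (n + 1)) {k : ℕ} (hk₁ : 1 ≤ k)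
    (hk : k ≤ n) : w + k = w + 1 ↔ k = 1 := by
  rw [add_right_inj, ← (Nat.cast_one (R := ZMod (n + 1))), ZMod.natCast_eq_natCast_iff',
    Nat.mod_eq_of_lt (by omega), Nat.mod_eq_of_lt (by omega)]

lemma add_natCast_eq_sub_one_iff {n : ℕ} (w : ZMod (n + 1)) {k : ℕ} (hk : k ≤ n) :
    w + k = w - 1 ↔ k = n := by
  have : (n : ZMod (n + 1)) = -1 := by
    rw [eq_neg_iff_add_eq_zero]; exact_mod_cast ZMod.natCast_self (n + 1)
  rw [sub_eq_add_neg, add_right_inj, ← this, ZMod.natCast_eq_natCast_iff',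
    Nat.mod_eq_of_lt (by omega), Nat.mod_eq_of_lt (by omega)]

variable {m : ℕ} [NeZero m]

def succAbove (w : ZMod (m + 1)) (x : ZMod m) : ZMod (m + 1) :=
  ((if x.val < w.val then x.val else x.val + 1 : ℕ) : ZMod (m + 1))

variable (w : ZMod (m + 1))

lemma val_succAbove (x : ZMod m) :
    (w.succAbove x).val = if x.val < w.val then x.val else x.val + 1 := by
  have := x.val_lt
  unfold succAbove
  split_ifs <;> exact ZMod.val_cast_of_lt (by omega)

lemma succAbove_ne (x : ZMod m) : w.succAbove x ≠ w := fun h => by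
  have := congrArg ZMod.val h
  rw [val_succAbove] at this
  split_ifs at this <;> omega

lemma val_succAbove_lt_val_succAbove_iff {x y : ZMod m} :
    (w.succAbove x).val < (w.succAbove y).val ↔ x.val < y.val := by
  rw [val_succAbove, val_succAbove]; split_ifs <;> omega

lemma succAbove_injective : Function.Injective w.succAbove := fun x y h => by
  have := congrArg ZMod.val h
  rw [val_succAbove, val_succAbove] at this
  exact ZMod.val_injective m (by split_ifs at this <;> omega)

lemma exists_succAbove_eq {v : ZMod (m + 1)} (hv : v ≠ w) : ∃ x, w.succAbove x = v := by
  have hvw : v.val ≠ w.val := fun h => hv (ZMod.val_injective _ h)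
  have := v.val_lt
  have := w.val_lt
  refine ⟨((if v.val < w.val then v.val else v.val - 1 : ℕ) : ZMod m), ZMod.val_injective _ ?_⟩
  rw [val_succAbove]
  split_ifs with h₁ h₂ h₂ <;> rw [ZMod.val_cast_of_lt (by omega)] at * <;> omega

lemma eq_add_one_iff_succAbove {x y : ZMod m} :
    y = x + 1 ↔ w.succAbove y = w.succAbove x + 1 ∨
      (w.succAbove x = w - 1 ∧ w.succAbove y = w + 1) := by
  have := x.val_lt
  have := y.val_lt
  have := w.val_lt
  rw [eq_sub_iff_add_eq, eq_comm (b := w), eq_add_one_iff, eq_add_one_iff, eq_add_one_iff,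
    eq_add_one_iff, val_succAbove, val_succAbove]
  split_ifs <;> grind

lemma succAbove_natCast_val_add {j : ℕ} (hj : j < m) :
    w.succAbove ((w.val + j : ℕ) : ZMod m) = w + ((j + 1 : ℕ) : ZMod (m + 1)) := by
  have hw := w.val_lt
  apply ZMod.val_injective
  rw [val_succAbove, ← ZMod.natCast_zmod_val w, ← Nat.cast_add, ZMod.natCast_zmod_val,
    ZMod.val_natCast, ZMod.val_natCast]
  rcases lt_or_ge (w.val + j) m with h | h
  · rw [Nat.mod_eq_of_lt h, Nat.mod_eq_of_lt (by omega), if_neg (by omega)]; ring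
  · rw [Nat.mod_eq_sub_mod h, Nat.mod_eq_of_lt (by omega), Nat.mod_eq_sub_mod (by omega),
      Nat.mod_eq_of_lt (by omega), if_pos (by omega)]
    omega

end ZMod

lemma mem_triangles_iff {n : ℕ} [NeZero n] {T : PolygonTriangulation n} {s : Finset (ZMod n)} :
    s ∈ triangles T ↔ s.card = 3 ∧ ∀ i ∈ s, ∀ j ∈ s, i ≠ j → IsTriEdge T i j := by
  simp [triangles]

namespace PolygonTriangulation

variable {n : ℕ} [NeZero n] (T : PolygonTriangulation n) {w : ZMod n}

def valDiags : Finset (ℕ × ℕ) := T.diags.image fun d => (d.1.val, d.2.val)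

lemma mem_valDiags {d : ZMod n × ZMod n} (hd : d ∈ T.diags) : (d.1.val, d.2.val) ∈ T.valDiags :=
  Finset.mem_image_of_mem _ hd

lemma card_valDiags : T.valDiags.card = n - 3 := by
  rw [valDiags, Finset.card_image_of_injective _ fun d e h => by
    simp only [Prod.mk.injEq] at h
    exact Prod.ext (ZMod.val_injective n h.1) (ZMod.val_injective n h.2), T.card_diags]

lemma noncrossing_valDiags : Noncrossing T.valDiags := by
  simp only [Noncrossing, valDiags, Finset.forall_mem_image]
  exact fun d hd e he => T.noncrossing d hd e he

lemma valDiags_spec {e : ℕ × ℕ} (he : e ∈ T.valDiags) :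
    e.1 + 1 < e.2 ∧ e.2 < n ∧ ¬(e.1 = 0 ∧ e.2 = n - 1) := by
  obtain ⟨d, hd, rfl⟩ := Finset.mem_image.1 he
  exact ⟨(T.not_boundary d hd).1, d.2.val_lt, (T.not_boundary d hd).2⟩

/-- The shortest diagonal is an ear: otherwise `(p, p + 2)` could be added without crossing,
exceeding the `n - 3` diagonals a noncrossing family can have. -/
lemma exists_ear (hn : 4 ≤ n) : ∃ d ∈ T.valDiags, d.2 = d.1 + 2 := by
  have hne : T.valDiags.Nonempty := by rw [← Finset.card_pos, card_valDiags]; omega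
  obtain ⟨d, hd, hmin⟩ := T.valDiags.exists_min_image (fun e => e.2 - e.1) hne
  refine ⟨d, hd, ?_⟩
  by_contra hlen
  have hd' := T.valDiags_spec hd
  have hfar : ∀ f ∈ T.valDiags, f.1 ≠ d.1 + 1 ∧ f.2 ≠ d.1 + 1 := fun f hf =>
    ⟨fun h => (T.noncrossing_valDiags.length_lt hd hf (.inl (by omega))).not_ge (hmin f hf),
      fun h => (T.noncrossing_valDiags.length_lt hd hf (.inr (by omega))).not_ge (hmin f hf)⟩
  have hnew : (d.1, d.1 + 2) ∉ T.valDiags := fun h => by have := hmin _ h; omega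
  have hspec : ∀ e ∈ insert (d.1, d.1 + 2) T.valDiags,
      e.1 + 1 < e.2 ∧ e.2 < n ∧ ¬(e.1 = 0 ∧ e.2 = n - 1) := by
    simp only [Finset.forall_mem_insert]
    exact ⟨by omega, fun e he => T.valDiags_spec he⟩
  have hfamily : IsDiagonalFamily (Finset.range n) (insert (d.1, d.1 + 2) T.valDiags) := by
    refine ⟨fun e he => ?_, fun e he => ⟨e.1 + 1, ?_⟩, fun e he => ?_⟩ <;> have := hspec e he
    · simp only [Finset.mem_range]; omega
    · simp only [Finset.mem_range]; omega
    · rcases Nat.eq_zero_or_pos e.1 with h | h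
      · exact ⟨n - 1, by simp only [Finset.mem_range]; omega, .inr (by omega)⟩
      · exact ⟨0, by simp only [Finset.mem_range]; omega, .inl h⟩
  have hcard := hfamily.card_add_three_le (by
      simp only [Noncrossing, Finset.forall_mem_insert]
      refine ⟨⟨by omega, fun f hf => by have := hfar f hf; omega⟩, fun e he =>
        ⟨by have := hfar e he; omega, T.noncrossing_valDiags e he⟩⟩)
    (by simp only [Finset.card_range]; omega)
  rw [Finset.card_insert_of_notMem hnew, card_valDiags, Finset.card_range] at hcard
  omega

lemma exists_ear_tip (hn : 4 ≤ n) : ∃ w : ZMod n, (w - 1, w + 1) ∈ T.diags := by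
  obtain ⟨_, hd, hd₂⟩ := T.exists_ear hn
  obtain ⟨⟨P, Q⟩, hPQ, rfl⟩ := Finset.mem_image.1 hd
  have h₁ := (ZMod.eq_add_one_iff (a := P) (b := P + 1)).1 rfl
  have hQ : Q = P + 1 + 1 := ZMod.eq_add_one_iff.2 (by dsimp only at hd₂; have := Q.val_lt; omega)
  exact ⟨P + 1, by rwa [add_sub_cancel_right, ← hQ]⟩

lemma val_of_ear (hw : (w - 1, w + 1) ∈ T.diags) :
    1 ≤ w.val ∧ w.val + 1 < n ∧ (w - 1).val + 1 = w.val ∧ (w + 1).val = w.val + 1 := by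
  have hlt := (T.not_boundary _ hw).1
  have := (w + 1).val_lt
  have h₁ := (ZMod.eq_add_one_iff (a := w - 1) (b := w)).1 (sub_add_cancel w 1).symm
  have h₂ := (ZMod.eq_add_one_iff (a := w) (b := w + 1)).1 rfl
  dsimp only at hlt
  rcases h₁ with h₁ | h₁ <;> rcases h₂ with h₂ | h₂ <;> omega

lemma ne_of_mem_of_ear (hw : (w - 1, w + 1) ∈ T.diags) {e : ZMod n × ZMod n}
    (he : e ∈ T.diags) : e.1 ≠ w ∧ e.2 ≠ w := by
  have hear := T.val_of_ear hw
  have hlen := fun h => T.noncrossing_valDiags.length_lt (T.mem_valDiags hw) (T.mem_valDiags he) h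
  have := (T.not_boundary e he).1
  dsimp only at hlen
  constructor <;> rintro rfl <;> have := hlen (by omega) <;> omega

lemma ear_mem_triangles (hw : (w - 1, w + 1) ∈ T.diags) : {w - 1, w, w + 1} ∈ triangles T := by
  have hear := T.val_of_ear hw
  have hne : ∀ a b : ZMod n, a.val ≠ b.val → a ≠ b := fun a b h h' => h (h' ▸ rfl)
  refine mem_triangles_iff.2 ⟨Finset.card_eq_three.2 ⟨_, _, _, hne _ _ (by omega),
    hne _ _ (by omega), hne _ _ (by omega), rfl⟩, ?_⟩
  simp only [Finset.mem_insert, Finset.mem_singleton]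
  rintro i (rfl | rfl | rfl) j (rfl | rfl | rfl) hij <;> simp_all [IsTriEdge]

lemma eq_ear_of_mem_triangles (hw : (w - 1, w + 1) ∈ T.diags) {s : Finset (ZMod n)}
    (hs : s ∈ triangles T) (hws : w ∈ s) : s = {w - 1, w, w + 1} := by
  obtain ⟨hcard, hedge⟩ := mem_triangles_iff.1 hs
  refine Finset.eq_of_subset_of_card_le (fun x hx => ?_) (by rw [hcard]; exact Finset.card_le_three)
  simp only [Finset.mem_insert, Finset.mem_singleton]
  by_cases hxw : x = w
  · exact .inr (.inl hxw)
  rcases hedge x hx w hws hxw with h | h | h | h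
  · exact absurd rfl (T.ne_of_mem_of_ear hw h).2
  · exact absurd rfl (T.ne_of_mem_of_ear hw h).1
  · exact .inl (eq_sub_of_add_eq h.symm)
  · exact .inr (.inr h)

end PolygonTriangulation

namespace PolygonTriangulation

variable {m : ℕ} [NeZero m] (T : PolygonTriangulation (m + 1)) {w : ZMod (m + 1)}

/-- Cutting off the ear at `w`; the remaining vertices are relabelled along `w.succAbove`. -/
def contract (hw : (w - 1, w + 1) ∈ T.diags) : PolygonTriangulation m where
  diags := Finset.univ.filter fun d => (w.succAbove d.1, w.succAbove d.2) ∈ T.diags.erase (w - 1, w + 1)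
  lt_of_mem d hd := by
    have h := T.lt_of_mem _ (Finset.mem_of_mem_erase (Finset.mem_filter.1 hd).2)
    exact (w.val_succAbove_lt_val_succAbove_iff).1 h
  not_boundary d hd := by
    obtain ⟨hne, hmem⟩ := Finset.mem_erase.1 (Finset.mem_filter.1 hd).2
    have hb := T.not_boundary _ hmem
    have hear := T.val_of_ear hw
    dsimp only at hb
    have hne' : ¬((w.succAbove d.1).val + 1 = w.val ∧ (w.succAbove d.2).val = w.val + 1) :=
      fun h => hne <| Prod.ext
        (ZMod.val_injective _ (show (w.succAbove d.1).val = (w - 1).val by omega))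
        (ZMod.val_injective _ (show (w.succAbove d.2).val = (w + 1).val by omega))
    simp only [ZMod.val_succAbove] at hb hne' ⊢
    have := d.2.val_lt
    split_ifs at hb hne' <;> omega
  noncrossing d hd e he := by
    have h := T.noncrossing _ (Finset.mem_of_mem_erase (Finset.mem_filter.1 hd).2) _
      (Finset.mem_of_mem_erase (Finset.mem_filter.1 he).2)
    simpa only [ZMod.val_succAbove_lt_val_succAbove_iff] using h
  card_diags := by
    have hcard := Finset.card_erase_of_mem hw
    rw [T.card_diags] at hcard
    refine (Finset.card_nbij (Prod.map w.succAbove w.succAbove) (t := T.diags.erase (w - 1, w + 1))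
      (fun d hd => (Finset.mem_filter.1 hd).2)
      (fun d _ e _ h => Prod.map_injective.2 ⟨w.succAbove_injective, w.succAbove_injective⟩ h)
      ?_).trans (by omega)
    · intro e he
      obtain ⟨h₁, h₂⟩ := T.ne_of_mem_of_ear hw (Finset.mem_of_mem_erase he)
      obtain ⟨x, hx⟩ := w.exists_succAbove_eq h₁
      obtain ⟨y, hy⟩ := w.exists_succAbove_eq h₂
      refine ⟨(x, y), ?_, Prod.ext hx hy⟩
      simpa [hx, hy] using he

lemma mem_contract_diags (hw : (w - 1, w + 1) ∈ T.diags) {x y : ZMod m} :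
    (x, y) ∈ (T.contract hw).diags ↔
      (w.succAbove x, w.succAbove y) ∈ T.diags ∧ (w.succAbove x, w.succAbove y) ≠ (w - 1, w + 1) := by
  simp [contract, and_comm]

/-- The base of the ear is a diagonal of `T` but a side of the contracted polygon. -/
lemma isTriEdge_succAbove_iff (hw : (w - 1, w + 1) ∈ T.diags) {x y : ZMod m} :
    IsTriEdge T (w.succAbove x) (w.succAbove y) ↔ IsTriEdge (T.contract hw) x y := by
  have hxy := w.eq_add_one_iff_succAbove (x := x) (y := y)
  have hyx := w.eq_add_one_iff_succAbove (x := y) (y := x)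
  unfold IsTriEdge
  rw [mem_contract_diags, mem_contract_diags, hxy, hyx]
  generalize w.succAbove x = a, w.succAbove y = b
  simp only [ne_eq, Prod.mk.injEq]
  constructor
  · rintro (h | h | h | h)
    · by_cases hab : a = w - 1 ∧ b = w + 1
      · exact .inr (.inr (.inl (.inr hab)))
      · exact .inl ⟨h, hab⟩
    · by_cases hab : b = w - 1 ∧ a = w + 1
      · exact .inr (.inr (.inr (.inr hab)))
      · exact .inr (.inl ⟨h, hab⟩)
    · exact .inr (.inr (.inl (.inl h)))
    · exact .inr (.inr (.inr (.inl h)))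
  · rintro (⟨h, -⟩ | ⟨h, -⟩ | (h | ⟨rfl, rfl⟩) | (h | ⟨rfl, rfl⟩))
    · exact .inl h
    · exact .inr (.inl h)
    · exact .inr (.inr (.inl h))
    · exact .inl hw
    · exact .inr (.inr (.inr h))
    · exact .inr (.inl hw)

lemma image_succAbove_mem_triangles_iff (hw : (w - 1, w + 1) ∈ T.diags) {t : Finset (ZMod m)} :
    t.image w.succAbove ∈ triangles T ↔ t ∈ triangles (T.contract hw) := by
  simp only [mem_triangles_iff, Finset.card_image_of_injective _ w.succAbove_injective,
    Finset.forall_mem_image, w.succAbove_injective.ne_iff, T.isTriEdge_succAbove_iff hw]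

lemma triangles_eq_insert (hw : (w - 1, w + 1) ∈ T.diags) :
    triangles T = insert {w - 1, w, w + 1}
      ((triangles (T.contract hw)).image (Finset.image w.succAbove)) := by
  ext s
  simp only [Finset.mem_insert, Finset.mem_image]
  constructor
  · intro hs
    by_cases hws : w ∈ s
    · exact .inl (T.eq_ear_of_mem_triangles hw hs hws)
    obtain ⟨t, rfl⟩ := Finset.subset_univ_image_iff.1 fun v hv =>
      Finset.mem_image.2 <| (w.exists_succAbove_eq fun h => hws (h ▸ hv)).imp fun x hx =>
        ⟨Finset.mem_univ x, hx⟩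
    exact .inr ⟨t, (T.image_succAbove_mem_triangles_iff hw).1 hs, rfl⟩
  · rintro (rfl | ⟨t, ht, rfl⟩)
    · exact T.ear_mem_triangles hw
    · exact (T.image_succAbove_mem_triangles_iff hw).2 ht

lemma triCount_self (hw : (w - 1, w + 1) ∈ T.diags) : triCount T w = 1 := by
  rw [triCount, T.triangles_eq_insert hw, Finset.filter_insert, if_pos (by simp),
    Finset.filter_image, Finset.filter_false_of_mem, Finset.image_empty]
  · rfl
  · exact fun t _ h => by obtain ⟨x, -, hx⟩ := Finset.mem_image.1 h; exact w.succAbove_ne x hx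

lemma triCount_succAbove (hw : (w - 1, w + 1) ∈ T.diags) (x : ZMod m) :
    triCount T (w.succAbove x) = triCount (T.contract hw) x +
      if w.succAbove x = w - 1 ∨ w.succAbove x = w + 1 then 1 else 0 := by
  have hear : ({w - 1, w, w + 1} : Finset _) ∉
      Finset.image (Finset.image w.succAbove) ((triangles (T.contract hw)).filter (x ∈ ·)) := by
    simp only [Finset.mem_image, not_exists, not_and]
    intro t _ h
    have hw' : w ∈ t.image w.succAbove := h ▸ by simp
    obtain ⟨y, -, hy⟩ := Finset.mem_image.1 hw'
    exact w.succAbove_ne y hy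
  rw [triCount, triCount, T.triangles_eq_insert hw, Finset.filter_insert, Finset.filter_image]
  simp only [w.succAbove_injective.mem_finset_image, Finset.mem_insert, Finset.mem_singleton,
    w.succAbove_ne x, false_or]
  split_ifs
  · rw [Finset.card_insert_of_notMem hear,
      Finset.card_image_of_injective _ (Finset.image_injective w.succAbove_injective)]
  · rw [Finset.card_image_of_injective _ (Finset.image_injective w.succAbove_injective), add_zero]

lemma triCount_add_natCast (hw : (w - 1, w + 1) ∈ T.diags) {k : ℕ} (hk₁ : 1 ≤ k) (hk : k ≤ m) :
    triCount T (w + k) =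
      triCount (T.contract hw) ((w.val + (k - 1) : ℕ) : ZMod m) + if k = m ∨ k = 1 then 1 else 0 := by
  obtain ⟨j, rfl⟩ : ∃ j, k = j + 1 := ⟨k - 1, by omega⟩
  have h := T.triCount_succAbove hw ((w.val + j : ℕ) : ZMod m)
  simp only [w.succAbove_natCast_val_add (show j < m by omega),
    w.add_natCast_eq_sub_one_iff hk, w.add_natCast_eq_add_one_iff hk₁ hk] at h
  rw [h, Nat.add_sub_cancel]

lemma isGlueTriangle_triCount (hw : (w - 1, w + 1) ∈ T.diags) :
    IsGlueTriangle m (fun k => (triCount (T.contract hw) ((k + (w.val - 1 : ℤ) : ℤ) : ZMod m) : ℤ))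
      (fun k => (triCount T ((k + w.val : ℤ) : ZMod (m + 1)) : ℤ)) := by
  have hear := T.val_of_ear hw
  have key : ∀ k : ℕ, 1 ≤ k → k ≤ m →
      (triCount T ((k + w.val : ℤ) : ZMod (m + 1)) : ℤ) =
        triCount (T.contract hw) ((k + (w.val - 1 : ℤ) : ℤ) : ZMod m) +
          if k = m ∨ k = 1 then 1 else 0 := by
    intro k hk₁ hk
    have h₁ : ((k + w.val : ℤ) : ZMod (m + 1)) = w + k := by push_cast; simp [add_comm]
    have h₂ : ((k + (w.val - 1 : ℤ) : ℤ) : ZMod m) = ((w.val + (k - 1) : ℕ) : ZMod m) := by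
      rw [← Int.cast_natCast]; push_cast [Nat.cast_sub hk₁]; ring
    rw [h₁, h₂, T.triCount_add_natCast hw hk₁ hk]; push_cast; rfl
  refine ⟨fun k => ?_, ?_, ?_, ?_, fun k hk₁ hk => ?_⟩
  · congr 2
    rw [add_right_comm, Int.cast_add _ ((m + 1 : ℕ) : ℤ), Int.cast_natCast, ZMod.natCast_self,
      add_zero]
  · simpa using T.triCount_self hw
  · simpa using key 1 le_rfl (by omega)
  · simpa [show m ≠ 1 by omega] using key m (by omega) le_rfl
  · obtain ⟨k, rfl⟩ : ∃ k' : ℕ, k = k' := ⟨k.toNat, by omega⟩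
    simpa [show k ≠ 1 by omega, show k ≠ m by omega] using key k (by omega) (by omega)

end PolygonTriangulation

lemma PolygonTriangulation.triCount_eq_one (T : PolygonTriangulation 3) (v : ZMod 3) : triCount T v = 1 := by
  have htri : triangles T = {Finset.univ} := by
    ext s
    rw [mem_triangles_iff, Finset.mem_singleton]
    constructor
    · exact fun ⟨hc, _⟩ => Finset.eq_univ_of_card s hc
    · rintro rfl
      refine ⟨rfl, fun i _ j _ hij => .inr (.inr ?_)⟩
      revert i j; decide
  rw [triCount, htri, Finset.filter_singleton, if_pos (Finset.mem_univ v), Finset.card_singleton]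

lemma isConwayCoxeter_three_const_one : IsConwayCoxeter 3 fun _ => 1 where
  periodic _ := rfl
  matProd_window _ := matProd_one_one_one
  continuant_pos _ _ h₁ h₂ := by omega

theorem isConwayCoxeter_triCount {n : ℕ} (hn : 3 ≤ n) :
    ∀ [NeZero n] (T : PolygonTriangulation n), IsConwayCoxeter n fun i : ℤ => (triCount T i : ℤ) := by
  induction n, hn using Nat.le_induction with
  | base => intro _ T; simpa [PolygonTriangulation.triCount_eq_one] using isConwayCoxeter_three_const_one
  | succ m hm ih =>
    intro _ T
    have : NeZero m := ⟨by omega⟩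
    obtain ⟨w, hw⟩ := T.exists_ear_tip (by omega)
    have hrot := ((ih (T.contract hw)).comp_add_const (w.val - 1)).of_isGlueTriangle
      (T.isGlueTriangle_triCount hw) hm
    simpa using hrot.comp_add_const (-w.val)

/-- The incidence counts of triangles at the vertices of a triangulated convex `n`-gon form
the quiddity sequence of a closed integral frieze pattern of order `n`. -/
theorem triangulation_gives_quiddity (n : ℕ) [NeZero n] (hn : 3 ≤ n)
    (T : PolygonTriangulation n) :
    IsQuiddity n (fun v => (triCount T v : ℤ)) :=
  ⟨_, (isConwayCoxeter_triCount hn T).isClosedFrieze hn,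
    fun i => conwayCoxeterFrieze_add_two (by omega) _ i⟩
end

section
/- If (a_1, ..., a_n) is the quiddity sequence of a closed integral frieze pattern of order n, then for any index i, the sequence (a_1, ..., a_{i-1}, a_i + 1, 1, a_{i+1} + 1, a_{i+2}, ..., a_n) obtained by inserting a 1 between positions i and i+1 and increasing both neighbors by 1 is the quiddity sequence of a closed integral frieze pattern of order n+1. -/
/-- `q : ℤ → ℤ` is the (n-periodic) quiddity sequence of a closed integral frieze of order `n`. -/
def IsQuiddityZ (n : ℕ) (q : ℤ → ℤ) : Prop :=
  (∀ i : ℤ, q (i + n) = q i) ∧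
  ∃ a : ℤ → ℤ → ℤ, IsClosedFrieze n a ∧ ∀ i : ℤ, a i (i + 2) = q i

/-!
A closed frieze of order `n` extends, through the antiperiodicity `a x (y + n) = -a x y`, to an
SL₂-tiling of the plane: an integer array all of whose adjacent `2 × 2` minors equal `1`. Its
`2 × 2` blocks on the diagonal are `J = !![0, 1; -1, 0]`, those at distance `n` are `-J`.
Gluing a triangle onto an edge of the polygon inserts, once per period `n + 1`, a row and a column
that are the sums of their two neighbours. On two adjacent rows (or columns) this is a unimodular
change of basis `M`, so the new array is again an SL₂-tiling, and its blocks on the diagonal and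
at distance `n + 1` are `M (±J) Mᵀ = ±J`. Cut down to the band of width `n + 1`, it is therefore a
closed frieze of order `n + 1`: its interior entries are sums of old entries, hence positive, and
its first nontrivial row is the glued quiddity sequence.
-/

open Matrix

theorem Int.add_one_ediv {a b : ℤ} (hb : 0 < b) :
    (a + 1) / b = a / b + if b ∣ a + 1 then 1 else 0 := by
  have hdiv := Int.emod_add_mul_ediv a b
  have hr0 := Int.emod_nonneg a hb.ne'
  have hrb := Int.emod_lt_of_pos a hb
  generalize a % b = r at hdiv hr0 hrb
  rcases (Int.add_one_le_iff.2 hrb).eq_or_lt with hr | hr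
  · obtain ⟨hq, hm⟩ := (Int.ediv_emod_unique hb).2
      ⟨(by linear_combination hdiv - hr : 0 + b * (a / b + 1) = a + 1), le_rfl, hb⟩
    rw [if_pos (Int.dvd_of_emod_eq_zero hm), hq]
  · obtain ⟨hq, hm⟩ := (Int.ediv_emod_unique hb).2
      ⟨(by linear_combination hdiv : r + 1 + b * (a / b) = a + 1), by omega, hr⟩
    rw [if_neg (by rw [Int.dvd_iff_emod_eq_zero, hm]; omega), hq, add_zero]

theorem Int.not_dvd_of_dvd_of_lt_of_lt {N a b : ℤ} (ha : N ∣ a) (hab : a < b)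
    (hbN : b < a + N) : ¬N ∣ b := fun hb => by
  have := Int.le_of_dvd (by omega) (Int.dvd_sub hb ha)
  omega

theorem Int.dvd_iff_eq_zero_of_lt {N d : ℤ} (h1 : -N < d) (h2 : d < N) : N ∣ d ↔ d = 0 :=
  ⟨fun h => Int.eq_zero_of_abs_lt_dvd h (abs_lt.2 ⟨h1, h2⟩), fun h => h ▸ dvd_zero N⟩

theorem Function.Periodic.eq_of_eqOn_Ico {α : Type*} {f g : ℤ → α} {c : ℤ}
    (hf : Function.Periodic f c) (hg : Function.Periodic g c) (hc : 0 < c) (a : ℤ)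
    (h : Set.EqOn f g (Set.Ico a (a + c))) : f = g := by
  funext k
  rw [← hf.sub_int_mul_eq ((k - a) / c), ← hg.sub_int_mul_eq ((k - a) / c), Int.cast_id,
    show k - (k - a) / c * c = a + (k - a) % c by rw [Int.emod_def]; ring]
  exact h ⟨by linarith [Int.emod_nonneg (k - a) hc.ne'],
    by linarith [Int.emod_lt_of_pos (k - a) hc]⟩

theorem mul_J_mul_transpose (M : Matrix (Fin 2) (Fin 2) ℤ) :
    M * !![0, 1; -1, 0] * Mᵀ = M.det • !![0, 1; -1, 0] := by
  ext i j
  fin_cases i <;> fin_cases j <;>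
    simp [det_fin_two, Matrix.mul_apply, Fin.sum_univ_two] <;> ring

def adjBlock (t : ℤ → ℤ → ℤ) (x y : ℤ) : Matrix (Fin 2) (Fin 2) ℤ :=
  !![t x y, t x (y + 1); t (x + 1) y, t (x + 1) (y + 1)]

def IsSL2Tiling (t : ℤ → ℤ → ℤ) : Prop :=
  ∀ x y, (adjBlock t x y).det = 1

def bandTruncation (N : ℕ) (t : ℤ → ℤ → ℤ) (k l : ℤ) : ℤ :=
  if k ≤ l ∧ l ≤ k + N then t k l else 0

theorem IsClosedFrieze.of_isSL2Tiling {N : ℕ} {t : ℤ → ℤ → ℤ} (hN : 0 < N)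
    (ht : IsSL2Tiling t) (h0 : ∀ k, t k k = 0) (h1 : ∀ k, t k (k + 1) = 1)
    (hN1 : ∀ k, t k (k + N - 1) = 1) (hN0 : ∀ k, t k (k + N) = 0)
    (hpos : ∀ k l : ℤ, k + 2 ≤ l → l ≤ k + N - 2 → 0 < t k l) :
    IsClosedFrieze N (bandTruncation N t) := by
  have inBand : ∀ {k l : ℤ}, k ≤ l → l ≤ k + N → bandTruncation N t k l = t k l :=
    fun h h' => if_pos ⟨h, h'⟩
  have outBand : ∀ {k l : ℤ}, ¬(k ≤ l ∧ l ≤ k + N) → bandTruncation N t k l = 0 :=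
    fun h => if_neg h
  refine ⟨fun k => ?_, fun k => ?_, fun k => ?_, fun k => ?_, fun k l hl hr => ?_,
    fun k l hl hr => ?_, fun k l h => outBand (by omega), fun k l h => outBand (by omega)⟩
  · rw [inBand le_rfl (by omega), h0]
  · rw [inBand (by omega) (by omega), h1]
  · rw [inBand (by omega) (by omega), hN1]
  · rw [inBand (by omega) le_rfl, hN0]
  · rw [inBand (by omega) (by omega)]
    exact hpos k l hl hr
  · rw [inBand (by omega) (by omega), inBand (by omega) (by omega), inBand (by omega) (by omega),
      inBand (by omega) (by omega)]
    simpa [adjBlock, det_fin_two] using ht k l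

namespace IsClosedFrieze

variable {n : ℕ} {a : ℤ → ℤ → ℤ}

theorem two_le (ha : IsClosedFrieze n a) : 2 ≤ n := by
  obtain ⟨h00, -, hrow1, -, -, -, hlo, -⟩ := ha
  by_contra! h
  interval_cases n
  · simpa [hlo 0 (-1) (by norm_num)] using hrow1 0
  · simpa [h00] using hrow1 0

theorem pos_s4 (ha : IsClosedFrieze n a) {x y : ℤ} (h1 : x < y) (h2 : y < x + n) : 0 < a x y := by
  obtain ⟨-, h01, hrow1, -, hpos, -, -, -⟩ := ha
  rcases (by omega : y = x + 1 ∨ (x + 2 ≤ y ∧ y ≤ x + n - 2) ∨ y = x + n - 1)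
    with h | h | h
  · simp [h, h01]
  · exact hpos x y h.1 h.2
  · simp [h, hrow1]

theorem nonneg (ha : IsClosedFrieze n a) {x y : ℤ} (h1 : x ≤ y) (h2 : y ≤ x + n) :
    0 ≤ a x y := by
  have ⟨h00, _, _, hrow0, _⟩ := ha
  rcases (by omega : y = x ∨ (x < y ∧ y < x + n) ∨ y = x + n) with rfl | h | rfl
  · rw [h00]
  · exact (ha.pos_s4 h.1 h.2).le
  · rw [hrow0]

end IsClosedFrieze

def antiperiodicExtension (n : ℕ) (a : ℤ → ℤ → ℤ) (x y : ℤ) : ℤ :=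
  ((y - x) / n).negOnePow * a x (x + (y - x) % n)

section AntiperiodicExtension

variable {n : ℕ} {a : ℤ → ℤ → ℤ}

theorem antiperiodicExtension_add_order (hn : n ≠ 0) (x y : ℤ) :
    antiperiodicExtension n a x (y + n) = -antiperiodicExtension n a x y := by
  have hn' : (n : ℤ) ≠ 0 := by exact_mod_cast hn
  simp only [antiperiodicExtension, show y + n - x = y - x + 1 * n by ring,
    Int.add_mul_ediv_right _ _ hn', Int.add_mul_emod_self_right, Int.negOnePow_succ,
    Units.val_neg, neg_mul]

theorem adjBlock_antiperiodicExtension_add_order (hn : n ≠ 0) (x y : ℤ) :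
    adjBlock (antiperiodicExtension n a) x (y + n) =
      -adjBlock (antiperiodicExtension n a) x y := by
  simp only [adjBlock, show y + n + 1 = y + 1 + n by ring, antiperiodicExtension_add_order hn]
  ext i j
  fin_cases i <;> fin_cases j <;> rfl

namespace IsClosedFrieze

theorem antiperiodicExtension_eq (ha : IsClosedFrieze n a) {x y : ℤ} (h1 : x ≤ y)
    (h2 : y ≤ x + n) : antiperiodicExtension n a x y = a x y := by
  have ⟨h00, _, _, hrow0, _⟩ := ha
  have hn : 0 < (n : ℤ) := by have := ha.two_le; omega
  have below : ∀ y, x ≤ y → y < x + n → antiperiodicExtension n a x y = a x y :=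
    fun y h1 h2 => by
      simp [antiperiodicExtension,
        Int.ediv_eq_zero_of_lt (by omega : 0 ≤ y - x) (by omega : y - x < n),
        Int.emod_eq_of_lt (by omega : 0 ≤ y - x) (by omega : y - x < n)]
  rcases h2.lt_or_eq with h | rfl
  · exact below y h1 h
  · rw [antiperiodicExtension_add_order (by omega), below x le_rfl (by omega), h00, hrow0,
      neg_zero]

theorem adjBlock_antiperiodicExtension_self (ha : IsClosedFrieze n a) (x : ℤ) :
    adjBlock (antiperiodicExtension n a) x x = !![0, 1; -1, 0] := by
  have ⟨h00, h01, hrow1, _⟩ := ha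
  have hn : 2 ≤ n := ha.two_le
  have hback : antiperiodicExtension n a (x + 1) x = -1 := by
    rw [← neg_neg (antiperiodicExtension n a (x + 1) x),
      ← antiperiodicExtension_add_order (by omega),
      ha.antiperiodicExtension_eq (by omega) (by omega), show x + n = x + 1 + n - 1 by ring, hrow1]
  simp only [adjBlock, hback, ha.antiperiodicExtension_eq (le_refl x) (by omega),
    ha.antiperiodicExtension_eq (le_refl (x + 1)) (by omega),
    ha.antiperiodicExtension_eq (by omega : x ≤ x + 1) (by omega), h00, h01]

theorem isSL2Tiling_antiperiodicExtension (ha : IsClosedFrieze n a) :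
    IsSL2Tiling (antiperiodicExtension n a) := by
  have ⟨_, _, _, _, _, hdiamond, _⟩ := ha
  intro x
  have hn : (2 : ℤ) ≤ n := by exact_mod_cast ha.two_le
  have hper : Function.Periodic (fun y => (adjBlock (antiperiodicExtension n a) x y).det) n :=
    fun y => by simp [adjBlock_antiperiodicExtension_add_order (by omega : n ≠ 0), det_neg]
  refine congrFun (hper.eq_of_eqOn_Ico (g := fun _ => 1) (fun _ => rfl) (by omega) x ?_)
  rintro y ⟨hxy, hyx⟩
  rcases hxy.eq_or_lt with rfl | hxy
  · simp [ha.adjBlock_antiperiodicExtension_self, det_fin_two]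
  · simp only [adjBlock, det_fin_two_of]
    rw [ha.antiperiodicExtension_eq (by omega) (by omega),
      ha.antiperiodicExtension_eq (by omega) (by omega),
      ha.antiperiodicExtension_eq (by omega) (by omega),
      ha.antiperiodicExtension_eq (by omega) (by omega)]
    exact hdiamond x y (by omega) (by omega)

end IsClosedFrieze

end AntiperiodicExtension

section Glue

variable (n : ℕ) (v : ℤ)

/- The new indices `k ≡ v (mod n + 1)` are the inserted vertex. Row `k` of the glued array is
row `glueIndex k` of the old one, plus row `glueIndex k + 1` when `k` is inserted; likewise for
columns. -/
def glueIndex (k : ℤ) : ℤ :=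
  k - 1 - (k - v) / (n + 1)

def glueRow (f : ℤ → ℤ) (k : ℤ) : ℤ :=
  f (glueIndex n v k) + if (n + 1 : ℤ) ∣ k - v then f (glueIndex n v k + 1) else 0

def glueTiling (t : ℤ → ℤ → ℤ) (k l : ℤ) : ℤ :=
  glueRow n v (fun x => glueRow n v (t x) l) k

/- The entry `(k, k + 2)` belongs to vertex `k + 1`, so the inserted vertex `v` carries the
value `1` at `k ≡ v - 1`. -/
def glueQuiddity (q : ℤ → ℤ) (k : ℤ) : ℤ :=
  if (n + 1 : ℤ) ∣ k + 1 - v then 1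
  else
    q (glueIndex n v k) + if (n + 1 : ℤ) ∣ k - v ∨ (n + 1 : ℤ) ∣ k + 2 - v then 1 else 0

def glueStep (k : ℤ) : Matrix (Fin 2) (Fin 2) ℤ :=
  if (n + 1 : ℤ) ∣ k - v then !![1, 1; 0, 1]
  else if (n + 1 : ℤ) ∣ k + 1 - v then !![1, 0; 1, 1] else 1

variable {n v}

theorem glueIndex_add_one (k : ℤ) :
    glueIndex n v (k + 1) = glueIndex n v k + if (n + 1 : ℤ) ∣ k + 1 - v then 0 else 1 := by
  simp only [glueIndex, show k + 1 - v = k - v + 1 by ring,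
    Int.add_one_ediv (by positivity : (0 : ℤ) < n + 1)]
  split_ifs <;> ring

theorem glueIndex_add_period (k : ℤ) : glueIndex n v (k + (n + 1)) = glueIndex n v k + n := by
  simp only [glueIndex, show k + (n + 1) - v = k - v + 1 * (n + 1) by ring,
    Int.add_mul_ediv_right _ _ (by positivity : (n + 1 : ℤ) ≠ 0)]
  ring

theorem glueIndex_sub_glueIndex {k l : ℤ} (hkl : k ≤ l) (hlk : l ≤ k + (n + 1)) :
    l - k - 1 ≤ glueIndex n v l - glueIndex n v k ∧
      glueIndex n v l - glueIndex n v k ≤ l - k := by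
  have hN : (0 : ℤ) < n + 1 := by positivity
  have hmono := Int.ediv_le_ediv hN (by omega : k - v ≤ l - v)
  have hstep := Int.ediv_le_ediv hN (by omega : l - v ≤ k - v + 1 * (n + 1))
  rw [Int.add_mul_ediv_right _ _ hN.ne'] at hstep
  simp only [glueIndex]
  constructor <;> linarith

theorem glueRow_eq_and_glueRow_add_one_eq (hn : 0 < n) (f : ℤ → ℤ) (k : ℤ) :
    glueRow n v f k = glueStep n v k 0 0 * f (glueIndex n v k) +
        glueStep n v k 0 1 * f (glueIndex n v k + 1) ∧
      glueRow n v f (k + 1) = glueStep n v k 1 0 * f (glueIndex n v k) +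
        glueStep n v k 1 1 * f (glueIndex n v k + 1) := by
  simp only [glueRow, glueStep, glueIndex_add_one]
  by_cases hk : (n + 1 : ℤ) ∣ k - v
  · have hk1 := Int.not_dvd_of_dvd_of_lt_of_lt hk (by omega : k - v < k + 1 - v) (by omega)
    simp [hk, hk1]
  · by_cases hk1 : (n + 1 : ℤ) ∣ k + 1 - v <;> simp [hk, hk1]

theorem adjBlock_glueTiling (hn : 0 < n) (t : ℤ → ℤ → ℤ) (k l : ℤ) :
    adjBlock (glueTiling n v t) k l =
      glueStep n v k * adjBlock t (glueIndex n v k) (glueIndex n v l) * (glueStep n v l)ᵀ := by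
  have hk := fun f => glueRow_eq_and_glueRow_add_one_eq (v := v) hn f k
  have hl := fun f => glueRow_eq_and_glueRow_add_one_eq (v := v) hn f l
  simp only [adjBlock, glueTiling, hk, hl]
  ext i j
  fin_cases i <;> fin_cases j <;> simp [Matrix.mul_apply, Fin.sum_univ_two] <;> ring

theorem det_glueStep (k : ℤ) : (glueStep n v k).det = 1 := by
  unfold glueStep
  split_ifs <;> simp [det_fin_two]

theorem glueStep_add_period (k : ℤ) : glueStep n v (k + (n + 1)) = glueStep n v k := by
  simp only [glueStep, show k + (n + 1) - v = k - v + (n + 1) by ring,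
    show k + (n + 1) + 1 - v = k + 1 - v + (n + 1) by ring, dvd_add_self_right]

theorem isSL2Tiling_glueTiling (hn : 0 < n) {t : ℤ → ℤ → ℤ} (ht : IsSL2Tiling t) :
    IsSL2Tiling (glueTiling n v t) := fun k l => by
  rw [adjBlock_glueTiling hn, det_mul, det_mul, det_transpose, det_glueStep, det_glueStep, ht,
    mul_one, mul_one]

theorem adjBlock_glueTiling_self (hn : 0 < n) {t : ℤ → ℤ → ℤ}
    (ht : ∀ x, adjBlock t x x = !![0, 1; -1, 0]) (k : ℤ) :
    adjBlock (glueTiling n v t) k k = !![0, 1; -1, 0] := by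
  rw [adjBlock_glueTiling hn, ht, mul_J_mul_transpose, det_glueStep, one_smul]

theorem adjBlock_glueTiling_add_period (hn : 0 < n) {t : ℤ → ℤ → ℤ}
    (ht : ∀ x, adjBlock t x (x + n) = -!![0, 1; -1, 0]) (k : ℤ) :
    adjBlock (glueTiling n v t) k (k + (n + 1)) = -!![0, 1; -1, 0] := by
  rw [adjBlock_glueTiling hn, glueIndex_add_period, glueStep_add_period, ht, Matrix.mul_neg,
    Matrix.neg_mul, mul_J_mul_transpose, det_glueStep, one_smul]

theorem glueTiling_pos {t : ℤ → ℤ → ℤ}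
    (hpos : ∀ x y : ℤ, x < y → y < x + n → 0 < t x y)
    (hnonneg : ∀ x y : ℤ, x ≤ y → y ≤ x + n → 0 ≤ t x y) {k l : ℤ}
    (hkl : k + 2 ≤ l) (hlk : l ≤ k + n - 1) : 0 < glueTiling n v t k l := by
  obtain ⟨hlo, hhi⟩ :=
    glueIndex_sub_glueIndex (v := v) (by omega : k ≤ l) (by omega : l ≤ k + (n + 1))
  have h00 := hpos (glueIndex n v k) (glueIndex n v l) (by omega) (by omega)
  have h01 := hnonneg (glueIndex n v k) (glueIndex n v l + 1) (by omega) (by omega)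
  have h10 := hnonneg (glueIndex n v k + 1) (glueIndex n v l) (by omega) (by omega)
  have h11 := hnonneg (glueIndex n v k + 1) (glueIndex n v l + 1) (by omega) (by omega)
  simp only [glueTiling, glueRow]
  split_ifs <;> linarith

theorem glueTiling_add_two (hn : 2 ≤ n) {t : ℤ → ℤ → ℤ} {q : ℤ → ℤ}
    (h1 : ∀ x, t x (x + 1) = 1) (h2 : ∀ x, t x (x + 2) = q x) (k : ℤ) :
    glueTiling n v t k (k + 2) = glueQuiddity n v q k := by
  have e1 := glueIndex_add_one (n := n) (v := v) k
  have e2 := glueIndex_add_one (n := n) (v := v) (k + 1)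
  rw [show k + 1 + 1 = k + 2 by ring] at e2
  simp only [glueTiling, glueRow, glueQuiddity]
  by_cases hk : (n + 1 : ℤ) ∣ k - v
  · have hk1 := Int.not_dvd_of_dvd_of_lt_of_lt hk (by omega : k - v < k + 1 - v) (by omega)
    have hk2 := Int.not_dvd_of_dvd_of_lt_of_lt hk (by omega : k - v < k + 2 - v) (by omega)
    simp only [hk, hk1, hk2, if_false, if_true, true_or] at e1 e2 ⊢
    rw [e2, e1, add_zero, add_zero]
    generalize glueIndex n v k = x
    rw [h1 (x + 1), add_assoc x 1 1, one_add_one_eq_two, h2]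
  by_cases hk1 : (n + 1 : ℤ) ∣ k + 1 - v
  · have hk2 := Int.not_dvd_of_dvd_of_lt_of_lt hk1 (by omega : k + 1 - v < k + 2 - v) (by omega)
    simp only [hk, hk1, hk2, if_false, if_true] at e1 e2 ⊢
    rw [e2, e1]
    simp [h1]
  by_cases hk2 : (n + 1 : ℤ) ∣ k + 2 - v
  · simp only [hk, hk1, hk2, if_false, if_true, or_true] at e1 e2 ⊢
    rw [e2, e1, add_zero, add_zero]
    generalize glueIndex n v k = x
    rw [h1, add_assoc x 1 1, one_add_one_eq_two, h2, add_comm]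
  · simp only [hk, hk1, hk2, if_false, or_false] at e1 e2 ⊢
    rw [e2, e1, add_zero, add_zero, add_zero, add_assoc, one_add_one_eq_two, h2]

theorem glueQuiddity_periodic {q : ℤ → ℤ} (hq : Function.Periodic q n) :
    Function.Periodic (glueQuiddity n v q) (n + 1) := fun k => by
  simp only [glueQuiddity, glueIndex_add_period, hq _,
    show k + (n + 1) - v = k - v + (n + 1) by ring,
    show k + (n + 1) + 1 - v = k + 1 - v + (n + 1) by ring,
    show k + (n + 1) + 2 - v = k + 2 - v + (n + 1) by ring, dvd_add_self_right]

theorem glueIndex_eq_sub_one {k : ℤ} (h1 : v ≤ k) (h2 : k < v + (n + 1)) :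
    glueIndex n v k = k - 1 := by
  simp [glueIndex, Int.ediv_eq_zero_of_lt (by omega : 0 ≤ k - v) (by omega : k - v < n + 1)]

theorem glueIndex_eq_self {k : ℤ} (h1 : v ≤ k + (n + 1)) (h2 : k < v) :
    glueIndex n v k = k := by
  have := glueIndex_add_period (n := n) (v := v) k
  rw [glueIndex_eq_sub_one (by omega) (by omega)] at this
  omega

theorem glueQuiddity_eqOn (hn : 2 ≤ n) {q q' : ℤ → ℤ} {i : ℤ}
    (h0 : q' i = q i + 1) (h1 : q' (i + 1) = 1) (h2 : q' (i + 2) = q (i + 1) + 1)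
    (h3 : ∀ j, i + 3 ≤ j → j ≤ i + n → q' j = q (j - 1)) :
    Set.EqOn (glueQuiddity n (i + 2) q) q' (Set.Ico i (i + (n + 1))) := by
  rintro k ⟨hik, hki⟩
  have hdvd : ∀ d : ℤ, -(n + 1 : ℤ) < d → d < n + 1 → ((n + 1 : ℤ) ∣ d ↔ d = 0) :=
    fun _ => Int.dvd_iff_eq_zero_of_lt
  simp only [glueQuiddity, hdvd (k + 1 - (i + 2)) (by omega) (by omega),
    hdvd (k - (i + 2)) (by omega) (by omega), hdvd (k + 2 - (i + 2)) (by omega) (by omega)]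
  rcases (by omega : k = i ∨ k = i + 1 ∨ k = i + 2 ∨ i + 3 ≤ k) with rfl | rfl | rfl | hk
  · rw [if_neg (by omega), if_pos (by omega), glueIndex_eq_self (by omega) (by omega), h0]
  · rw [if_pos (by omega), h1]
  · rw [if_neg (by omega), if_pos (by omega), glueIndex_eq_sub_one (by omega) (by omega),
      show i + 2 - 1 = i + 1 by ring, h2]
  · rw [if_neg (by omega), if_neg (by omega), add_zero,
      glueIndex_eq_sub_one (by omega) (by omega), h3 k hk (by omega)]

end Glue

theorem IsClosedFrieze.glue {n : ℕ} {a : ℤ → ℤ → ℤ} (ha : IsClosedFrieze n a)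
    (v : ℤ) :
    IsClosedFrieze (n + 1)
      (bandTruncation (n + 1) (glueTiling n v (antiperiodicExtension n a))) := by
  have hn := ha.two_le
  have hself := adjBlock_glueTiling_self (n := n) (v := v) (by omega)
    ha.adjBlock_antiperiodicExtension_self
  have hperiod := adjBlock_glueTiling_add_period (n := n) (v := v) (by omega) fun x => by
    rw [adjBlock_antiperiodicExtension_add_order (by omega), ha.adjBlock_antiperiodicExtension_self]
  refine of_isSL2Tiling (by omega)
    (isSL2Tiling_glueTiling (by omega) ha.isSL2Tiling_antiperiodicExtension)
    (fun k => by simpa [adjBlock] using congrFun₂ (hself k) 0 0)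
    (fun k => by simpa [adjBlock] using congrFun₂ (hself k) 0 1)
    (fun k => by simpa [adjBlock, add_sub_assoc] using congrFun₂ (hperiod (k - 1)) 1 0)
    (fun k => by simpa [adjBlock] using congrFun₂ (hperiod k) 0 0)
    (fun k l hkl hlk => glueTiling_pos
      (fun x y h1 h2 => ha.antiperiodicExtension_eq h1.le h2.le ▸ ha.pos_s4 h1 h2)
      (fun x y h1 h2 => ha.antiperiodicExtension_eq h1 h2 ▸ ha.nonneg h1 h2) hkl (by omega))

theorem quiddity_glue_general (n : ℕ) (q : ℤ → ℤ) (hq : IsQuiddityZ n q) (i : ℤ)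
    (q' : ℤ → ℤ)
    (hper : ∀ j : ℤ, q' (j + (n + 1 : ℕ)) = q' j)
    (h0 : q' i = q i + 1)
    (h1 : q' (i + 1) = 1)
    (h2 : q' (i + 2) = q (i + 1) + 1)
    (h3 : ∀ j : ℤ, i + 3 ≤ j → j ≤ i + n → q' j = q (j - 1)) :
    IsQuiddityZ (n + 1) q' := by
  obtain ⟨hqper, a, ha, hqa⟩ := hq
  have hn := ha.two_le
  have hext : ∀ x y : ℤ, x ≤ y → y ≤ x + n → antiperiodicExtension n a x y = a x y :=
    fun _ _ => ha.antiperiodicExtension_eq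
  have hq' : glueQuiddity n (i + 2) q = q' :=
    (glueQuiddity_periodic hqper).eq_of_eqOn_Ico (by exact_mod_cast hper) (by positivity) i
      (glueQuiddity_eqOn hn h0 h1 h2 h3)
  refine ⟨hper, _, ha.glue (i + 2), fun k => ?_⟩
  rw [bandTruncation, if_pos (by omega), ← hq']
  exact glueTiling_add_two hn (fun x => (hext x _ (by omega) (by omega)).trans (ha.2.1 x))
    (fun x => (hext x _ (by omega) (by omega)).trans (hqa x)) k

/-- Gluing: inserting a 1 between positions `i` and `i+1` of a quiddity sequence of order `n`
and increasing both neighbours by 1 yields a quiddity sequence of order `n + 1`. -/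
theorem quiddity_glue (n : ℕ) (hn : 4 ≤ n) (q : ℤ → ℤ) (hq : IsQuiddityZ n q) (i : ℤ)
    (q' : ℤ → ℤ)
    (hper : ∀ j : ℤ, q' (j + (n + 1 : ℕ)) = q' j)
    (h0 : q' i = q i + 1)
    (h1 : q' (i + 1) = 1)
    (h2 : q' (i + 2) = q (i + 1) + 1)
    (h3 : ∀ j : ℤ, i + 3 ≤ j → j ≤ i + n → q' j = q (j - 1)) :
    IsQuiddityZ (n + 1) q' :=
  quiddity_glue_general n q hq i q' hper h0 h1 h2 h3
end

section
/- If (a_1, ..., a_{i-1}, 1, a_{i+1}, ..., a_n) is the quiddity sequence of a closed integral frieze pattern of order n ≥ 5 with the entry at position i equal to 1, then (a_1, ..., a_{i-1} - 1, a_{i+1} - 1, ..., a_n) (removing the 1 and decreasing both cyclic neighbors by 1) is the quiddity sequence of a closed integral frieze pattern of order n-1. -/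
theorem Function.Periodic.eq_of_modEq {α : Type*} {f : ℤ → α} {c x y : ℤ}
    (hf : Function.Periodic f c) (h : x ≡ y [ZMOD c]) : f x = f y := by
  obtain ⟨t, ht⟩ := h.dvd
  rw [show y = x + t * c by linear_combination ht]
  simpa using (hf.int_mul t x).symm

theorem Int.exists_eq_add_mul_of_le_of_le (c k : ℤ) {m : ℤ} (hm : 0 < m) :
    ∃ k₀ t : ℤ, c ≤ k₀ ∧ k₀ ≤ c + m - 1 ∧ k = k₀ + t * m := by
  refine ⟨c + (k - c) % m, (k - c) / m, by linarith [Int.emod_nonneg (k - c) hm.ne'],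
    by linarith [Int.emod_lt_of_pos (k - c) hm], ?_⟩
  linarith [Int.mul_ediv_add_emod (k - c) m]

namespace IsClosedFrieze

variable {n : ℕ} {a : ℤ → ℤ → ℤ}

theorem pos_of_lt_of_lt (hF : IsClosedFrieze n a) {p r : ℤ} (h₁ : p < r) (h₂ : r < p + n) :
    0 < a p r := by
  obtain ⟨-, h1, hlast, -, hpos, -⟩ := hF
  obtain rfl | rfl | hr : r = p + 1 ∨ r = p + n - 1 ∨ (p + 2 ≤ r ∧ r ≤ p + n - 2) := by omega
  · simp [h1]
  · simp [hlast]
  · exact hpos p r hr.1 hr.2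

theorem diamond (hF : IsClosedFrieze n a) {p r : ℤ} (h₁ : p + 1 ≤ r) (h₂ : r ≤ p + n - 1) :
    a p r * a (p + 1) (r + 1) - a p (r + 1) * a (p + 1) r = 1 :=
  hF.2.2.2.2.2.1 p r h₁ h₂

theorem reflect (hF : IsClosedFrieze n a) : IsClosedFrieze n (fun p r => a (-r) (-p)) := by
  obtain ⟨h0, h1, hlast, hend, hpos, hdia, hlow, hhigh⟩ := hF
  refine ⟨fun p => h0 _, fun p => ?_, fun p => ?_, fun p => ?_,
    fun p r h₁ h₂ => hpos _ _ (by omega) (by omega), fun p r h₁ h₂ => ?_,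
    fun p r h => hlow _ _ (by omega), fun p r h => hhigh _ _ (by omega)⟩
  · convert h1 (-(p + 1)) using 2; ring
  · convert hlast (-(p + n - 1)) using 2; ring
  · convert hend (-(p + n)) using 2; ring
  · have h := hdia (-r - 1) (-p - 1) (by omega) (by omega)
    simp only [sub_add_cancel] at h
    simp only [neg_add']
    linear_combination h

theorem col_recurrence (hF : IsClosedFrieze n a) {s p : ℤ} (hp : s + 2 - n ≤ p) (hps : p ≤ s) :
    a p s + a p (s + 2) = a s (s + 2) * a p (s + 1) := by
  induction p, hps using Int.leInductionDown with
  | base => rw [hF.1, hF.2.1]; ring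
  | pred p hps ih =>
    -- the diamonds at `(p - 1, s)` and `(p - 1, s + 1)` carry the recurrence from row `p` to
    -- row `p - 1`, after cancelling the positive entry `a p (s + 1)`
    have D₁ := hF.diamond (p := p - 1) (r := s) (by omega) (by omega)
    have D₂ := hF.diamond (p := p - 1) (r := s + 1) (by omega) (by omega)
    rw [sub_add_cancel] at D₁
    rw [sub_add_cancel, add_assoc s 1 1, one_add_one_eq_two] at D₂
    refine mul_left_cancel₀ (hF.pos_of_lt_of_lt (p := p) (r := s + 1) (by omega) (by omega)).ne' ?_
    linear_combination D₁ - D₂ + a (p - 1) (s + 1) * ih (by omega)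

theorem row_recurrence (hF : IsClosedFrieze n a) {s r : ℤ} (hr : s + 2 ≤ r) (hrs : r ≤ s + n) :
    a s r + a (s + 2) r = a s (s + 2) * a (s + 1) r := by
  have h := hF.reflect.col_recurrence (s := -(s + 2)) (p := -r) (by omega) (by omega)
  simp only [neg_neg] at h
  rw [show -(-(s + 2) + 2) = s by ring, show -(-(s + 2) + 1) = s + 1 by ring] at h
  linear_combination h

theorem diamond_skip_col (hF : IsClosedFrieze n a) {p s : ℤ} (hs : a s (s + 2) = 1)
    (h₁ : p + 1 ≤ s) (h₂ : s ≤ p + n - 2) :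
    a p s * a (p + 1) (s + 2) - a p (s + 2) * a (p + 1) s = 1 := by
  have D := hF.diamond h₁ (by omega)
  have A₁ := hF.col_recurrence (s := s) (p := p) (by omega) (by omega)
  have A₂ := hF.col_recurrence (s := s) (p := p + 1) (by omega) (by omega)
  rw [hs, one_mul] at A₁ A₂
  linear_combination D + a p s * A₂ - a (p + 1) s * A₁

theorem diamond_skip_row (hF : IsClosedFrieze n a) {s r : ℤ} (hs : a s (s + 2) = 1)
    (h₁ : s + 2 ≤ r) (h₂ : r ≤ s + n - 1) :
    a s r * a (s + 2) (r + 1) - a s (r + 1) * a (s + 2) r = 1 := by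
  have D := hF.diamond (by omega) h₂
  have B₁ := hF.row_recurrence (s := s) (r := r) h₁ (by omega)
  have B₂ := hF.row_recurrence (s := s) (r := r + 1) (by omega) (by omega)
  rw [hs, one_mul] at B₁ B₂
  linear_combination D + a s r * B₂ - a s (r + 1) * B₁

theorem add_three_of_quiddity_eq_one (hF : IsClosedFrieze n a) (hn : 3 ≤ n) {s : ℤ}
    (hs : a s (s + 2) = 1) : a s (s + 3) = a (s + 1) (s + 3) - 1 := by
  have h := hF.row_recurrence (s := s) (r := s + 3) (by omega) (by omega)
  have h1 : a (s + 2) (s + 3) = 1 := by simpa [add_assoc] using hF.2.1 (s + 2)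
  rw [hs, h1] at h
  linear_combination h

theorem add_three_of_quiddity_succ_eq_one (hF : IsClosedFrieze n a) (hn : 3 ≤ n) {s : ℤ}
    (hs : a (s + 1) (s + 3) = 1) : a s (s + 3) = a s (s + 2) - 1 := by
  have h := hF.col_recurrence (s := s + 1) (p := s) (by omega) (by omega)
  simp only [add_assoc, Int.reduceAdd] at h
  rw [hF.2.1, hs] at h
  linear_combination h

end IsClosedFrieze

/-- The increasing bijection from `ℤ` onto the integers not congruent to `i + 1` modulo `m + 1`
that fixes `i + 2`: it relabels the vertices once vertex `i + 1` is deleted. -/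
def cutIndex (m : ℕ) (i k : ℤ) : ℤ := k + (k - i - 2) / m

def cutFrieze (m : ℕ) (i : ℤ) (a : ℤ → ℤ → ℤ) (k l : ℤ) : ℤ := a (cutIndex m i k) (cutIndex m i l)

section cutIndex

variable {m : ℕ} {i : ℤ}

theorem cutIndex_of_le_of_le {k : ℤ} (h₁ : i + 2 ≤ k) (h₂ : k ≤ i + m + 1) :
    cutIndex m i k = k := by
  rw [cutIndex, Int.ediv_eq_zero_of_lt (by omega) (by omega), add_zero]

theorem cutIndex_add_mul (hm : 0 < m) (k t : ℤ) :
    cutIndex m i (k + t * m) = cutIndex m i k + t * (m + 1) := by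
  rw [cutIndex, cutIndex, show k + t * m - i - 2 = k - i - 2 + t * m by ring,
    Int.add_mul_ediv_right _ _ (by omega)]
  ring

theorem cutIndex_add (hm : 0 < m) (k : ℤ) : cutIndex m i (k + m) = cutIndex m i k + m + 1 := by
  simpa [add_assoc] using cutIndex_add_mul (i := i) hm k 1

theorem cutIndex_add_sub_le (hm : 0 < m) {k l : ℤ} (h : k ≤ l) :
    cutIndex m i k + (l - k) ≤ cutIndex m i l := by
  have := Int.ediv_le_ediv (show (0 : ℤ) < m by omega) (show k - i - 2 ≤ l - i - 2 by omega)
  rw [cutIndex, cutIndex]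
  omega

theorem cutIndex_succ (hm : 0 < m) (k : ℤ) :
    cutIndex m i (k + 1) = cutIndex m i k + 1 ∨
      (cutIndex m i k ≡ i [ZMOD m + 1] ∧ cutIndex m i (k + 1) = cutIndex m i k + 2) := by
  obtain ⟨k₀, t, h₁, h₂, rfl⟩ := Int.exists_eq_add_mul_of_le_of_le (i + 2) k (m := m) (by omega)
  rw [cutIndex_add_mul hm, cutIndex_of_le_of_le h₁ (by omega)]
  obtain h | rfl : k₀ < i + m + 1 ∨ k₀ = i + m + 1 := by omega
  · left
    rw [add_right_comm, cutIndex_add_mul hm, cutIndex_of_le_of_le (by omega) (by omega)]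
    ring
  · right
    refine ⟨Int.modEq_iff_dvd.mpr ⟨-(t + 1), by ring⟩, ?_⟩
    rw [show i + m + 1 + t * m + 1 = i + 2 + (t + 1) * m by ring, cutIndex_add_mul hm,
      cutIndex_of_le_of_le le_rfl (by omega)]
    ring

end cutIndex

namespace IsClosedFrieze

variable {m : ℕ} {a : ℤ → ℤ → ℤ} {i : ℤ}

theorem cutFrieze_diamond (hF : IsClosedFrieze (m + 1) a) (hm : 0 < m)
    (hear : ∀ s, s ≡ i [ZMOD m + 1] → a s (s + 2) = 1) {k l : ℤ} (h₁ : k + 1 ≤ l)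
    (h₂ : l ≤ k + m - 1) :
    cutFrieze m i a k l * cutFrieze m i a (k + 1) (l + 1)
      - cutFrieze m i a k (l + 1) * cutFrieze m i a (k + 1) l = 1 := by
  have hlow := cutIndex_add_sub_le (i := i) hm h₁
  have hhigh := cutIndex_add_sub_le (i := i) hm (show l + 1 ≤ k + m by omega)
  rw [cutIndex_add hm] at hhigh
  simp only [cutFrieze]
  rcases cutIndex_succ (i := i) hm k with hk | ⟨hki, hk⟩ <;>
    rcases cutIndex_succ (i := i) hm l with hl | ⟨hli, hl⟩ <;> rw [hk, hl]
  · exact hF.diamond (by omega) (by omega)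
  · exact hF.diamond_skip_col (hear _ hli) (by omega) (by omega)
  · exact hF.diamond_skip_row (hear _ hki) (by omega) (by omega)
  · have := Int.eq_zero_of_dvd_of_nonneg_of_lt (by omega) (by omega) (hki.trans hli.symm).dvd
    omega

theorem isClosedFrieze_cutFrieze (hF : IsClosedFrieze (m + 1) a) (hm : 0 < m)
    (hear : ∀ s, s ≡ i [ZMOD m + 1] → a s (s + 2) = 1) : IsClosedFrieze m (cutFrieze m i a) := by
  have hmono := fun {k l : ℤ} (h : k ≤ l) => cutIndex_add_sub_le (i := i) hm h
  have hshift := cutIndex_add (i := i) hm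
  have ⟨h0, h1, hlast, hend, hpos, _, hzero_low, hzero_high⟩ := hF
  push_cast at hlast hend hpos hzero_high
  simp only [← add_assoc, add_sub_cancel_right] at hlast
  refine ⟨fun k => h0 _, fun k => ?_, fun k => ?_, fun k => ?_, fun k l hkl hlk => ?_,
    fun k l hkl hlk => hF.cutFrieze_diamond hm hear hkl hlk, fun k l hlk => ?_, fun k l hkl => ?_⟩
  all_goals simp only [cutFrieze]
  · rcases cutIndex_succ (i := i) hm k with h | ⟨hk, h⟩ <;> rw [h]
    exacts [h1 _, hear _ hk]
  · rcases cutIndex_succ (i := i) hm (k + m - 1) with h | ⟨hk, h⟩ <;>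
      rw [sub_add_cancel, hshift] at h
    · rw [show cutIndex m i (k + m - 1) = cutIndex m i k + m by omega]
      exact hlast _
    · have := hF.col_recurrence (s := cutIndex m i (k + m - 1)) (p := cutIndex m i k)
        (by push_cast; omega) (by omega)
      rw [hear _ hk, one_mul, show cutIndex m i (k + m - 1) + 1 = cutIndex m i k + m by omega,
        show cutIndex m i (k + m - 1) + 2 = cutIndex m i k + (m + 1) by omega, hend,
        add_zero, hlast] at this
      exact this
  · rw [hshift, add_assoc]; exact hend _
  · have := hmono (show l ≤ k + m by omega)
    rw [hshift] at this
    exact hpos _ _ (by linarith [hmono (show k ≤ l by omega)]) (by omega)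
  · exact hzero_low _ _ (by linarith [hmono hlk.le])
  · have := hmono (show k + m ≤ l by omega)
    rw [hshift] at this
    exact hzero_high _ _ (by omega)

theorem cutFrieze_self_add_two (hF : IsClosedFrieze (m + 1) a) (hm : 2 ≤ m)
    (hear : ∀ s, s ≡ i [ZMOD m + 1] → a s (s + 2) = 1) {q q' : ℤ → ℤ}
    (hq : Function.Periodic q (m + 1)) (hqa : ∀ s, a s (s + 2) = q s)
    (hq' : Function.Periodic q' m) (h1 : q' (i + 1) = q (i + 1) - 1)
    (h2 : ∀ j, i + 2 ≤ j → j ≤ i + m - 1 → q' j = q j) (h3 : q' (i + m) = q (i + m) - 1)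
    (k : ℤ) : cutFrieze m i a k (k + 2) = q' k := by
  have hqt : ∀ x t : ℤ, q (x + t * (m + 1)) = q x := fun x t => by simpa using hq.int_mul t x
  have hq't : ∀ x t : ℤ, q' (x + t * m) = q' x := fun x t => by simpa using hq'.int_mul t x
  obtain ⟨k₀, t, hk₁, hk₂, rfl⟩ := Int.exists_eq_add_mul_of_le_of_le (i + 2) k (m := m) (by omega)
  simp only [cutFrieze]
  rw [add_right_comm, cutIndex_add_mul (by omega), cutIndex_add_mul (by omega),
    cutIndex_of_le_of_le hk₁ (by omega), hq't]
  obtain h | h : k₀ ≤ i + m - 1 ∨ i + m ≤ k₀ := by omega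
  · rw [cutIndex_of_le_of_le (by omega) (by omega), add_right_comm, hqa, hqt, h2 _ hk₁ h]
  -- the deleted vertex lies strictly between the images of `k` and `k + 2`
  have hskip : cutIndex m i (k₀ + 2) = k₀ + 3 := by
    rw [show k₀ + 2 = k₀ + 2 - m + 1 * m by ring, cutIndex_add_mul (by omega),
      cutIndex_of_le_of_le (by omega) (by omega)]
    ring
  rw [hskip, add_right_comm]
  obtain rfl | rfl : k₀ = i + m ∨ k₀ = i + m + 1 := by omega
  · have hs : a (i + m + t * (m + 1) + 1) (i + m + t * (m + 1) + 3) = 1 := by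
      rw [show i + m + t * (m + 1) + 3 = i + m + t * (m + 1) + 1 + 2 by ring]
      exact hear _ (Int.modEq_iff_dvd.mpr ⟨-(t + 1), by ring⟩)
    rw [hF.add_three_of_quiddity_succ_eq_one (by omega) hs, hqa, hqt, h3]
  · have hs := hear (i + m + 1 + t * (m + 1)) (Int.modEq_iff_dvd.mpr ⟨-(t + 1), by ring⟩)
    rw [hF.add_three_of_quiddity_eq_one (by omega) hs,
      show i + m + 1 + t * (m + 1) + 3 = i + m + 1 + t * (m + 1) + 1 + 2 by ring, hqa,
      show i + m + 1 + t * (m + 1) + 1 = i + 1 + (t + 1) * (m + 1) by ring, hqt, ← h1,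
      show i + m + 1 = i + 1 + 1 * m by ring, hq't]

end IsClosedFrieze

/-- Cutting: removing an entry equal to 1 from a quiddity sequence of order `n ≥ 5` and
decreasing both cyclic neighbours by 1 yields a quiddity sequence of order `n - 1`. -/
theorem quiddity_cut (n : ℕ) (hn : 5 ≤ n) (q : ℤ → ℤ) (hq : IsQuiddityZ n q) (i : ℤ)
    (hi : q i = 1) (q' : ℤ → ℤ)
    (hper : ∀ j : ℤ, q' (j + (n - 1 : ℕ)) = q' j)
    (h1 : q' (i + 1) = q (i + 1) - 1)
    (h2 : ∀ j : ℤ, i + 2 ≤ j → j ≤ i + n - 2 → q' j = q j)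
    (h3 : q' (i + n - 1) = q (i + n - 1) - 1) :
    IsQuiddityZ (n - 1) q' := by
  obtain ⟨m, rfl⟩ : ∃ m, n = m + 1 := ⟨n - 1, by omega⟩
  obtain ⟨hq, a, hF, hqa⟩ := hq
  simp only [Nat.add_sub_cancel] at hper ⊢
  push_cast at hq h2 h3
  have hear : ∀ s, s ≡ i [ZMOD m + 1] → a s (s + 2) = 1 := fun s hs => by
    rw [hqa, Function.Periodic.eq_of_modEq hq hs, hi]
  refine ⟨hper, cutFrieze m i a, hF.isClosedFrieze_cutFrieze (by omega) hear,
    hF.cutFrieze_self_add_two (by omega) hear hq hqa hper h1 (fun j hj₁ hj₂ => h2 j hj₁ (by omega))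
      (by simpa [← add_assoc] using h3)⟩
end

section
/- Let x_{ij} (1 ≤ i < j ≤ n) be the cluster variables of the cluster algebra of type A_{n-3} associated to a convex n-gon, with frozen variables x_{i,i+1} and x_{1,n}. Let M(x) be the symmetric n×n matrix with M(x)_{ii} = 0 and M(x)_{ij} = x_{ij}. Then det M(x) = -(-2)^{n-2} x_{12} x_{23} ··· x_{n-1,n} x_{n,1}. -/
/-!
The Ptolemy relations are the three-term Plücker relations. If `x₀₁ ≠ 0`, then over the
fraction field the cluster variables are the `2 × 2` minors `xᵢⱼ = uᵢ wⱼ - uⱼ wᵢ` of a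
`2 × n` matrix; if `x₀₁ = 0`, they make rows `0` and `1` of the matrix proportional.

For the matrix of minors, combining its last three rows with Plücker coefficients leaves a
single entry `2 x_{m,m+1} x_{m+1,m+2}`. Expanding along it gives
`x_{m,m+1} det = -2 x_{m,m+1} x_{m+1,m+2} det'`, where `det'` is the next smaller determinant
if the last column is allowed to belong to any vertex `s`. The factor `x_{m,m+1}` cancels when
`u, w` are polynomial indeterminates, and specialisation then gives the formula over any ring.
-/

open Matrix Finset

theorem Matrix.det_eq_zero_of_rows_proportional {n R : Type*} [Fintype n] [DecidableEq n]
    [CommRing R] [IsDomain R] (A : Matrix n n R) {i j : n} (hij : i ≠ j)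
    (h : ∀ k l, A i k * A j l = A i l * A j k) : A.det = 0 := by
  by_cases hi : A i = 0
  · exact det_eq_zero_of_row_eq_zero i (congrFun hi)
  obtain ⟨k, hk⟩ := Function.ne_iff.mp hi
  have hrow : A i k • A j = A j k • A i := funext fun l => by
    simp only [Pi.smul_apply, smul_eq_mul, h k l, mul_comm]
  refine (mul_eq_zero.mp ?_).resolve_left hk
  calc A i k * A.det = (A.updateRow j (A i k • A j)).det := by
        rw [det_updateRow_smul, updateRow_eq_self]
    _ = A j k * (A.updateRow j (A i)).det := by rw [hrow, det_updateRow_smul]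
    _ = 0 := by rw [det_updateRow_eq_zero hij, mul_zero]

section Plucker

variable {S : Type*} [CommRing S] (u w : ℕ → S)

def plucker (i j : ℕ) : S := u i * w j - u j * w i

def pluckerMatrix (n : ℕ) : Matrix (Fin n) (Fin n) S :=
  of fun i j => plucker u w (min i j) (max i j)

/-- For `s ≥ n`, this is `pluckerMatrix u w (n + 1)` with its last column replaced by that of
vertex `s`. -/
def borderedPluckerMatrix (n s : ℕ) : Matrix (Fin (n + 1)) (Fin (n + 1)) S :=
  of fun i j => Fin.lastCases (plucker u w i s) (fun k => plucker u w (min i k) (max i k)) j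

@[simp]
lemma borderedPluckerMatrix_last {n s : ℕ} (i : Fin (n + 1)) :
    borderedPluckerMatrix u w n s i (Fin.last n) = plucker u w i s := by
  simp [borderedPluckerMatrix]

@[simp]
lemma borderedPluckerMatrix_castSucc {n s : ℕ} (i : Fin (n + 1)) (k : Fin n) :
    borderedPluckerMatrix u w n s i k.castSucc = plucker u w (min i k) (max i k) := by
  simp [borderedPluckerMatrix]

lemma pluckerMatrix_eq_borderedPluckerMatrix (n : ℕ) :
    pluckerMatrix u w (n + 1) = borderedPluckerMatrix u w n n := by
  ext i j
  induction j using Fin.lastCases with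
  | last => simp [pluckerMatrix, i.is_le]
  | cast k => simp [pluckerMatrix]

lemma borderedPluckerMatrix_row_combination (m s : ℕ) :
    plucker u w m (m + 1) • borderedPluckerMatrix u w (m + 2) s (Fin.last _)
      + (-plucker u w m (m + 2)) • borderedPluckerMatrix u w (m + 2) s (Fin.last (m + 1)).castSucc
      + plucker u w (m + 1) (m + 2) • borderedPluckerMatrix u w (m + 2) s ⟨m, by omega⟩
      = (2 * plucker u w m (m + 1) * plucker u w (m + 1) (m + 2)) •
          Pi.single (Fin.last (m + 1)).castSucc 1 := by
  ext j
  simp only [Pi.add_apply, Pi.smul_apply, smul_eq_mul]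
  induction j using Fin.lastCases with
  | last =>
    rw [Pi.single_eq_of_ne (Fin.castSucc_lt_last _).ne']
    simp only [borderedPluckerMatrix_last, plucker, Fin.val_last, Fin.val_castSucc]
    ring
  | cast k =>
    have hk := k.is_le
    simp only [borderedPluckerMatrix_castSucc, Pi.single_apply, Fin.ext_iff,
      Fin.val_last, Fin.val_castSucc]
    generalize (k : ℕ) = j at hk ⊢
    obtain hj | rfl | rfl : j < m ∨ j = m ∨ j = m + 1 := by omega
    all_goals
      simp only [min_def, max_def, plucker]
      split_ifs <;> first | omega | ring

lemma borderedPluckerMatrix_submatrix (m s : ℕ) :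
    (borderedPluckerMatrix u w (m + 2) s).submatrix (Fin.last _).succAbove
      (Fin.last (m + 1)).castSucc.succAbove = borderedPluckerMatrix u w (m + 1) s := by
  ext i j
  induction j using Fin.lastCases with
  | last => simp
  | cast k => simp [Fin.succAbove_castSucc_of_lt _ _ (Fin.castSucc_lt_last k)]

lemma plucker_mul_det_borderedPluckerMatrix (m s : ℕ) :
    plucker u w m (m + 1) * (borderedPluckerMatrix u w (m + 2) s).det =
      plucker u w m (m + 1) * (-2 * plucker u w (m + 1) (m + 2) *
        (borderedPluckerMatrix u w (m + 1) s).det) := by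
  have hcomb := congrArg
    (fun r => (updateRow (borderedPluckerMatrix u w (m + 2) s) (Fin.last _) r).det)
    (borderedPluckerMatrix_row_combination u w m s)
  simp only [det_updateRow_add, det_updateRow_smul, updateRow_eq_self] at hcomb
  rw [det_updateRow_eq_zero (j := Fin.last _) (by simp [Fin.ext_iff]),
    det_updateRow_eq_zero (j := Fin.last _) (by simp [Fin.ext_iff]), ← adjugate_apply,
    adjugate_fin_succ_eq_det_submatrix, borderedPluckerMatrix_submatrix] at hcomb
  have hsign : (-1 : S) ^ ((Fin.last (m + 2) : ℕ) + ((Fin.last (m + 1)).castSucc : ℕ)) = -1 :=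
    Odd.neg_one_pow ⟨m + 1, by simp only [Fin.val_last, Fin.val_castSucc]; ring⟩
  rw [hsign] at hcomb
  linear_combination hcomb

lemma det_borderedPluckerMatrix_one (s : ℕ) :
    (borderedPluckerMatrix u w 1 s).det = -plucker u w 0 s * plucker u w 0 1 := by
  rw [det_fin_two, show (0 : Fin 2) = Fin.castSucc 0 from rfl,
    show (1 : Fin 2) = Fin.last 1 from rfl]
  simp only [borderedPluckerMatrix_castSucc, borderedPluckerMatrix_last, Fin.val_castSucc,
    Fin.val_last, Fin.val_zero, min_self, max_self, Nat.min_zero, Nat.max_zero, plucker]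
  ring

lemma det_borderedPluckerMatrix_of_ne_zero [IsDomain S] (h : ∀ i, plucker u w i (i + 1) ≠ 0)
    (m s : ℕ) : (borderedPluckerMatrix u w (m + 1) s).det =
      -(-2) ^ m * plucker u w 0 s * ∏ i ∈ range (m + 1), plucker u w i (i + 1) := by
  induction m with
  | zero => simp [det_borderedPluckerMatrix_one]
  | succ m ih =>
    refine mul_left_cancel₀ (h m) ?_
    rw [plucker_mul_det_borderedPluckerMatrix, ih, prod_range_succ _ (m + 1)]
    ring

lemma map_plucker {T : Type*} [CommRing T] (f : S →+* T) (i j : ℕ) :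
    f (plucker u w i j) = plucker (f ∘ u) (f ∘ w) i j := by
  simp [plucker]

lemma borderedPluckerMatrix_map {T : Type*} [CommRing T] (f : S →+* T) (n s : ℕ) :
    (borderedPluckerMatrix u w n s).map f = borderedPluckerMatrix (f ∘ u) (f ∘ w) n s := by
  ext i j
  induction j using Fin.lastCases <;> simp [map_plucker]

end Plucker

open MvPolynomial in
lemma plucker_X_ne_zero {i j : ℕ} (h : i ≠ j) :
    plucker (X ∘ Sum.inl : ℕ → MvPolynomial (ℕ ⊕ ℕ) ℤ) (X ∘ Sum.inr) i j ≠ 0 := by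
  intro h0
  have := congrArg (eval (Sum.elim (Pi.single i 1) (Pi.single j 1))) h0
  simp [plucker, h, Ne.symm h] at this

theorem det_borderedPluckerMatrix {S : Type*} [CommRing S] (u w : ℕ → S) (m s : ℕ) :
    (borderedPluckerMatrix u w (m + 1) s).det =
      -(-2) ^ m * plucker u w 0 s * ∏ i ∈ range (m + 1), plucker u w i (i + 1) := by
  let φ := MvPolynomial.eval₂Hom (Int.castRingHom S) (Sum.elim u w)
  have h := congrArg φ (det_borderedPluckerMatrix_of_ne_zero _ _
    (fun i => plucker_X_ne_zero (Nat.ne_add_one i)) m s)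
  rw [RingHom.map_det, RingHom.mapMatrix_apply, borderedPluckerMatrix_map] at h
  simp only [map_mul, map_neg, map_pow, map_ofNat, map_prod, map_plucker] at h
  simpa [φ, Function.comp_def] using h

theorem det_pluckerMatrix {S : Type*} [CommRing S] (u w : ℕ → S) (m : ℕ) :
    (pluckerMatrix u w (m + 2)).det =
      -(-2) ^ m * plucker u w 0 (m + 1) * ∏ i ∈ range (m + 1), plucker u w i (i + 1) := by
  rw [pluckerMatrix_eq_borderedPluckerMatrix, det_borderedPluckerMatrix]

section Ptolemy

variable {R : Type*} [CommRing R]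

def IsPtolemy (y : ℕ → ℕ → R) (n : ℕ) : Prop :=
  ∀ i j k l, i < j → j < k → k < l → l < n → y i k * y j l = y i j * y k l + y i l * y j k

variable {y : ℕ → ℕ → R} {n : ℕ}

lemma IsPtolemy.map {S : Type*} [CommRing S] (hy : IsPtolemy y n) (f : R →+* S) :
    IsPtolemy (fun i j => f (y i j)) n := by
  intro i j k l hij hjk hkl hl
  simp only [← map_mul, ← map_add, hy i j k l hij hjk hkl hl]

lemma IsPtolemy.rows_proportional_of_eq_zero (hy : IsPtolemy y n) (hsymm : ∀ i j, y i j = y j i)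
    (hdiag : ∀ i, y i i = 0) (h01 : y 0 1 = 0) {j k : ℕ} (hj : j < n) (hk : k < n) :
    y 0 j * y 1 k = y 0 k * y 1 j := by
  wlog hjk : j ≤ k generalizing j k
  · exact (this hk hj (le_of_not_ge hjk)).symm
  obtain rfl | hjk := eq_or_lt_of_le hjk
  · rfl
  obtain rfl | rfl | hj2 : j = 0 ∨ j = 1 ∨ 2 ≤ j := by omega
  · rw [hdiag, hsymm 1 0, h01, zero_mul, mul_zero]
  · rw [h01, hdiag, zero_mul, mul_zero]
  · rw [hy 0 1 j k (by omega) (by omega) hjk hk, h01, zero_mul, zero_add]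

lemma IsPtolemy.exists_plucker {K : Type*} [Field K] {y : ℕ → ℕ → K} (hy : IsPtolemy y n)
    (hdiag : ∀ i, y i i = 0) (h01 : y 0 1 ≠ 0) :
    ∃ u w : ℕ → K, ∀ i j, i < j → j < n → y i j = plucker u w i j := by
  -- `w 0 = -1`, not `y 1 0 / y 0 1`: `y` is symmetric but `plucker` is antisymmetric.
  refine ⟨fun k => y 0 k, fun k => if k = 0 then -1 else y 1 k / y 0 1, ?_⟩
  intro i j hij hj
  have hj0 : j ≠ 0 := by omega
  obtain rfl | rfl | hi2 : i = 0 ∨ i = 1 ∨ 2 ≤ i := by omega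
  · simp [plucker, hdiag, hj0]
  · simp only [plucker, hj0, one_ne_zero, if_false, hdiag, zero_div, mul_zero, sub_zero]
    field_simp
  · have hi0 : i ≠ 0 := by omega
    simp only [plucker, hj0, hi0, if_false]
    field_simp
    linear_combination -hy 0 1 i j (by omega) (by omega) hij hj

lemma of_eq_pluckerMatrix {u w : ℕ → R} (hsymm : ∀ i j, y i j = y j i)
    (hdiag : ∀ i, y i i = 0)
    (h : ∀ i j, i < j → j < n → y i j = plucker u w i j) :
    of (fun i j : Fin n => y i j) = pluckerMatrix u w n := by
  ext i j
  simp only [of_apply, pluckerMatrix]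
  rcases lt_trichotomy (i : ℕ) j with hij | hij | hij
  · rw [min_eq_left hij.le, max_eq_right hij.le, h _ _ hij j.2]
  · rw [hij, hdiag, min_self, max_self, plucker, sub_self]
  · rw [min_eq_right hij.le, max_eq_left hij.le, hsymm, h _ _ hij i.2]

theorem IsPtolemy.det_eq [IsDomain R] {m : ℕ} (hy : IsPtolemy y (m + 2))
    (hsymm : ∀ i j, y i j = y j i) (hdiag : ∀ i, y i i = 0) :
    (of fun i j : Fin (m + 2) => y i j).det =
      -(-2) ^ m * y 0 (m + 1) * ∏ i ∈ range (m + 1), y i (i + 1) := by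
  by_cases h01 : y 0 1 = 0
  · rw [prod_eq_zero (mem_range.2 m.succ_pos) h01, mul_zero]
    refine det_eq_zero_of_rows_proportional _ (i := 0) (j := 1) (by simp) fun k l => ?_
    exact hy.rows_proportional_of_eq_zero hsymm hdiag h01 k.2 l.2
  let φ := algebraMap R (FractionRing R)
  obtain ⟨u, w, huw⟩ := (hy.map φ).exists_plucker (by simp [hdiag])
    ((map_ne_zero_iff φ (IsFractionRing.injective R _)).2 h01)
  apply IsFractionRing.injective R (FractionRing R)
  have hM : (of fun i j : Fin (m + 2) => y i j).map φ = pluckerMatrix u w (m + 2) :=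
    of_eq_pluckerMatrix (fun i j => by rw [hsymm]) (fun i => by rw [hdiag, map_zero]) huw
  rw [RingHom.map_det, RingHom.mapMatrix_apply, hM, det_pluckerMatrix, map_mul, map_mul, map_neg,
    map_pow, map_neg, map_ofNat, map_prod, huw 0 (m + 1) (by omega) (by omega)]
  congr 1
  exact prod_congr rfl fun i hi =>
    (huw i (i + 1) (by omega) (Nat.succ_lt_succ (mem_range.1 hi))).symm

end Ptolemy

lemma ZMod.finEquiv_apply (n : ℕ) [NeZero n] (i : Fin n) :
    ZMod.finEquiv n i = ((i : ℕ) : ZMod n) := by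
  obtain ⟨m, rfl⟩ := Nat.exists_eq_succ_of_ne_zero (NeZero.ne n)
  exact (Fin.cast_val_eq_self i).symm

lemma ZMod.prod_univ_eq_prod_range {M : Type*} [CommMonoid M] (n : ℕ) [NeZero n]
    (g : ZMod n → M) : ∏ i, g i = ∏ k ∈ range n, g k := by
  rw [← Fin.prod_univ_eq_prod_range, ← Fintype.prod_equiv (ZMod.finEquiv n).toEquiv]
  intro i
  simp [ZMod.finEquiv_apply]

lemma Matrix.det_of_zmod_eq_det_of_fin {R : Type*} [CommRing R] (n : ℕ) [NeZero n]
    (f : ZMod n → ZMod n → R) :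
    (of f).det = (of fun i j : Fin n => f (i : ℕ) (j : ℕ)).det := by
  rw [← det_submatrix_equiv_self (ZMod.finEquiv n).toEquiv]
  congr 1
  ext i j
  simp [ZMod.finEquiv_apply]

/-- The frieze determinant of cluster variables: if `x i j` are the cluster variables of the
cluster algebra of type `A_{n-3}` of a convex `n`-gon (a symmetric family with `x i i = 0`
satisfying the Ptolemy exchange relations), then the determinant of the symmetric matrix
`(x i j)` equals `-(-2)^(n-2)` times the product of the frozen variables `x i (i+1)`. -/
theorem cluster_frieze_determinant (n : ℕ) [NeZero n] (hn : 4 ≤ n)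
    {R : Type*} [CommRing R] [IsDomain R] (x : ZMod n → ZMod n → R)
    (hsymm : ∀ i j, x i j = x j i) (hdiag : ∀ i, x i i = 0)
    (hptolemy : ∀ i j k l : ZMod n, i.val < j.val → j.val < k.val → k.val < l.val →
      x i k * x j l = x i j * x k l + x i l * x j k) :
    (Matrix.of fun i j : ZMod n => x i j).det
      = -(-2 : R) ^ (n - 2) * ∏ i : ZMod n, x i (i + 1) := by
  obtain ⟨m, rfl⟩ : ∃ m, n = m + 2 := ⟨n - 2, by omega⟩
  have hval : ∀ a, a < m + 2 → (a : ZMod (m + 2)).val = a := fun a => ZMod.val_cast_of_lt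
  have hy : IsPtolemy (fun i j : ℕ => x i j) (m + 2) := fun i j k l hij hjk hkl hl =>
    hptolemy _ _ _ _ (by rwa [hval i (by omega), hval j (by omega)])
      (by rwa [hval j (by omega), hval k (by omega)]) (by rwa [hval k (by omega), hval l hl])
  rw [Matrix.det_of_zmod_eq_det_of_fin, hy.det_eq (fun i j => hsymm _ _) (fun i => hdiag _),
    ZMod.prod_univ_eq_prod_range, prod_range_succ _ (m + 1)]
  have hwrap : ((m + 1 : ℕ) : ZMod (m + 2)) + 1 = 0 := by
    rw [← Nat.cast_succ, ZMod.natCast_self]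
  rw [hwrap, hsymm _ 0, Nat.add_sub_cancel]
  push_cast
  ring
end

section
/- Specializing all initial cluster variables x_{ij} for (i,j) in a triangulation T and all frozen variables x_{i,i+1} to 1 sends each cluster variable x_{kl} of the type A_{n-3} cluster algebra to the corresponding entry a_{kl} of the closed integral frieze associated to T. -/
attribute [local instance] Classical.propDecidable

/-- The set of vertices strictly between `i` and `j` in clockwise cyclic order. -/
noncomputable def strictInterval (n : ℕ) [NeZero n] (i j : ZMod n) : Finset (ZMod n) :=
  Finset.univ.filter (fun k => k ≠ i ∧ k ≠ j ∧ (k - i).val < (j - i).val)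

/-- The number of matchings between the vertices strictly between `i` and `j` and the
triangles of `T`: injective maps assigning to each such vertex a triangle incident with it. -/
noncomputable def matchNum {n : ℕ} [NeZero n] (T : PolygonTriangulation n) (i j : ZMod n) : ℕ :=
  Nat.card {f : strictInterval n i j → {s // s ∈ triangles T} //
    Function.Injective f ∧ ∀ v, (v : ZMod n) ∈ (f v : Finset (ZMod n))}

/-!
Induction on the number of vertices of a triangulated convex polygon `S` (a subset of the
`n`-gon with the induced cyclic order). With at least four vertices the triangulation has an ear:
a vertex `v` whose neighbours `p`, `q` are joined by a diagonal; a diagonal cutting off the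
fewest vertices cuts off just one, since a convex `m`-gon carries at most `m - 3` noncrossing
chords. Removing `v` leaves a triangulation with one triangle fewer. Matching numbers for an
interval not ending at `v` do not change, since a vertex `v` inside it can only be matched with
the ear triangle. For the entries at `v`, the Ptolemy relation for `v, q, l, p` with
`x v q = x p v = x p q = 1` gives `x v l = x p l + x q l`, and the matchings of the vertices
between `v` and `l` split in the same way, according to whether `q` is matched with the ear
triangle.
-/

namespace PolygonFrieze

open Finset

section CyclicOrder

variable {n : ℕ} [NeZero n]

def CycBtw (i w j : ZMod n) : Prop := w ≠ i ∧ w ≠ j ∧ (w - i).val < (j - i).val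

lemma val_sub_eq_ite (a b : ZMod n) :
    (a - b).val = if b.val ≤ a.val then a.val - b.val else a.val + n - b.val := by
  split_ifs with h
  · exact ZMod.val_sub h
  · have hb : b ≠ 0 := by rintro rfl; simp at h
    have := ZMod.val_lt a; have := ZMod.val_lt b
    rw [sub_eq_add_neg, ZMod.val_add, ZMod.neg_val, if_neg hb, Nat.mod_eq_of_lt (by omega)]
    omega

lemma val_ne_val_iff {a b : ZMod n} : a.val ≠ b.val ↔ a ≠ b := (ZMod.val_injective n).ne_iff

lemma cycBtw_iff {i w j : ZMod n} :
    CycBtw i w j ↔ (i.val < w.val ∧ w.val < j.val) ∨ (j.val < i.val ∧ i.val < w.val) ∨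
      (w.val < j.val ∧ j.val < i.val) := by
  have := ZMod.val_lt i; have := ZMod.val_lt w; have := ZMod.val_lt j
  simp only [CycBtw, val_sub_eq_ite, ← val_ne_val_iff]
  split_ifs <;> omega

lemma CycBtw.cyclic {i w j : ZMod n} (h : CycBtw i w j) : CycBtw w j i := by
  rw [cycBtw_iff] at *; omega

lemma CycBtw.ne {i w j : ZMod n} (h : CycBtw i w j) : i ≠ j := by
  rw [cycBtw_iff] at h; rw [← val_ne_val_iff]; omega

lemma cycBtw_or_cycBtw {x y z : ZMod n} (hxy : x ≠ y) (hyz : y ≠ z) (hxz : x ≠ z) :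
    CycBtw x y z ∨ CycBtw x z y := by
  rw [← val_ne_val_iff] at hxy hyz hxz
  rw [cycBtw_iff, cycBtw_iff]; omega

end CyclicOrder

section Arcs

variable {n : ℕ} [NeZero n] {S : Finset (ZMod n)} {a b i j k l v w : ZMod n}

noncomputable def openArc (S : Finset (ZMod n)) (i j : ZMod n) : Finset (ZMod n) :=
  S.filter (CycBtw i · j)

omit [NeZero n] in
lemma mem_openArc : w ∈ openArc S i j ↔ w ∈ S ∧ CycBtw i w j := mem_filter

omit [NeZero n] in
lemma left_notMem_openArc : i ∉ openArc S i j := fun h => (mem_openArc.1 h).2.1 rfl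

omit [NeZero n] in
lemma right_notMem_openArc : j ∉ openArc S i j := fun h => (mem_openArc.1 h).2.2.1 rfl

omit [NeZero n] in
lemma openArc_erase : openArc (S.erase v) i j = (openArc S i j).erase v := by
  ext w; simp only [mem_openArc, mem_erase]; tauto

structure IsSide (S : Finset (ZMod n)) (a b : ZMod n) : Prop where
  left_mem : a ∈ S
  right_mem : b ∈ S
  ne : a ≠ b
  not_cycBtw : ∀ w ∈ S, ¬ CycBtw a w b

namespace IsSide

omit [NeZero n] in
lemma openArc_eq_empty (h : IsSide S a b) : openArc S a b = ∅ :=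
  eq_empty_iff_forall_notMem.2 fun w hw => h.not_cycBtw w (mem_openArc.1 hw).1 (mem_openArc.1 hw).2

lemma cycBtw (h : IsSide S a b) (hl : l ∈ S) (hla : l ≠ a) (hlb : l ≠ b) : CycBtw a b l :=
  (cycBtw_or_cycBtw h.ne hlb.symm hla.symm).resolve_right (h.not_cycBtw l hl)

lemma right_unique (h : IsSide S a b) (h' : IsSide S a l) : b = l := by
  by_contra hbl
  exact h.not_cycBtw l h'.right_mem (h'.cycBtw h.right_mem h.ne.symm hbl)

lemma left_unique (h : IsSide S a b) (h' : IsSide S l b) : a = l := by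
  by_contra hal
  exact h'.not_cycBtw a h.left_mem (h.cycBtw h'.left_mem (Ne.symm hal) h'.ne).cyclic.cyclic

lemma openArc_eq_insert_left (h : IsSide S a b) (hl : l ∈ S) (hla : l ≠ a) (hlb : l ≠ b) :
    openArc S a l = insert b (openArc S b l) := by
  have habl := h.cycBtw hl hla hlb
  ext w
  simp only [mem_openArc, mem_insert]
  constructor
  · rintro ⟨hwS, hw⟩
    rcases eq_or_ne w b with rfl | hwb
    · exact Or.inl rfl
    refine Or.inr ⟨hwS, ?_⟩
    have := h.not_cycBtw w hwS
    rw [← val_ne_val_iff] at hwb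
    rw [cycBtw_iff] at *; omega
  · rintro (rfl | ⟨hwS, hw⟩)
    · exact ⟨h.right_mem, habl⟩
    · refine ⟨hwS, ?_⟩
      rw [cycBtw_iff] at *; omega

lemma openArc_eq_insert_right (h : IsSide S a b) (hk : k ∈ S) (hka : k ≠ a) (hkb : k ≠ b) :
    openArc S k b = insert a (openArc S k a) := by
  have hkab := (h.cycBtw hk hka hkb).cyclic.cyclic
  ext w
  simp only [mem_openArc, mem_insert]
  constructor
  · rintro ⟨hwS, hw⟩
    rcases eq_or_ne w a with rfl | hwa
    · exact Or.inl rfl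
    refine Or.inr ⟨hwS, ?_⟩
    have := h.not_cycBtw w hwS
    rw [← val_ne_val_iff] at hwa
    rw [cycBtw_iff] at *; omega
  · rintro (rfl | ⟨hwS, hw⟩)
    · exact ⟨h.left_mem, hkab⟩
    · refine ⟨hwS, ?_⟩
      rw [cycBtw_iff] at *; omega

lemma openArc_swap (h : IsSide S a b) : openArc S b a = (S.erase a).erase b := by
  ext w
  simp only [mem_openArc, mem_erase]
  constructor
  · rintro ⟨hwS, hw⟩
    exact ⟨hw.1, hw.2.1, hwS⟩
  · rintro ⟨hwb, hwa, hwS⟩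
    exact ⟨hwS, (h.cycBtw hwS hwa hwb).cyclic⟩

end IsSide

end Arcs

section Chords

variable {n : ℕ} [NeZero n]

structure IsChord (S : Finset (ZMod n)) (d : ZMod n × ZMod n) : Prop where
  fst_mem : d.1 ∈ S
  snd_mem : d.2 ∈ S
  val_lt : d.1.val < d.2.val
  exists_inside : ∃ w ∈ S, d.1.val < w.val ∧ w.val < d.2.val
  exists_outside : ∃ w ∈ S, w.val < d.1.val ∨ d.2.val < w.val

def Noncrossing (F : Finset (ZMod n × ZMod n)) : Prop :=
  ∀ d ∈ F, ∀ e ∈ F, ¬(d.1.val < e.1.val ∧ e.1.val < d.2.val ∧ d.2.val < e.2.val)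

omit [NeZero n] in
lemma Noncrossing.mono {F F' : Finset (ZMod n × ZMod n)} (h : Noncrossing F) (h' : F' ⊆ F) :
    Noncrossing F' :=
  fun d hd e he => h d (h' hd) e (h' he)

lemma three_le_card {s : Finset (ZMod n)} {x y z : ZMod n} (hx : x ∈ s) (hy : y ∈ s)
    (hz : z ∈ s) (hxy : x.val ≠ y.val) (hxz : x.val ≠ z.val) (hyz : y.val ≠ z.val) :
    3 ≤ s.card :=
  two_lt_card_iff.2 ⟨x, y, z, hx, hy, hz, val_ne_val_iff.1 hxy, val_ne_val_iff.1 hxz,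
    val_ne_val_iff.1 hyz⟩

noncomputable def innerPart (S : Finset (ZMod n)) (d : ZMod n × ZMod n) : Finset (ZMod n) :=
  S.filter fun w => d.1.val ≤ w.val ∧ w.val ≤ d.2.val

noncomputable def outerPart (S : Finset (ZMod n)) (d : ZMod n × ZMod n) : Finset (ZMod n) :=
  S.filter fun w => w.val ≤ d.1.val ∨ d.2.val ≤ w.val

namespace IsChord

variable {S : Finset (ZMod n)} {d e : ZMod n × ZMod n} (hd : IsChord S d)
include hd

lemma card_innerPart_add_card_outerPart :
    (innerPart S d).card + (outerPart S d).card = S.card + 2 := by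
  have hunion : innerPart S d ∪ outerPart S d = S := by
    rw [innerPart, outerPart, ← filter_or]; exact filter_true_of_mem fun w _ => by omega
  have hinter : innerPart S d ∩ outerPart S d = {d.1, d.2} := by
    have := hd.val_lt
    ext w
    simp only [innerPart, outerPart, ← filter_and, mem_filter, mem_insert, mem_singleton,
      ← (ZMod.val_injective n).eq_iff]
    constructor
    · rintro ⟨-, h⟩; omega
    · rintro (h | h) <;> refine ⟨?_, by omega⟩ <;> rw [(ZMod.val_injective n).eq_iff.1 h]
      exacts [hd.fst_mem, hd.snd_mem]
  have := card_union_add_card_inter (innerPart S d) (outerPart S d)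
  rwa [hunion, hinter, card_pair (val_ne_val_iff.1 hd.val_lt.ne), eq_comm] at this

lemma three_le_card_innerPart : 3 ≤ (innerPart S d).card := by
  obtain ⟨w, hwS, hw⟩ := hd.exists_inside
  have := hd.val_lt
  exact three_le_card (mem_filter.2 ⟨hd.fst_mem, by omega⟩) (mem_filter.2 ⟨hwS, by omega⟩)
    (mem_filter.2 ⟨hd.snd_mem, by omega⟩) (by omega) (by omega) (by omega)

lemma three_le_card_outerPart : 3 ≤ (outerPart S d).card := by
  obtain ⟨w, hwS, hw⟩ := hd.exists_outside
  have := hd.val_lt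
  exact three_le_card (mem_filter.2 ⟨hd.fst_mem, by omega⟩) (mem_filter.2 ⟨hwS, by omega⟩)
    (mem_filter.2 ⟨hd.snd_mem, by omega⟩) (by omega) (by omega) (by omega)

omit [NeZero n] in
lemma card_innerPart_lt : (innerPart S d).card < S.card := by
  obtain ⟨w, hwS, hw⟩ := hd.exists_outside
  exact card_lt_card ⟨filter_subset _ _, fun h => by have := (mem_filter.1 (h hwS)).2; omega⟩

omit [NeZero n] in
lemma card_outerPart_lt : (outerPart S d).card < S.card := by
  obtain ⟨w, hwS, hw⟩ := hd.exists_inside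
  exact card_lt_card ⟨filter_subset _ _, fun h => by have := (mem_filter.1 (h hwS)).2; omega⟩

lemma innerPart (he : IsChord S e) (hne : e ≠ d)
    (hin : d.1.val ≤ e.1.val ∧ e.2.val ≤ d.2.val) : IsChord (innerPart S d) e := by
  obtain ⟨he1, he2, hlt, ⟨w, hwS, hw⟩, -⟩ := he
  have hne' : e.1.val ≠ d.1.val ∨ e.2.val ≠ d.2.val := by
    by_contra! h
    exact hne (Prod.ext ((ZMod.val_injective n) h.1) ((ZMod.val_injective n) h.2))
  have mem {w} (hw : w ∈ S) (h : d.1.val ≤ w.val ∧ w.val ≤ d.2.val) :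
      w ∈ PolygonFrieze.innerPart S d := mem_filter.2 ⟨hw, h⟩
  refine ⟨mem he1 (by omega), mem he2 (by omega), hlt, ⟨w, mem hwS (by omega), hw⟩, ?_⟩
  by_cases h : d.1.val < e.1.val
  · exact ⟨d.1, mem hd.fst_mem (by omega), by omega⟩
  · exact ⟨d.2, mem hd.snd_mem (by have := hd.val_lt; omega), by omega⟩

/-- Both ends of a chord `e` not crossing `d` lie on the same side of `d`; a witness for `e` on
the other side of `d` can be replaced by an end of `d`. -/
lemma outerPart (he : IsChord S e) (hne : e ≠ d)
    (hout : ¬(d.1.val ≤ e.1.val ∧ e.2.val ≤ d.2.val))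
    (h₁ : ¬(d.1.val < e.1.val ∧ e.1.val < d.2.val ∧ d.2.val < e.2.val))
    (h₂ : ¬(e.1.val < d.1.val ∧ d.1.val < e.2.val ∧ e.2.val < d.2.val)) :
    IsChord (outerPart S d) e := by
  obtain ⟨he1, he2, hlt, ⟨w, hwS, hw⟩, ⟨w', hw'S, hw'⟩⟩ := he
  have hne' : e.1.val ≠ d.1.val ∨ e.2.val ≠ d.2.val := by
    by_contra! h
    exact hne (Prod.ext ((ZMod.val_injective n) h.1) ((ZMod.val_injective n) h.2))
  have mem {w} (hw : w ∈ S) (h : w.val ≤ d.1.val ∨ d.2.val ≤ w.val) :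
      w ∈ PolygonFrieze.outerPart S d := mem_filter.2 ⟨hw, h⟩
  refine ⟨mem he1 (by omega), mem he2 (by omega), hlt, ?_, ?_⟩
  · by_cases hwd : d.1.val < w.val ∧ w.val < d.2.val
    · by_cases h : e.1.val < d.1.val
      · exact ⟨d.1, mem hd.fst_mem (by omega), by omega⟩
      · exact ⟨d.2, mem hd.snd_mem (by omega), by omega⟩
    · exact ⟨w, mem hwS (by omega), hw⟩
  · by_cases hwd : d.1.val < w'.val ∧ w'.val < d.2.val
    · by_cases h : w'.val < e.1.val
      · exact ⟨d.1, mem hd.fst_mem (by omega), by omega⟩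
      · exact ⟨d.2, mem hd.snd_mem (by omega), by omega⟩
    · exact ⟨w', mem hw'S (by omega), hw'⟩

end IsChord

/-- Cutting along one chord splits the polygon into two smaller ones sharing its ends. -/
theorem Noncrossing.card_add_three_le {S : Finset (ZMod n)} {F : Finset (ZMod n × ZMod n)}
    (hF : Noncrossing F) (hchord : ∀ d ∈ F, IsChord S d) (hS : 3 ≤ S.card) :
    F.card + 3 ≤ S.card := by
  obtain rfl | ⟨d, hd⟩ := F.eq_empty_or_nonempty
  · simpa using hS
  have hdS := hchord d hd
  set F₁ := (F.erase d).filter fun e => d.1.val ≤ e.1.val ∧ e.2.val ≤ d.2.val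
  set F₂ := (F.erase d).filter fun e => ¬(d.1.val ≤ e.1.val ∧ e.2.val ≤ d.2.val)
  have h₁ : F₁.card + 3 ≤ (innerPart S d).card := by
    refine Noncrossing.card_add_three_le (hF.mono ((filter_subset _ _).trans (erase_subset _ _)))
      (fun e he => ?_) hdS.three_le_card_innerPart
    obtain ⟨he, hin⟩ := mem_filter.1 he
    exact hdS.innerPart (hchord e (mem_of_mem_erase he)) (ne_of_mem_erase he) hin
  have h₂ : F₂.card + 3 ≤ (outerPart S d).card := by
    refine Noncrossing.card_add_three_le (hF.mono ((filter_subset _ _).trans (erase_subset _ _)))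
      (fun e he => ?_) hdS.three_le_card_outerPart
    obtain ⟨he, hout⟩ := mem_filter.1 he
    exact hdS.outerPart (hchord e (mem_of_mem_erase he)) (ne_of_mem_erase he) hout
      (hF d hd e (mem_of_mem_erase he)) (hF e (mem_of_mem_erase he) d hd)
  have hsplit : F₁.card + F₂.card = F.card - 1 := by
    rw [card_filter_add_card_filter_not, card_erase_of_mem hd]
  have := hdS.card_innerPart_add_card_outerPart
  have := card_pos.2 ⟨d, hd⟩
  omega
termination_by S.card
decreasing_by
  · exact hdS.card_innerPart_lt
  · exact hdS.card_outerPart_lt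

end Chords

section Triangulations

variable {n : ℕ} [NeZero n] {S : Finset (ZMod n)} {D : Finset (ZMod n × ZMod n)}
  {a b u v w z p q : ZMod n}

structure IsTriangulation (S : Finset (ZMod n)) (D : Finset (ZMod n × ZMod n)) : Prop where
  isChord : ∀ d ∈ D, IsChord S d
  noncrossing : Noncrossing D
  card_add_three : D.card + 3 = S.card

def IsDiag (D : Finset (ZMod n × ZMod n)) (a b : ZMod n) : Prop := (a, b) ∈ D ∨ (b, a) ∈ D

omit [NeZero n] in
lemma IsDiag.symm (h : IsDiag D a b) : IsDiag D b a := Or.symm h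

namespace IsTriangulation

variable (hT : IsTriangulation S D)
include hT

omit [NeZero n] in
lemma mem_of_isDiag (h : IsDiag D a b) : a ∈ S ∧ b ∈ S := by
  rcases h with h | h
  · exact ⟨(hT.isChord _ h).fst_mem, (hT.isChord _ h).snd_mem⟩
  · exact ⟨(hT.isChord _ h).snd_mem, (hT.isChord _ h).fst_mem⟩

lemma ne_of_isDiag (h : IsDiag D a b) : a ≠ b := by
  rw [← val_ne_val_iff]
  rcases h with h | h
  · exact (hT.isChord _ h).val_lt.ne
  · exact (hT.isChord _ h).val_lt.ne'

lemma nonempty_openArc (h : IsDiag D a b) : (openArc S a b).Nonempty := by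
  rcases h with h | h
  · obtain ⟨-, -, -, ⟨w, hwS, hw⟩, -⟩ := hT.isChord _ h
    exact ⟨w, mem_openArc.2 ⟨hwS, by dsimp only at hw; rw [cycBtw_iff]; omega⟩⟩
  · obtain ⟨-, -, hlt, -, ⟨w, hwS, hw⟩⟩ := hT.isChord _ h
    exact ⟨w, mem_openArc.2 ⟨hwS, by dsimp only at hlt hw; rw [cycBtw_iff]; omega⟩⟩

lemma not_crossing (hab : IsDiag D a b) (huz : IsDiag D u z) (hu : CycBtw a u b)
    (hz : CycBtw b z a) : False := by
  have hlt {x y} (h : (x, y) ∈ D) : x.val < y.val := (hT.isChord _ h).val_lt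
  have hnc {x y x' y'} (h : (x, y) ∈ D) (h' : (x', y') ∈ D) :
      ¬(x.val < x'.val ∧ x'.val < y.val ∧ y.val < y'.val) := hT.noncrossing _ h _ h'
  rw [cycBtw_iff] at hu hz
  rcases hab with h | h <;> rcases huz with h' | h' <;>
    have := hlt h <;> have := hlt h' <;> have := hnc h h' <;> have := hnc h' h <;> omega

/-- A diagonal ending inside the arc would cross the minimal one or cut off fewer vertices. -/
lemma not_cycBtw_of_minimal (hab : IsDiag D a b)
    (hmin : ∀ x y, IsDiag D x y → (openArc S a b).card ≤ (openArc S x y).card)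
    (huz : IsDiag D u z) : ¬ CycBtw a u b := by
  intro hu
  have hu' : u ∈ openArc S a b := mem_openArc.2 ⟨(hT.mem_of_isDiag huz).1, hu⟩
  have hzS := (hT.mem_of_isDiag huz).2
  have huz' := hT.ne_of_isDiag huz
  have smaller {x y} (hxy : IsDiag D x y) (h : ∀ w, CycBtw x w y → CycBtw a w b ∧ w ≠ u) :
      False := by
    have hsub : openArc S x y ⊆ (openArc S a b).erase u := fun w hw =>
      mem_erase.2 ⟨(h w (mem_openArc.1 hw).2).2,
        mem_openArc.2 ⟨(mem_openArc.1 hw).1, (h w (mem_openArc.1 hw).2).1⟩⟩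
    have := card_le_card hsub
    rw [card_erase_of_mem hu'] at this
    have := hmin x y hxy
    have := card_pos.2 (hT.nonempty_openArc hab)
    omega
  by_cases hz : CycBtw a z b
  · rcases cycBtw_or_cycBtw hu.1.symm huz' hz.1.symm with h | h
    · refine smaller huz fun w hw => ⟨?_, ?_⟩ <;> rw [cycBtw_iff] at * <;>
        [omega; (rw [← val_ne_val_iff]; omega)]
    · refine smaller huz.symm fun w hw => ⟨?_, ?_⟩ <;> rw [cycBtw_iff] at * <;>
        [omega; (rw [← val_ne_val_iff]; omega)]
  rcases eq_or_ne z a with rfl | hza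
  · refine smaller huz.symm fun w hw => ⟨?_, ?_⟩ <;> rw [cycBtw_iff] at * <;>
      [omega; (rw [← val_ne_val_iff]; omega)]
  rcases eq_or_ne z b with rfl | hzb
  · refine smaller huz fun w hw => ⟨?_, ?_⟩ <;> rw [cycBtw_iff] at * <;>
      [omega; (rw [← val_ne_val_iff]; omega)]
  have hz' : CycBtw b z a :=
    ((cycBtw_or_cycBtw hza.symm hzb hu.ne).resolve_left hz).cyclic
  exact hT.not_crossing hab huz hu hz'

omit [NeZero n] in
lemma swap_notMem (h : (a, b) ∈ D) : (b, a) ∉ D := fun h' => by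
  have := (hT.isChord _ h).val_lt; have := (hT.isChord _ h').val_lt; dsimp only at *; omega

lemma isChord_sdiff_openArc (hab : IsDiag D a b)
    (hmin : ∀ x y, IsDiag D x y → (openArc S a b).card ≤ (openArc S x y).card)
    {e : ZMod n × ZMod n} (he : e ∈ D) (hne : e ≠ (a, b) ∧ e ≠ (b, a)) :
    IsChord (S \ openArc S a b) e := by
  obtain ⟨he1, he2, hlt, ⟨w, hwS, hw⟩, ⟨w', hw'S, hw'⟩⟩ := hT.isChord e he
  have h1 := hT.not_cycBtw_of_minimal hab hmin (Or.inl he)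
  have h2 := hT.not_cycBtw_of_minimal hab hmin (Or.inr he)
  have hne1 : ¬(e.1.val = a.val ∧ e.2.val = b.val) := fun h =>
    hne.1 (Prod.ext ((ZMod.val_injective n) h.1) ((ZMod.val_injective n) h.2))
  have hne2 : ¬(e.1.val = b.val ∧ e.2.val = a.val) := fun h =>
    hne.2 (Prod.ext ((ZMod.val_injective n) h.1) ((ZMod.val_injective n) h.2))
  have hab' : a.val ≠ b.val := val_ne_val_iff.2 (hT.ne_of_isDiag hab)
  have mem {x} (hx : x ∈ S) (h : ¬ CycBtw a x b) : x ∈ S \ openArc S a b :=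
    mem_sdiff.2 ⟨hx, fun h' => h (mem_openArc.1 h').2⟩
  have haA := mem (hT.mem_of_isDiag hab).1 fun h => h.1 rfl
  have hbA := mem (hT.mem_of_isDiag hab).2 fun h => h.2.1 rfl
  refine ⟨mem he1 h1, mem he2 h2, hlt, ?_, ?_⟩
  · by_cases hwA : CycBtw a w b
    · rw [cycBtw_iff] at h1 h2 hwA
      by_cases hin : e.1.val < a.val ∧ a.val < e.2.val
      · exact ⟨a, haA, hin⟩
      · exact ⟨b, hbA, by omega⟩
    · exact ⟨w, mem hwS hwA, hw⟩
  · by_cases hwA : CycBtw a w' b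
    · rw [cycBtw_iff] at h1 h2 hwA
      by_cases hout : a.val < e.1.val ∨ e.2.val < a.val
      · exact ⟨a, haA, hout⟩
      · exact ⟨b, hbA, by omega⟩
    · exact ⟨w', mem hw'S hwA, hw'⟩

/-- Otherwise the remaining diagonals would be too many noncrossing chords of the polygon left
after removing the cut-off vertices. -/
lemma card_openArc_eq_one_of_minimal (hab : IsDiag D a b)
    (hmin : ∀ x y, IsDiag D x y → (openArc S a b).card ≤ (openArc S x y).card) :
    (openArc S a b).card = 1 := by
  set A := openArc S a b
  obtain ⟨d, hd, hne⟩ : ∃ d ∈ D, ∀ e ∈ D.erase d, e ≠ (a, b) ∧ e ≠ (b, a) := by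
    rcases hab with h | h
    · exact ⟨_, h, fun e he => ⟨ne_of_mem_erase he,
        by rintro rfl; exact hT.swap_notMem h (mem_of_mem_erase he)⟩⟩
    · exact ⟨_, h, fun e he => ⟨by rintro rfl; exact hT.swap_notMem h (mem_of_mem_erase he),
        ne_of_mem_erase he⟩⟩
  have h3 : 3 ≤ (S \ A).card := by
    obtain ⟨haS, hbS⟩ := hT.mem_of_isDiag hab
    obtain ⟨w, hw⟩ := hT.nonempty_openArc hab.symm
    obtain ⟨hwS, hwba⟩ := mem_openArc.1 hw
    have hwA : w ∈ S \ A := mem_sdiff.2 ⟨hwS, fun h => by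
      have := (mem_openArc.1 h).2; rw [cycBtw_iff] at this hwba; omega⟩
    exact two_lt_card_iff.2 ⟨a, b, w, mem_sdiff.2 ⟨haS, left_notMem_openArc⟩,
      mem_sdiff.2 ⟨hbS, right_notMem_openArc⟩, hwA, hT.ne_of_isDiag hab, hwba.2.1.symm,
      hwba.1.symm⟩
  have hAS : A ⊆ S := filter_subset _ S
  have hcount := (hT.noncrossing.mono (erase_subset d D)).card_add_three_le
    (fun e he => hT.isChord_sdiff_openArc hab hmin (mem_of_mem_erase he) (hne e he)) h3
  rw [card_erase_of_mem hd, card_sdiff_of_subset hAS] at hcount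
  have hA : 0 < A.card := card_pos.2 (hT.nonempty_openArc hab)
  have := card_le_card hAS
  have := hT.card_add_three
  omega

end IsTriangulation

structure IsEar (S : Finset (ZMod n)) (D : Finset (ZMod n × ZMod n)) (v p q : ZMod n) :
    Prop where
  side_left : IsSide S p v
  side_right : IsSide S v q
  isDiag : IsDiag D p q
  not_incident : ∀ d ∈ D, d.1 ≠ v ∧ d.2 ≠ v

lemma IsTriangulation.exists_isEar (hT : IsTriangulation S D) (hS : 4 ≤ S.card) :
    ∃ v p q, IsEar S D v p q := by
  obtain ⟨d, hd⟩ : D.Nonempty := card_pos.1 (by have := hT.card_add_three; omega)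
  have isDiag_iff {x y} : (x, y) ∈ D ∪ D.image Prod.swap ↔ IsDiag D x y := by
    simp [IsDiag]
  obtain ⟨⟨a, b⟩, hab, hmin⟩ := exists_min_image (D ∪ D.image Prod.swap)
    (fun e => (openArc S e.1 e.2).card) ⟨d, mem_union_left _ hd⟩
  replace hab : IsDiag D a b := isDiag_iff.1 hab
  replace hmin : ∀ x y, IsDiag D x y → (openArc S a b).card ≤ (openArc S x y).card :=
    fun x y h => hmin (x, y) (isDiag_iff.2 h)
  obtain ⟨haS, hbS⟩ := hT.mem_of_isDiag hab
  obtain ⟨v, hv⟩ := card_eq_one.1 (hT.card_openArc_eq_one_of_minimal hab hmin)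
  obtain ⟨hvS, hav⟩ := mem_openArc.1 (hv ▸ mem_singleton_self v)
  have only_v {w} (hw : w ∈ S) (h : CycBtw a w b) : w = v :=
    mem_singleton.1 (hv ▸ mem_openArc.2 ⟨hw, h⟩)
  refine ⟨v, a, b, ⟨haS, hvS, hav.1.symm, fun w hw h => ?_⟩,
    ⟨hvS, hbS, hav.2.1, fun w hw h => ?_⟩, hab, fun e he => ⟨?_, ?_⟩⟩
  · exact h.2.1 (only_v hw (by rw [cycBtw_iff] at *; omega))
  · exact h.1 (only_v hw (by rw [cycBtw_iff] at *; omega))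
  · rintro rfl; exact hT.not_cycBtw_of_minimal hab hmin (Or.inl he) hav
  · rintro rfl; exact hT.not_cycBtw_of_minimal hab hmin (Or.inr he) hav

end Triangulations

section Ears

variable {n : ℕ} [NeZero n] {S : Finset (ZMod n)} {D : Finset (ZMod n × ZMod n)}
  {s : Finset (ZMod n)} {a b v w x y p q : ZMod n}

def IsEdge (S : Finset (ZMod n)) (D : Finset (ZMod n × ZMod n)) (a b : ZMod n) : Prop :=
  IsDiag D a b ∨ IsSide S a b ∨ IsSide S b a

omit [NeZero n] in
lemma IsEdge.symm (h : IsEdge S D a b) : IsEdge S D b a := by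
  rcases h with h | h | h
  exacts [Or.inl h.symm, Or.inr (Or.inr h), Or.inr (Or.inl h)]

noncomputable def trianglesOn (S : Finset (ZMod n)) (D : Finset (ZMod n × ZMod n)) :
    Finset (Finset (ZMod n)) :=
  univ.filter fun s => s.card = 3 ∧ ∀ i ∈ s, ∀ j ∈ s, i ≠ j → IsEdge S D i j

lemma mem_trianglesOn :
    s ∈ trianglesOn S D ↔
      s.card = 3 ∧ ∀ i ∈ s, ∀ j ∈ s, i ≠ j → IsEdge S D i j := by
  simp [trianglesOn]

omit [NeZero n] in
lemma isDiag_sdiff_iff :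
    IsDiag (D \ {(p, q), (q, p)}) a b ↔
      IsDiag D a b ∧ ¬(a = p ∧ b = q) ∧ ¬(a = q ∧ b = p) := by
  simp only [IsDiag, mem_sdiff, mem_insert, mem_singleton, Prod.ext_iff]
  tauto

namespace IsEar

variable (hE : IsEar S D v p q)
include hE

lemma eq_or_eq_of_isEdge (h : IsEdge S D v w) : w = p ∨ w = q := by
  rcases h with (h | h) | h | h
  · exact absurd rfl (hE.not_incident _ h).1
  · exact absurd rfl (hE.not_incident _ h).2
  · exact Or.inr (hE.side_right.right_unique h).symm
  · exact Or.inl (h.left_unique hE.side_left)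

variable (hT : IsTriangulation S D)
include hT

lemma p_ne_q : p ≠ q := hT.ne_of_isDiag hE.isDiag

lemma cycBtw : CycBtw p v q :=
  hE.side_left.cycBtw hE.side_right.right_mem (hE.p_ne_q hT).symm hE.side_right.ne.symm

lemma card_triple : ({p, v, q} : Finset (ZMod n)).card = 3 :=
  card_eq_three.2 ⟨p, v, q, hE.side_left.ne, hE.p_ne_q hT, hE.side_right.ne, rfl⟩

lemma triple_mem_trianglesOn : {p, v, q} ∈ trianglesOn S D := by
  refine PolygonFrieze.mem_trianglesOn.2 ⟨hE.card_triple hT, ?_⟩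
  have hpv : IsEdge S D p v := Or.inr (Or.inl hE.side_left)
  have hvq : IsEdge S D v q := Or.inr (Or.inl hE.side_right)
  have hpq : IsEdge S D p q := Or.inl hE.isDiag
  simp only [mem_insert, mem_singleton]
  rintro i (rfl | rfl | rfl) j (rfl | rfl | rfl) hij <;>
    first | exact absurd rfl hij | assumption | exact IsEdge.symm ‹_›

lemma eq_of_mem_trianglesOn (hs : s ∈ trianglesOn S D) (hv : v ∈ s) : s = {p, v, q} := by
  obtain ⟨hcard, hedge⟩ := PolygonFrieze.mem_trianglesOn.1 hs
  refine eq_of_subset_of_card_le (fun u hu => ?_) (by rw [hcard, hE.card_triple hT])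
  rcases eq_or_ne u v with rfl | huv
  · simp
  rcases hE.eq_or_eq_of_isEdge (hedge v hv u hu huv.symm) with rfl | rfl <;> simp

lemma isSide_erase_iff :
    IsSide (S.erase v) a b ↔ (IsSide S a b ∧ a ≠ v ∧ b ≠ v) ∨ (a = p ∧ b = q) := by
  have hpvq := hE.cycBtw hT
  constructor
  · rintro ⟨ha, hb, hab, hside⟩
    obtain ⟨hav, haS⟩ := mem_erase.1 ha
    obtain ⟨hbv, hbS⟩ := mem_erase.1 hb
    have hside' {x y w} (hxy : ∀ w, CycBtw x w y → CycBtw a w b) (hw : w ∈ S) (hwv : w ≠ v)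
        (h : CycBtw x w y) : False :=
      hside w (mem_erase.2 ⟨hwv, hw⟩) (hxy w h)
    by_cases havb : CycBtw a v b
    · right
      constructor
      · refine (IsSide.left_unique ⟨haS, hE.side_left.right_mem, hav, fun w hw h => ?_⟩
          hE.side_left)
        exact hside' (fun w h => by rw [cycBtw_iff] at *; omega) hw h.2.1 h
      · refine (IsSide.right_unique hE.side_right ⟨hE.side_left.right_mem, hbS, hbv.symm,
          fun w hw h => ?_⟩).symm
        exact hside' (fun w h => by rw [cycBtw_iff] at *; omega) hw h.1 h
    · refine Or.inl ⟨⟨haS, hbS, hab, fun w hw h => ?_⟩, hav, hbv⟩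
      rcases eq_or_ne w v with rfl | hwv
      · exact havb h
      · exact hside' (fun _ => id) hw hwv h
  · rintro (⟨⟨haS, hbS, hab, hside⟩, hav, hbv⟩ | ⟨rfl, rfl⟩)
    · exact ⟨mem_erase.2 ⟨hav, haS⟩, mem_erase.2 ⟨hbv, hbS⟩, hab,
        fun w hw => hside w (mem_of_mem_erase hw)⟩
    · refine ⟨mem_erase.2 ⟨hE.side_left.ne, hE.side_left.left_mem⟩,
        mem_erase.2 ⟨hE.side_right.ne.symm, hE.side_right.right_mem⟩, hE.p_ne_q hT,
        fun w hw h => ?_⟩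
      obtain ⟨hwv, hwS⟩ := mem_erase.1 hw
      rw [← val_ne_val_iff] at hwv
      have : CycBtw a w v ∨ CycBtw v w b := by rw [cycBtw_iff] at *; rw [cycBtw_iff]; omega
      exact this.elim (hE.side_left.not_cycBtw w hwS) (hE.side_right.not_cycBtw w hwS)

lemma isEdge_erase_iff :
    IsEdge (S.erase v) (D \ {(p, q), (q, p)}) a b ↔ IsEdge S D a b ∧ a ≠ v ∧ b ≠ v := by
  have incident {a b} (h : IsDiag D a b) : a ≠ v ∧ b ≠ v := by
    rcases h with h | h
    · exact hE.not_incident _ h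
    · exact (hE.not_incident _ h).symm
  have hpv := hE.side_left.ne
  have hqv := hE.side_right.ne.symm
  simp only [IsEdge, isDiag_sdiff_iff, hE.isSide_erase_iff hT]
  constructor
  · rintro (⟨h, -⟩ | (⟨h, hav, hbv⟩ | ⟨rfl, rfl⟩) |
      (⟨h, hbv, hav⟩ | ⟨rfl, rfl⟩))
    · exact ⟨Or.inl h, incident h⟩
    · exact ⟨Or.inr (Or.inl h), hav, hbv⟩
    · exact ⟨Or.inl hE.isDiag, hpv, hqv⟩
    · exact ⟨Or.inr (Or.inr h), hav, hbv⟩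
    · exact ⟨Or.inl hE.isDiag.symm, hqv, hpv⟩
  · rintro ⟨h | h | h, hav, hbv⟩
    · by_cases hpq : a = p ∧ b = q
      · exact Or.inr (Or.inl (Or.inr hpq))
      by_cases hqp : a = q ∧ b = p
      · exact Or.inr (Or.inr (Or.inr ⟨hqp.2, hqp.1⟩))
      exact Or.inl ⟨h, hpq, hqp⟩
    · exact Or.inr (Or.inl (Or.inl ⟨h, hav, hbv⟩))
    · exact Or.inr (Or.inr (Or.inl ⟨h, hbv, hav⟩))

lemma trianglesOn_erase :
    trianglesOn (S.erase v) (D \ {(p, q), (q, p)}) = (trianglesOn S D).erase {p, v, q} := by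
  ext s
  simp only [mem_erase, PolygonFrieze.mem_trianglesOn, hE.isEdge_erase_iff hT]
  constructor
  · rintro ⟨hcard, hedge⟩
    have hv : v ∉ s := fun hv => by
      obtain ⟨j, hj, hjv⟩ := exists_mem_ne (by omega : 1 < s.card) v
      exact (hedge v hv j hj hjv.symm).2.1 rfl
    exact ⟨fun h => hv (h ▸ by simp), hcard, fun i hi j hj hij => (hedge i hi j hj hij).1⟩
  · rintro ⟨hne, hcard, hedge⟩
    have hv : v ∉ s := fun hv =>
      hne (hE.eq_of_mem_trianglesOn hT (PolygonFrieze.mem_trianglesOn.2 ⟨hcard, hedge⟩) hv)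
    exact ⟨hcard, fun i hi j hj hij =>
      ⟨hedge i hi j hj hij, fun h => hv (h ▸ hi), fun h => hv (h ▸ hj)⟩⟩

lemma exists_cycBtw_ne (hx : x ∈ S) (hy : y ∈ S) (hv : CycBtw x v y)
    (hne : ¬(x = p ∧ y = q)) :
    ∃ w ∈ S, w ≠ v ∧ CycBtw x w y := by
  rcases eq_or_ne y q with rfl | hyq
  · have hpvx := hE.side_left.cycBtw hx (fun h => hne ⟨h, rfl⟩) hv.1.symm
    have hpy := val_ne_val_iff.2 (hE.p_ne_q hT)
    exact ⟨p, hE.side_left.left_mem, hE.side_left.ne, by rw [cycBtw_iff] at *; omega⟩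
  · have hvqy := hE.side_right.cycBtw hy hv.2.1.symm hyq
    exact ⟨q, hE.side_right.right_mem, hE.side_right.ne.symm, by rw [cycBtw_iff] at *; omega⟩

lemma isTriangulation_erase : IsTriangulation (S.erase v) (D \ {(p, q), (q, p)}) := by
  refine ⟨fun e he => ?_, hT.noncrossing.mono sdiff_subset, ?_⟩
  · obtain ⟨heD, hne⟩ := mem_sdiff.1 he
    simp only [mem_insert, mem_singleton, not_or] at hne
    obtain ⟨he1, he2, hlt, ⟨w, hwS, hw⟩, ⟨w', hw'S, hw'⟩⟩ := hT.isChord e heD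
    obtain ⟨h1v, h2v⟩ := hE.not_incident e heD
    refine ⟨mem_erase.2 ⟨h1v, he1⟩, mem_erase.2 ⟨h2v, he2⟩, hlt, ?_, ?_⟩
    · rcases eq_or_ne w v with rfl | hwv
      · obtain ⟨w, hwS, hwv, h⟩ := hE.exists_cycBtw_ne hT he1 he2 (by rw [cycBtw_iff]; omega)
          fun h => hne.1 (Prod.ext h.1 h.2)
        exact ⟨w, mem_erase.2 ⟨hwv, hwS⟩, by rw [cycBtw_iff] at h; omega⟩
      · exact ⟨w, mem_erase.2 ⟨hwv, hwS⟩, hw⟩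
    · rcases eq_or_ne w' v with rfl | hwv
      · obtain ⟨w, hwS, hwv, h⟩ := hE.exists_cycBtw_ne hT he2 he1 (by rw [cycBtw_iff]; omega)
          fun h => hne.2 (Prod.ext h.2 h.1)
        exact ⟨w, mem_erase.2 ⟨hwv, hwS⟩, by rw [cycBtw_iff] at h; omega⟩
      · exact ⟨w', mem_erase.2 ⟨hwv, hw'S⟩, hw'⟩
  · have hcut : ({(p, q), (q, p)} ∩ D).card = 1 := by
      rcases hE.isDiag with h | h
      · rw [insert_inter_of_mem h, singleton_inter_of_notMem (hT.swap_notMem h)]; rfl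
      · rw [insert_inter_of_notMem (hT.swap_notMem h), singleton_inter_of_mem h]; rfl
    have := hT.card_add_three
    have : 0 < D.card := card_pos.2 (hE.isDiag.elim (⟨_, ·⟩) (⟨_, ·⟩))
    rw [card_erase_of_mem hE.side_left.right_mem, card_sdiff, hcut]
    omega

end IsEar

end Ears

section Matchings

variable {α : Type*} [DecidableEq α] {V : Finset α} {Tr : Finset (Finset α)} {t : Finset α}
  {w : α}

def Matching (V : Finset α) (Tr : Finset (Finset α)) : Type _ :=
  {f : V → {s // s ∈ Tr} // Function.Injective f ∧ ∀ v, (v : α) ∈ (f v : Finset α)}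

instance (V : Finset α) (Tr : Finset (Finset α)) : Finite (Matching V Tr) := by
  unfold Matching; infer_instance

noncomputable def matchingNum (V : Finset α) (Tr : Finset (Finset α)) : ℕ :=
  Nat.card (Matching V Tr)

omit [DecidableEq α] in
lemma matchingNum_empty : matchingNum (∅ : Finset α) Tr = 1 := by
  rw [matchingNum, Nat.card_eq_one_iff_unique]
  refine ⟨⟨fun f g => Subtype.ext (funext fun v => absurd v.2 (notMem_empty _))⟩,
    ⟨⟨fun v => absurd v.2 (notMem_empty _), fun v => absurd v.2 (notMem_empty _),
      fun v => absurd v.2 (notMem_empty _)⟩⟩⟩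

omit [DecidableEq α] in
lemma matchingNum_eq_zero_of_card_lt (h : Tr.card < V.card) : matchingNum V Tr = 0 := by
  have : IsEmpty (Matching V Tr) := ⟨fun f => by
    have := Fintype.card_le_of_injective _ f.2.1
    simp only [Fintype.card_coe] at this
    omega⟩
  exact Nat.card_of_isEmpty

namespace Matching

def avoidEquiv (t : Finset α) :
    {f : Matching V Tr // ∀ u, (f.1 u : Finset α) ≠ t} ≃ Matching V (Tr.erase t) where
  toFun f := ⟨fun u => ⟨f.1.1 u, mem_erase.2 ⟨f.2 u, (f.1.1 u).2⟩⟩,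
    fun _ _ h => f.1.2.1 (Subtype.ext (congrArg Subtype.val h :)), f.1.2.2⟩
  invFun g := ⟨⟨fun u => ⟨g.1 u, mem_of_mem_erase (g.1 u).2⟩,
    fun _ _ h => g.2.1 (Subtype.ext (congrArg Subtype.val h :)), g.2.2⟩,
    fun u => ne_of_mem_erase (g.1 u).2⟩
  left_inv _ := rfl
  right_inv _ := rfl

def hitEquiv (hw : w ∈ V) (ht : t ∈ Tr) (hwt : w ∈ t) :
    {f : Matching V Tr // (f.1 ⟨w, hw⟩ : Finset α) = t} ≃
      Matching (V.erase w) (Tr.erase t) where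
  toFun f := ⟨fun u => ⟨f.1.1 ⟨u, mem_of_mem_erase u.2⟩, mem_erase.2 ⟨fun h =>
      ne_of_mem_erase u.2 (congrArg Subtype.val (f.1.2.1 (Subtype.ext (h.trans f.2.symm)))),
      (f.1.1 _).2⟩⟩,
    fun _ _ h => Subtype.ext
      (congrArg Subtype.val (f.1.2.1 (Subtype.ext (congrArg Subtype.val h :))) :),
    fun _ => f.1.2.2 _⟩
  invFun g := ⟨⟨fun u => if h : u.1 = w then ⟨t, ht⟩ else
      ⟨g.1 ⟨u.1, mem_erase.2 ⟨h, u.2⟩⟩, mem_of_mem_erase (g.1 _).2⟩, by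
    intro a b hab
    by_cases ha : a.1 = w <;> by_cases hb : b.1 = w <;>
      simp only [ha, hb, dite_true, dite_false, Subtype.mk.injEq] at hab
    · exact Subtype.ext (ha.trans hb.symm)
    · exact absurd hab.symm (ne_of_mem_erase (g.1 _).2)
    · exact absurd hab (ne_of_mem_erase (g.1 _).2)
    · exact Subtype.ext (congrArg Subtype.val (g.2.1 (Subtype.ext hab)) :), by
    intro u
    by_cases h : u.1 = w
    · simpa [h] using hwt
    · simpa [h] using g.2.2 _⟩, by simp⟩
  left_inv f := by
    refine Subtype.ext (Subtype.ext (funext fun u => ?_))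
    by_cases h : u.1 = w
    · obtain rfl : u = ⟨w, hw⟩ := Subtype.ext h
      simpa using Subtype.ext f.2.symm
    · simp [h]
  right_inv g := Subtype.ext (funext fun u => by simp [ne_of_mem_erase u.2])

end Matching

lemma matchingNum_erase_of_forall_notMem (h : ∀ u ∈ V, u ∉ t) :
    matchingNum V (Tr.erase t) = matchingNum V Tr :=
  Nat.card_congr ((Matching.avoidEquiv t).symm.trans
    (Equiv.subtypeUnivEquiv fun f u he => h u u.2 (he ▸ f.2.2 u)))

lemma matchingNum_eq_of_unique_block (hw : w ∈ V) (ht : t ∈ Tr) (hwt : w ∈ t)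
    (huniq : ∀ s ∈ Tr, w ∈ s → s = t) :
    matchingNum V Tr = matchingNum (V.erase w) (Tr.erase t) :=
  Nat.card_congr ((Equiv.subtypeUnivEquiv fun f => huniq _ (f.1 ⟨w, hw⟩).2
    (f.2.2 ⟨w, hw⟩)).symm.trans (Matching.hitEquiv hw ht hwt))

lemma matchingNum_split (hw : w ∈ V) (ht : t ∈ Tr) (hwt : w ∈ t)
    (honly : ∀ u ∈ V, u ∈ t → u = w) :
    matchingNum V Tr = matchingNum V (Tr.erase t) + matchingNum (V.erase w) (Tr.erase t) := by
  have avoid (f : Matching V Tr) :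
      (f.1 ⟨w, hw⟩ : Finset α) ≠ t ↔ ∀ u, (f.1 u : Finset α) ≠ t := by
    refine ⟨fun h u hu => h ?_, fun h => h _⟩
    obtain rfl : u = ⟨w, hw⟩ := Subtype.ext (honly u u.2 (hu ▸ f.2.2 u))
    exact hu
  rw [matchingNum, matchingNum, matchingNum, add_comm, ← Nat.card_sum]
  exact Nat.card_congr ((Equiv.sumCompl _).symm.trans (Equiv.sumCongr
    (Matching.hitEquiv hw ht hwt) ((Equiv.subtypeEquivRight avoid).trans
      (Matching.avoidEquiv t))))

end Matchings

section Frieze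

variable {n : ℕ} [NeZero n] {S : Finset (ZMod n)} {D : Finset (ZMod n × ZMod n)}
  {s : Finset (ZMod n)} {a b k l v p q : ZMod n}

noncomputable def frieze (S : Finset (ZMod n)) (D : Finset (ZMod n × ZMod n)) (k l : ZMod n) :
    ℕ :=
  matchingNum (openArc S k l) (trianglesOn S D)

lemma IsSide.frieze_eq_one (h : IsSide S a b) : frieze S D a b = 1 := by
  rw [frieze, h.openArc_eq_empty, matchingNum_empty]

lemma isSide_or_isSide_of_card_eq_three (hS : S.card = 3) (ha : a ∈ S) (hb : b ∈ S)
    (hab : a ≠ b) : IsSide S a b ∨ IsSide S b a := by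
  obtain ⟨c, hc⟩ := card_eq_one.1 (show ((S.erase a).erase b).card = 1 by
    rw [card_erase_of_mem (mem_erase.2 ⟨hab.symm, hb⟩), card_erase_of_mem ha, hS])
  have hcS : c ∈ S ∧ c ≠ a ∧ c ≠ b := by
    have := hc ▸ mem_singleton_self c; simp only [mem_erase] at this; tauto
  have only_c {w} (hw : w ∈ S) (hwa : w ≠ a) (hwb : w ≠ b) : w = c :=
    mem_singleton.1 (hc ▸ mem_erase.2 ⟨hwb, mem_erase.2 ⟨hwa, hw⟩⟩)
  rcases cycBtw_or_cycBtw hcS.2.1.symm hcS.2.2 hab with h | h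
  · refine Or.inr ⟨hb, ha, hab.symm, fun w hw hw' => ?_⟩
    obtain rfl := only_c hw hw'.2.1 hw'.1
    rw [cycBtw_iff] at h hw'; omega
  · refine Or.inl ⟨ha, hb, hab, fun w hw hw' => ?_⟩
    obtain rfl := only_c hw hw'.1 hw'.2.1
    rw [cycBtw_iff] at h hw'; omega

namespace IsTriangulation

variable (hT : IsTriangulation S D)
include hT

omit [NeZero n] in
lemma mem_of_isEdge (h : IsEdge S D a b) : a ∈ S ∧ b ∈ S := by
  rcases h with h | h | h
  exacts [hT.mem_of_isDiag h, ⟨h.left_mem, h.right_mem⟩, ⟨h.right_mem, h.left_mem⟩]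

lemma trianglesOn_of_card_eq_three (hS : S.card = 3) : trianglesOn S D = {S} := by
  ext s
  rw [mem_trianglesOn, mem_singleton]
  constructor
  · rintro ⟨hcard, hedge⟩
    refine eq_of_subset_of_card_le (fun i hi => ?_) (by omega)
    obtain ⟨j, hj, hji⟩ := exists_mem_ne (by omega : 1 < s.card) i
    exact (hT.mem_of_isEdge (hedge i hi j hj hji.symm)).1
  · rintro rfl
    exact ⟨hS, fun i hi j hj hij => Or.inr (isSide_or_isSide_of_card_eq_three hS hi hj hij)⟩

lemma frieze_of_card_eq_three (hS : S.card = 3) (hk : k ∈ S) (hl : l ∈ S) (hkl : k ≠ l) :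
    frieze S D k l = 1 := by
  rcases isSide_or_isSide_of_card_eq_three hS hk hl hkl with h | h
  · exact h.frieze_eq_one
  obtain ⟨c, hc⟩ := card_eq_one.1 (show (openArc S k l).card = 1 by
    rw [h.openArc_swap, card_erase_of_mem (mem_erase.2 ⟨hkl, hk⟩), card_erase_of_mem hl, hS])
  rw [frieze, hc, hT.trianglesOn_of_card_eq_three hS,
    matchingNum_eq_of_unique_block (mem_singleton_self c) (mem_singleton_self S)
      (mem_openArc.1 (hc ▸ mem_singleton_self c)).1 fun s hs _ => mem_singleton.1 hs,
    erase_singleton, matchingNum_empty]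

end IsTriangulation

theorem IsTriangulation.card_trianglesOn {S : Finset (ZMod n)} {D : Finset (ZMod n × ZMod n)}
    (hT : IsTriangulation S D) : (trianglesOn S D).card + 2 = S.card := by
  by_cases hS : 4 ≤ S.card
  · obtain ⟨v, p, q, hE⟩ := hT.exists_isEar hS
    have hv := hE.side_left.right_mem
    have := (hE.isTriangulation_erase hT).card_trianglesOn
    rw [hE.trianglesOn_erase hT, card_erase_of_mem (hE.triple_mem_trianglesOn hT),
      card_erase_of_mem hv] at this
    have := card_pos.2 ⟨_, hE.triple_mem_trianglesOn hT⟩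
    omega
  · have := hT.card_add_three
    rw [hT.trianglesOn_of_card_eq_three (by omega), card_singleton]
    omega
termination_by S.card
decreasing_by exact card_erase_lt_of_mem hE.side_left.right_mem

end Frieze

section EarRecursion

variable {n : ℕ} [NeZero n] {S : Finset (ZMod n)} {D : Finset (ZMod n × ZMod n)}
  {k l v p q : ZMod n}

namespace IsEar

variable (hE : IsEar S D v p q) (hT : IsTriangulation S D)
include hE hT

lemma frieze_erase (hk : k ∈ S) (hl : l ∈ S) (hkv : k ≠ v) (hlv : l ≠ v) :
    frieze S D k l = frieze (S.erase v) (D \ {(p, q), (q, p)}) k l := by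
  rw [frieze, frieze, hE.trianglesOn_erase hT, openArc_erase]
  by_cases hkvl : CycBtw k v l
  · exact matchingNum_eq_of_unique_block (mem_openArc.2 ⟨hE.side_left.right_mem, hkvl⟩)
      (hE.triple_mem_trianglesOn hT) (by simp) fun s hs hv => hE.eq_of_mem_trianglesOn hT hs hv
  · rw [erase_eq_of_notMem fun h => hkvl (mem_openArc.1 h).2]
    refine (matchingNum_erase_of_forall_notMem fun u hu hut => ?_).symm
    have hu' := (mem_openArc.1 hu).2
    have h₁ := hE.side_left.not_cycBtw l hl
    have h₂ := hE.side_right.not_cycBtw k hk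
    rw [← val_ne_val_iff] at hkv hlv
    simp only [mem_insert, mem_singleton] at hut
    rcases hut with rfl | rfl | rfl
    · rw [cycBtw_iff] at *; omega
    · exact hkvl hu'
    · rw [cycBtw_iff] at *; omega

lemma frieze_ear_left_split (hl : l ∈ S) (hlv : l ≠ v) (hlq : l ≠ q) :
    frieze S D v l = matchingNum (openArc S v l) (trianglesOn (S.erase v) (D \ {(p, q), (q, p)}))
      + frieze (S.erase v) (D \ {(p, q), (q, p)}) q l := by
  have hvql := hE.side_right.cycBtw hl hlv hlq
  have hq : q ∈ openArc S v l := mem_openArc.2 ⟨hE.side_right.right_mem, hvql⟩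
  have honly : ∀ u ∈ openArc S v l, u ∈ ({p, v, q} : Finset (ZMod n)) → u = q := by
    intro u hu hut
    simp only [mem_insert, mem_singleton] at hut
    rcases hut with rfl | rfl | rfl
    · exact absurd (mem_openArc.1 hu).2.cyclic (hE.side_left.not_cycBtw l hl)
    · exact absurd hu left_notMem_openArc
    · rfl
  have harc : (openArc S v l).erase q = openArc (S.erase v) q l := by
    rw [openArc_erase, hE.side_right.openArc_eq_insert_left hl hlv hlq,
      erase_insert left_notMem_openArc, erase_eq_of_notMem fun h => by
        have := (mem_openArc.1 h).2; rw [cycBtw_iff] at this hvql; omega]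
  rw [frieze, frieze, matchingNum_split hq (hE.triple_mem_trianglesOn hT) (by simp) honly,
    hE.trianglesOn_erase hT, harc]

lemma frieze_ear_right_split (hk : k ∈ S) (hkv : k ≠ v) (hkp : k ≠ p) :
    frieze S D k v = matchingNum (openArc S k v) (trianglesOn (S.erase v) (D \ {(p, q), (q, p)}))
      + frieze (S.erase v) (D \ {(p, q), (q, p)}) k p := by
  have hkpv := (hE.side_left.cycBtw hk hkp hkv).cyclic.cyclic
  have hp : p ∈ openArc S k v := mem_openArc.2 ⟨hE.side_left.left_mem, hkpv⟩
  have honly : ∀ u ∈ openArc S k v, u ∈ ({p, v, q} : Finset (ZMod n)) → u = p := by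
    intro u hu hut
    simp only [mem_insert, mem_singleton] at hut
    rcases hut with rfl | rfl | rfl
    · rfl
    · exact absurd hu right_notMem_openArc
    · exact absurd (mem_openArc.1 hu).2.cyclic.cyclic (hE.side_right.not_cycBtw k hk)
  have harc : (openArc S k v).erase p = openArc (S.erase v) k p := by
    rw [openArc_erase, hE.side_left.openArc_eq_insert_right hk hkp hkv,
      erase_insert right_notMem_openArc, erase_eq_of_notMem fun h => by
        have := (mem_openArc.1 h).2; rw [cycBtw_iff] at this hkpv; omega]
  rw [frieze, frieze, matchingNum_split hp (hE.triple_mem_trianglesOn hT) (by simp) honly,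
    hE.trianglesOn_erase hT, harc]

lemma frieze_ear_left (hl : l ∈ S) (hlv : l ≠ v) (hlp : l ≠ p) (hlq : l ≠ q) :
    frieze S D v l = frieze (S.erase v) (D \ {(p, q), (q, p)}) p l
      + frieze (S.erase v) (D \ {(p, q), (q, p)}) q l := by
  rw [hE.frieze_ear_left_split hT hl hlv hlq]
  congr 1
  rw [frieze, openArc_erase, hE.side_left.openArc_eq_insert_left hl hlp hlv,
    erase_insert left_notMem_openArc]

lemma frieze_ear_right (hk : k ∈ S) (hkv : k ≠ v) (hkp : k ≠ p) (hkq : k ≠ q) :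
    frieze S D k v = frieze (S.erase v) (D \ {(p, q), (q, p)}) k p
      + frieze (S.erase v) (D \ {(p, q), (q, p)}) k q := by
  rw [hE.frieze_ear_right_split hT hk hkv hkp, add_comm]
  congr 1
  rw [frieze, openArc_erase, hE.side_right.openArc_eq_insert_right hk hkv hkq,
    erase_insert right_notMem_openArc]

/-- The first summand of `frieze_ear_left_split` vanishes: the smaller polygon has too few
triangles to match all of its vertices but `p`. -/
lemma frieze_ear_prev :
    frieze S D v p = frieze (S.erase v) (D \ {(p, q), (q, p)}) q p := by
  have hp := hE.side_left.left_mem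
  have hv := hE.side_left.right_mem
  rw [hE.frieze_ear_left_split hT hp hE.side_left.ne (hE.p_ne_q hT),
    matchingNum_eq_zero_of_card_lt, zero_add]
  have := (hE.isTriangulation_erase hT).card_trianglesOn
  rw [hE.side_left.openArc_swap, card_erase_of_mem (mem_erase.2 ⟨hE.side_left.ne.symm, hv⟩),
    card_erase_of_mem hp]
  rw [card_erase_of_mem hv] at this
  omega

/-- The first summand of `frieze_ear_right_split` vanishes, as in `frieze_ear_prev`. -/
lemma frieze_next_ear :
    frieze S D q v = frieze (S.erase v) (D \ {(p, q), (q, p)}) q p := by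
  have hq := hE.side_right.right_mem
  have hv := hE.side_right.left_mem
  rw [hE.frieze_ear_right_split hT hq hE.side_right.ne.symm (hE.p_ne_q hT).symm,
    matchingNum_eq_zero_of_card_lt, zero_add]
  have := (hE.isTriangulation_erase hT).card_trianglesOn
  rw [hE.side_right.openArc_swap, card_erase_of_mem (mem_erase.2 ⟨hE.side_right.ne.symm, hq⟩),
    card_erase_of_mem hv]
  rw [card_erase_of_mem hv] at this
  omega

end IsEar

end EarRecursion

section Ptolemy

variable {n : ℕ} [NeZero n]

lemma ptolemy_of_cycBtw {x : ZMod n → ZMod n → ℤ} (hsymm : ∀ i j, x i j = x j i)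
    (hptolemy : ∀ i j k l : ZMod n, i.val < j.val → j.val < k.val → k.val < l.val →
      x i k * x j l = x i j * x k l + x i l * x j k)
    (i j k l : ZMod n) (h₁ : CycBtw i j l) (h₂ : CycBtw j k l) :
    x i k * x j l = x i j * x k l + x i l * x j k := by
  rw [cycBtw_iff] at h₁ h₂
  have hrot : (i.val < j.val ∧ j.val < k.val ∧ k.val < l.val) ∨
      (j.val < k.val ∧ k.val < l.val ∧ l.val < i.val) ∨
      (k.val < l.val ∧ l.val < i.val ∧ i.val < j.val) ∨
      (l.val < i.val ∧ i.val < j.val ∧ j.val < k.val) := by omega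
  rcases hrot with ⟨a1, a2, a3⟩ | ⟨a1, a2, a3⟩ | ⟨a1, a2, a3⟩ | ⟨a1, a2, a3⟩
  · exact hptolemy i j k l a1 a2 a3
  · have hp := hptolemy j k l i a1 a2 a3
    rw [hsymm k i, hsymm l i, hsymm j i] at hp
    linear_combination hp
  · have hp := hptolemy k l i j a1 a2 a3
    rw [hsymm k i, hsymm l j, hsymm k j, hsymm l i] at hp
    linear_combination hp
  · have hp := hptolemy l i j k a1 a2 a3
    rw [hsymm l j, hsymm l i, hsymm l k] at hp
    linear_combination hp

namespace IsEar

variable {S : Finset (ZMod n)} {D : Finset (ZMod n × ZMod n)} {x : ZMod n → ZMod n → ℤ}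
  {k l v p q w : ZMod n}
  (hE : IsEar S D v p q) (hT : IsTriangulation S D) (hsymm : ∀ i j, x i j = x j i)
  (hptolemy : ∀ i j k l : ZMod n, CycBtw i j l → CycBtw j k l →
    x i k * x j l = x i j * x k l + x i l * x j k)
  (hedge : ∀ a b, IsEdge S D a b → x a b = 1)
include hE hT hsymm hptolemy hedge

lemma ptolemy (hw : w ∈ S) (hwv : w ≠ v) (hwp : w ≠ p) (hwq : w ≠ q) :
    x v w = x p w + x q w := by
  have h₁ := hE.side_right.cycBtw hE.side_left.left_mem hE.side_left.ne (hE.p_ne_q hT)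
  have h₂ : CycBtw q w p := by
    have := hE.side_left.cycBtw hw hwp hwv
    have := hE.side_right.cycBtw hw hwv hwq
    rw [cycBtw_iff] at *; omega
  have := hptolemy v q w p h₁ h₂
  rw [hsymm q p, hedge p q (Or.inl hE.isDiag), hedge v q (Or.inr (Or.inl hE.side_right)),
    hsymm v p, hedge p v (Or.inr (Or.inl hE.side_left)), hsymm w p] at this
  linarith

lemma eq_frieze_of_erase
    (ih : ∀ a ∈ S.erase v, ∀ b ∈ S.erase v, a ≠ b →
      x a b = frieze (S.erase v) (D \ {(p, q), (q, p)}) a b)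
    (hk : k ∈ S) (hl : l ∈ S) (hkl : k ≠ l) : x k l = frieze S D k l := by
  have hp := hE.side_left.left_mem
  have hq := hE.side_right.right_mem
  have hpv := hE.side_left.ne
  have hvq := hE.side_right.ne
  have hpq := hE.p_ne_q hT
  have ih' {a b} (ha : a ∈ S) (hb : b ∈ S) (hav : a ≠ v) (hbv : b ≠ v) (hab : a ≠ b) :=
    ih a (mem_erase.2 ⟨hav, ha⟩) b (mem_erase.2 ⟨hbv, hb⟩) hab
  have xpv : x p v = 1 := hedge p v (Or.inr (Or.inl hE.side_left))
  have xvq : x v q = 1 := hedge v q (Or.inr (Or.inl hE.side_right))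
  have xpq : x p q = 1 := hedge p q (Or.inl hE.isDiag)
  rcases eq_or_ne k v with rfl | hkv
  · rcases eq_or_ne l q with rfl | hlq
    · rw [hE.side_right.frieze_eq_one, Nat.cast_one, xvq]
    rcases eq_or_ne l p with rfl | hlp
    · rw [hE.frieze_ear_prev hT, ← ih' hq hl hvq.symm hpv hpq.symm, hsymm, xpv, hsymm, xpq]
    rw [hE.frieze_ear_left hT hl hkl.symm hlp hlq, Nat.cast_add,
      ← ih' hp hl hpv hkl.symm hlp.symm, ← ih' hq hl hvq.symm hkl.symm hlq.symm]
    exact hE.ptolemy hT hsymm hptolemy hedge hl hkl.symm hlp hlq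
  rcases eq_or_ne l v with rfl | hlv
  · rcases eq_or_ne k p with rfl | hkp
    · rw [hE.side_left.frieze_eq_one, Nat.cast_one, xpv]
    rcases eq_or_ne k q with rfl | hkq
    · rw [hE.frieze_next_ear hT, ← ih' hk hp hkv hpv hpq.symm, hsymm, xvq, hsymm, xpq]
    rw [hE.frieze_ear_right hT hk hkv hkp hkq, Nat.cast_add, ← ih' hk hp hkv hpv hkp,
      ← ih' hk hq hkv hvq.symm hkq, hsymm k l, hsymm k p, hsymm k q]
    exact hE.ptolemy hT hsymm hptolemy hedge hk hkv hkp hkq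
  rw [hE.frieze_erase hT hk hl hkv hlv]
  exact ih' hk hl hkv hlv hkl

end IsEar

theorem IsTriangulation.eq_frieze {S : Finset (ZMod n)} {D : Finset (ZMod n × ZMod n)}
    (hT : IsTriangulation S D) {x : ZMod n → ZMod n → ℤ} (hsymm : ∀ i j, x i j = x j i)
    (hptolemy : ∀ i j k l : ZMod n, CycBtw i j l → CycBtw j k l →
      x i k * x j l = x i j * x k l + x i l * x j k)
    (hedge : ∀ a b, IsEdge S D a b → x a b = 1) {k l : ZMod n} (hk : k ∈ S) (hl : l ∈ S)
    (hkl : k ≠ l) : x k l = frieze S D k l := by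
  by_cases hS : 4 ≤ S.card
  · obtain ⟨v, p, q, hE⟩ := hT.exists_isEar hS
    refine hE.eq_frieze_of_erase hT hsymm hptolemy hedge (fun a ha b hb hab => ?_) hk hl hkl
    exact (hE.isTriangulation_erase hT).eq_frieze hsymm hptolemy
      (fun a b h => hedge a b ((hE.isEdge_erase_iff hT).1 h).1) ha hb hab
  · have hS3 : S.card = 3 := by have := hT.card_add_three; omega
    rw [hT.frieze_of_card_eq_three hS3 hk hl hkl, Nat.cast_one]
    exact hedge k l (Or.inr (isSide_or_isSide_of_card_eq_three hS3 hk hl hkl))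
termination_by S.card
decreasing_by exact card_erase_lt_of_mem hE.side_left.right_mem

end Ptolemy

section WholePolygon

variable {n : ℕ} [NeZero n]

lemma isSide_univ_iff (hn : 2 ≤ n) {a b : ZMod n} : IsSide univ a b ↔ b = a + 1 := by
  have h1 : (1 : ZMod n).val = 1 := by have : Fact (1 < n) := ⟨hn⟩; exact ZMod.val_one n
  have hsucc {w : ZMod n} : w = a + 1 ↔ (w - a).val = 1 := by
    rw [← h1, (ZMod.val_injective n).eq_iff, sub_eq_iff_eq_add']
  have hself {w : ZMod n} : w = a ↔ (w - a).val = 0 := by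
    rw [ZMod.val_eq_zero, sub_eq_zero]
  constructor
  · intro h
    by_contra hb
    have hba : (b - a).val ≠ 0 := fun h' => h.ne (hself.2 h').symm
    have hba' : (b - a).val ≠ 1 := fun h' => hb (hsucc.2 h')
    have ha1 := hsucc.1 (rfl : a + 1 = a + 1)
    refine h.not_cycBtw (a + 1) (mem_univ _) ⟨fun h' => ?_, fun h' => hb h'.symm, by omega⟩
    rw [hself] at h'; omega
  · rintro rfl
    have ha1 := hsucc.1 (rfl : a + 1 = a + 1)
    refine ⟨mem_univ _, mem_univ _, fun h => ?_,
      fun w _ hw => hw.1 (hself.2 (by have := hw.2.2; omega))⟩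
    rw [eq_comm, hself] at h; omega

lemma isEdge_univ_iff (hn : 2 ≤ n) {T : PolygonTriangulation n} {a b : ZMod n} :
    IsEdge univ T.diags a b ↔ IsTriEdge T a b := by
  simp only [IsTriEdge, IsEdge, IsDiag, isSide_univ_iff hn, or_assoc]

lemma trianglesOn_univ (hn : 2 ≤ n) (T : PolygonTriangulation n) :
    triangles T = trianglesOn univ T.diags := by
  ext s
  rw [triangles, trianglesOn, mem_filter_univ, mem_filter_univ]
  simp only [isEdge_univ_iff hn]

lemma matchNum_eq_frieze (hn : 2 ≤ n) (T : PolygonTriangulation n) (k l : ZMod n) :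
    matchNum T k l = frieze univ T.diags k l := by
  have harc : strictInterval n k l = openArc univ k l := by
    ext w
    rw [strictInterval, openArc, mem_filter_univ, mem_filter]
    simp only [mem_univ, true_and, CycBtw]
  change matchingNum (strictInterval n k l) (triangles T) = _
  rw [frieze, harc, trianglesOn_univ hn]

lemma isTriangulation_univ (hn : 4 ≤ n) (T : PolygonTriangulation n) :
    IsTriangulation univ T.diags := by
  have h1 : (1 : ZMod n).val = 1 := by have : Fact (1 < n) := ⟨by omega⟩; exact ZMod.val_one n
  have hsucc {a : ZMod n} (ha : a.val + 1 < n) : (a + 1).val = a.val + 1 := by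
    rw [ZMod.val_add_of_lt (by omega), h1]
  refine ⟨fun d hd => ?_, T.noncrossing, ?_⟩
  · have hlt := T.lt_of_mem d hd
    have hnb := T.not_boundary d hd
    have := ZMod.val_lt d.2
    refine ⟨mem_univ _, mem_univ _, hlt,
      ⟨d.1 + 1, mem_univ _, by rw [hsucc (by omega)]; omega⟩, ?_⟩
    by_cases hd2 : d.2.val + 1 < n
    · exact ⟨d.2 + 1, mem_univ _, by rw [hsucc hd2]; omega⟩
    · exact ⟨0, mem_univ _, by rw [ZMod.val_zero]; omega⟩
  · rw [T.card_diags, card_univ, ZMod.card]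
    omega

end WholePolygon

end PolygonFrieze

theorem cluster_specialization_gives_frieze_general (n : ℕ) [NeZero n] (hn : 4 ≤ n)
    (T : PolygonTriangulation n) (x : ZMod n → ZMod n → ℤ)
    (hsymm : ∀ i j, x i j = x j i)
    (hptolemy : ∀ i j k l : ZMod n, i.val < j.val → j.val < k.val → k.val < l.val →
      x i k * x j l = x i j * x k l + x i l * x j k)
    (hfrozen : ∀ i : ZMod n, x i (i + 1) = 1)
    (hinit : ∀ d ∈ T.diags, x d.1 d.2 = 1) :
    ∀ k l : ZMod n, k ≠ l → x k l = (matchNum T k l : ℤ) := by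
  intro k l hkl
  have hedge (a b : ZMod n) (h : PolygonFrieze.IsEdge Finset.univ T.diags a b) : x a b = 1 := by
    rcases (PolygonFrieze.isEdge_univ_iff (by omega)).1 h with h | h | rfl | rfl
    · exact hinit _ h
    · rw [hsymm]; exact hinit _ h
    · exact hfrozen a
    · rw [hsymm]; exact hfrozen b
  rw [PolygonFrieze.matchNum_eq_frieze (by omega)]
  exact (PolygonFrieze.isTriangulation_univ hn T).eq_frieze hsymm
    (PolygonFrieze.ptolemy_of_cycBtw hsymm hptolemy) hedge (Finset.mem_univ k)
    (Finset.mem_univ l) hkl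

/-- Specializing all initial cluster variables (the diagonals of the triangulation `T`) and
all frozen variables to 1 sends each cluster variable `x k l` of the type `A_{n-3}` cluster
algebra to the corresponding entry (matching number) of the closed integral frieze of `T`. -/
theorem cluster_specialization_gives_frieze (n : ℕ) [NeZero n] (hn : 4 ≤ n)
    (T : PolygonTriangulation n) (x : ZMod n → ZMod n → ℤ)
    (hsymm : ∀ i j, x i j = x j i) (hdiag : ∀ i, x i i = 0)
    (hptolemy : ∀ i j k l : ZMod n, i.val < j.val → j.val < k.val → k.val < l.val →
      x i k * x j l = x i j * x k l + x i l * x j k)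
    (hfrozen : ∀ i : ZMod n, x i (i + 1) = 1)
    (hinit : ∀ d ∈ T.diags, x d.1 d.2 = 1) :
    ∀ k l : ZMod n, k ≠ l → x k l = (matchNum T k l : ℤ) :=
  cluster_specialization_gives_frieze_general n hn T x hsymm hptolemy hfrozen hinit
end
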